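/- arXiv:math/0511567 — 10 statements merged into one kernel-verified Lean document; each statement's English description precedes it below -/
import Mathlib

section
/- Let (Σ, ≤) be a directed partially ordered set and let S = (X_s, r^t_s)_{s≤t∈Σ} be an inverse system in which every X_s is a nonempty finite discrete space and every bonding map r^t_s : X_t → X_s is a surjection (with r^s_s = id and r^t_s ∘ r^u_t = r^u_s for s ≤ t ≤ u). Then S has a right inverse: there exist maps i^t_s : X_s → X_t for s ≤ t such that r^t_s ∘ i^t_s = id_{X_s}, i^s_s = id_{X_s}, and i^u_t ∘ i^t_s = i^u_s whenever s ≤ t ≤ u. -/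
open Function Opposite CategoryTheory

namespace FISRightInv

/-- A (reflexive) linear order, as a bare relation. -/
structure IsLin {α : Type*} (R : α → α → Prop) : Prop where
  refl : ∀ a, R a a
  trans : ∀ a b c, R a b → R b c → R a c
  antisymm : ∀ a b, R a b → R b a → a = b
  total : ∀ a b, R a b ∨ R b a

theorem finset_exists_least {α : Type*} {R : α → α → Prop} (hR : IsLin R) :
    ∀ s : Finset α, s.Nonempty → ∃ y ∈ s, ∀ z ∈ s, R y z := by
  classical
  intro s
  induction s using Finset.induction_on with
  | empty => intro hs; exact absurd hs (by simp)
  | @insert a s ha ih =>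
    intro _
    rcases s.eq_empty_or_nonempty with h | h
    · subst h
      refine ⟨a, by simp, ?_⟩
      intro z hz
      simp only [Finset.mem_insert, Finset.notMem_empty, or_false] at hz
      subst hz; exact hR.refl _
    · obtain ⟨y, hy, hly⟩ := ih h
      rcases hR.total a y with hay | hya
      · refine ⟨a, Finset.mem_insert_self _ _, ?_⟩
        intro z hz
        rcases Finset.mem_insert.mp hz with rfl | hz
        · exact hR.refl z
        · exact hR.trans _ _ _ hay (hly z hz)
      · refine ⟨y, Finset.mem_insert_of_mem hy, ?_⟩
        intro z hz
        rcases Finset.mem_insert.mp hz with rfl | hz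
        · exact hya
        · exact hly z hz

theorem exists_least {α : Type*} [Finite α] {R : α → α → Prop} (hR : IsLin R)
    {S : Set α} (hS : S.Nonempty) : ∃ y ∈ S, ∀ z ∈ S, R y z := by
  classical
  cases nonempty_fintype α
  obtain ⟨y, hy, h⟩ := finset_exists_least hR S.toFinset (by simpa using hS)
  exact ⟨y, by simpa using hy, fun z hz => h z (by simpa using hz)⟩

variable {α β γ : Type*}

/-- The least element of the fiber of `f` over `x`, w.r.t. the linear order `R`. -/
noncomputable def sec [Finite β] (f : β → α) (hf : Surjective f)
    {R : β → β → Prop} (hR : IsLin R) (x : α) : β :=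
  (exists_least hR (show Set.Nonempty {y | f y = x} from hf x)).choose

theorem sec_spec [Finite β] (f : β → α) (hf : Surjective f)
    {R : β → β → Prop} (hR : IsLin R) (x : α) : f (sec f hf hR x) = x :=
  (exists_least hR (show Set.Nonempty {y | f y = x} from hf x)).choose_spec.1

theorem sec_least [Finite β] (f : β → α) (hf : Surjective f)
    {R : β → β → Prop} (hR : IsLin R) (x : α) (z : β) (hz : f z = x) :
    R (sec f hf hR x) z :=
  (exists_least hR (show Set.Nonempty {y | f y = x} from hf x)).choose_spec.2 z hz

theorem sec_eq [Finite β] (f : β → α) (hf : Surjective f)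
    {R : β → β → Prop} (hR : IsLin R) {x : α} {y : β} (hy : f y = x)
    (hly : ∀ z, f z = x → R y z) : sec f hf hR x = y :=
  hR.antisymm _ _ (sec_least f hf hR x y hy) (hly _ (sec_spec f hf hR x))

theorem sec_congr [Finite β] {f f' : β → α} (hff : f = f')
    {R R' : β → β → Prop} (hRR : R = R') (hf : Surjective f) (hf' : Surjective f')
    (hR : IsLin R) (hR' : IsLin R') (x : α) :
    sec f hf hR x = sec f' hf' hR' x := by
  subst hff; subst hRR; rfl

theorem sec_id [Finite α] (hf : Surjective (id : α → α))
    {R : α → α → Prop} (hR : IsLin R) (x : α) : sec id hf hR x = x := by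
  refine sec_eq _ _ _ rfl ?_
  intro z hz
  cases hz
  exact hR.refl _

/-- The pullback order: compare least lifts. -/
noncomputable def pull [Finite β] (f : β → α) (hf : Surjective f)
    {R : β → β → Prop} (hR : IsLin R) : α → α → Prop :=
  fun x x' => R (sec f hf hR x) (sec f hf hR x')

theorem pull_isLin [Finite β] (f : β → α) (hf : Surjective f)
    {R : β → β → Prop} (hR : IsLin R) : IsLin (pull f hf hR) where
  refl a := hR.refl _
  trans a b c h1 h2 := hR.trans _ _ _ h1 h2
  antisymm a b h1 h2 := by
    have h := hR.antisymm _ _ h1 h2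
    have := congrArg f h
    rwa [sec_spec f hf hR a, sec_spec f hf hR b] at this
  total a b := hR.total _ _

theorem pull_congr [Finite β] {f f' : β → α} (hff : f = f')
    (hf : Surjective f) (hf' : Surjective f')
    {R : β → β → Prop} (hR : IsLin R) : pull f hf hR = pull f' hf' hR := by
  subst hff; rfl

theorem pull_id [Finite α] (hf : Surjective (id : α → α))
    {R : α → α → Prop} (hR : IsLin R) : pull id hf hR = R := by
  funext x x'
  show R (sec id hf hR x) (sec id hf hR x') = R x x'
  rw [sec_id, sec_id]

/-- The key compatibility: least lift through a composite equals iterated least lift. -/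
theorem sec_comp [Finite β] [Finite γ] (f : β → α) (hf : Surjective f)
    (g : γ → β) (hg : Surjective g) {R : γ → γ → Prop} (hR : IsLin R) (x : α) :
    sec (f ∘ g) (hf.comp hg) hR x =
      sec g hg hR (sec f hf (pull_isLin g hg hR) x) := by
  refine sec_eq _ _ _ ?_ ?_
  · show f (g _) = x
    rw [sec_spec g, sec_spec f]
  · intro w hw
    have h1 : pull g hg hR (sec f hf (pull_isLin g hg hR) x) (g w) :=
      sec_least f hf (pull_isLin g hg hR) x (g w) hw
    have h2 : R (sec g hg hR (g w)) w := sec_least g hg hR (g w) w rfl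
    exact hR.trans _ _ _ h1 h2

theorem pull_comp [Finite β] [Finite γ] (f : β → α) (hf : Surjective f)
    (g : γ → β) (hg : Surjective g) {R : γ → γ → Prop} (hR : IsLin R) :
    pull (f ∘ g) (hf.comp hg) hR = pull f hf (pull_isLin g hg hR) := by
  funext x x'
  show R (sec (f ∘ g) _ hR x) (sec (f ∘ g) _ hR x') = _
  rw [sec_comp f hf g hg hR x, sec_comp f hf g hg hR x']
  rfl

theorem exists_isLin (α : Type*) [Finite α] : ∃ R : α → α → Prop, IsLin R := by
  obtain ⟨n, ⟨e⟩⟩ := Finite.exists_equiv_fin α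
  refine ⟨fun a b => e a ≤ e b, ?_, ?_, ?_, ?_⟩
  · intro a; exact le_refl _
  · intro a b c h1 h2; exact le_trans h1 h2
  · intro a b h1 h2; exact e.injective (le_antisymm h1 h2)
  · intro a b; exact le_total _ _

/-- The inverse system of linear orders on the `X t`, with bonding maps given by `pull`. -/
noncomputable def sysF {ι : Type*} [PartialOrder ι] (X : ι → Type*) [∀ s, Finite (X s)]
    (r : ∀ s t : ι, s ≤ t → X t → X s)
    (hid : ∀ s : ι, r s s le_rfl = id)
    (hcomp : ∀ (s t u : ι) (hst : s ≤ t) (htu : t ≤ u),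
      r s t hst ∘ r t u htu = r s u (hst.trans htu))
    (hsurj : ∀ (s t : ι) (hst : s ≤ t), Surjective (r s t hst)) :
    ιᵒᵖ ⥤ Type _ where
  obj t := {R : X t.unop → X t.unop → Prop // IsLin R}
  map {t s} h := TypeCat.ofHom fun R =>
    ⟨pull (r s.unop t.unop (leOfHom h.unop)) (hsurj _ _ _) R.2,
      pull_isLin _ _ _⟩
  map_id t := by
    refine TypeCat.homEquiv.injective (funext fun R => ?_)
    apply Subtype.ext
    exact (pull_congr (hid t.unop) (hsurj _ _ _) surjective_id R.2).trans
      (pull_id surjective_id R.2)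
  map_comp {t s v} h1 h2 := by
    refine TypeCat.homEquiv.injective (funext fun R => ?_)
    apply Subtype.ext
    exact (pull_congr (hcomp v.unop s.unop t.unop (leOfHom h2.unop) (leOfHom h1.unop)).symm
        (hsurj _ _ _) ((hsurj _ _ _).comp (hsurj _ _ _)) R.2).trans
      (pull_comp (r v.unop s.unop (leOfHom h2.unop)) (hsurj _ _ _)
        (r s.unop t.unop (leOfHom h1.unop)) (hsurj _ _ _) R.2)

end FISRightInv

/-- An inverse system of nonempty finite discrete spaces over a directed
partially ordered set, with surjective bonding maps, has a right inverse.
(Maps between finite discrete spaces are automatically continuous, so spaces are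
modelled as finite nonempty types and maps as plain functions.) -/
theorem finite_inverse_system_has_right_inverse
    {ι : Type*} [PartialOrder ι] (hdir : ∀ s t : ι, ∃ u, s ≤ u ∧ t ≤ u)
    (X : ι → Type*) [∀ s, Finite (X s)] [∀ s, Nonempty (X s)]
    (r : ∀ s t : ι, s ≤ t → X t → X s)
    (hid : ∀ s : ι, r s s le_rfl = id)
    (hcomp : ∀ (s t u : ι) (hst : s ≤ t) (htu : t ≤ u),
      r s t hst ∘ r t u htu = r s u (hst.trans htu))
    (hsurj : ∀ (s t : ι) (hst : s ≤ t), Function.Surjective (r s t hst)) :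
    ∃ i : ∀ s t : ι, s ≤ t → X s → X t,
      (∀ (s t : ι) (hst : s ≤ t), r s t hst ∘ i s t hst = id) ∧
      (∀ s : ι, i s s le_rfl = id) ∧
      (∀ (s t u : ι) (hst : s ≤ t) (htu : t ≤ u),
        i t u htu ∘ i s t hst = i s u (hst.trans htu)) := by
  classical
  open FISRightInv in
  haveI : IsDirected ι (· ≤ ·) := ⟨hdir⟩
  set F := FISRightInv.sysF X r hid hcomp hsurj with hF
  haveI : ∀ j : ιᵒᵖ, Finite (F.obj j) := fun j =>
    (Subtype.finite : Finite {R : X j.unop → X j.unop → Prop // FISRightInv.IsLin R})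
  haveI : ∀ j : ιᵒᵖ, Nonempty (F.obj j) := fun j => by
    obtain ⟨R, hR⟩ := FISRightInv.exists_isLin (X j.unop)
    exact ⟨⟨R, hR⟩⟩
  obtain ⟨L, hL⟩ := nonempty_sections_of_finite_inverse_system F
  -- compatibility of the chosen orders
  have key : ∀ (t u : ι) (htu : t ≤ u),
      FISRightInv.pull (r t u htu) (hsurj t u htu) (L (Opposite.op u)).2
        = (L (Opposite.op t)).1 := by
    intro t u htu
    have h := hL (f := (homOfLE htu).op)
    exact congrArg Subtype.val h
  refine ⟨fun s t hst x =>
      FISRightInv.sec (r s t hst) (hsurj s t hst) (L (Opposite.op t)).2 x, ?_, ?_, ?_⟩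
  · intro s t hst
    funext x
    exact FISRightInv.sec_spec _ _ _ x
  · intro s
    funext x
    exact (FISRightInv.sec_congr (hid s) rfl (hsurj s s le_rfl) Function.surjective_id
      (L (Opposite.op s)).2 (L (Opposite.op s)).2 x).trans
      (FISRightInv.sec_id Function.surjective_id (L (Opposite.op s)).2 x)
  · intro s t u hst htu
    funext x
    show FISRightInv.sec (r t u htu) (hsurj t u htu) (L (Opposite.op u)).2
        (FISRightInv.sec (r s t hst) (hsurj s t hst) (L (Opposite.op t)).2 x)
      = FISRightInv.sec (r s u (hst.trans htu)) (hsurj s u (hst.trans htu))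
        (L (Opposite.op u)).2 x
    have stepA : FISRightInv.sec (r s t hst) (hsurj s t hst) (L (Opposite.op t)).2 x
        = FISRightInv.sec (r s t hst) (hsurj s t hst)
            (FISRightInv.pull_isLin (r t u htu) (hsurj t u htu) (L (Opposite.op u)).2) x :=
      FISRightInv.sec_congr rfl (key t u htu).symm _ _ _ _ x
    rw [stepA,
      ← FISRightInv.sec_comp (r s t hst) (hsurj s t hst) (r t u htu) (hsurj t u htu)
        (L (Opposite.op u)).2 x]
    exact FISRightInv.sec_congr (hcomp s t u hst htu) rfl _ _ _ _ x
end

section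
/- Let X be a compact Hausdorff space and let (r_n)_{n∈ℕ} be continuous maps r_n : X → X satisfying r_n ∘ r_m = r_{min(n,m)} = r_m ∘ r_n for all n, m and such that for every x ∈ X the sequence (r_n(x)) converges to x; put X_n = r_n(X). Let f : X → Y be a continuous surjection onto a Hausdorff space Y, and for each n ∈ ℕ let B_n be a base for the subspace topology of f(X_n) ⊆ Y which is closed under finite unions. Then the family C = { Y \ f( X \ (f ∘ r_n)^{-1}(B) ) : n ∈ ℕ, B ∈ B_n } is a base for the topology of Y. In particular, the weight of Y equals sup_{n∈ℕ} weight(f(X_n)) whenever these weights are infinite. -/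
open Filter Set TopologicalSpace

/-- The weight of a topological space: the least cardinality of a base of its topology. -/
noncomputable def tweight (X : Type u) [TopologicalSpace X] : Cardinal.{u} :=
  ⨅ B : {B : Set (Set X) // TopologicalSpace.IsTopologicalBasis B}, Cardinal.mk B.1

section aux

lemma retr_lim {X : Type u} [TopologicalSpace X] [CompactSpace X] [T2Space X]
    (r : ℕ → X → X) (hrcont : ∀ n, Continuous (r n))
    (hr : ∀ n m : ℕ, r n ∘ r m = r (min n m))
    (hconv : ∀ x : X, Tendsto (fun n => r n x) atTop (nhds x))
    (𝒰 : Ultrafilter ℕ) (h𝒰 : (𝒰 : Filter ℕ) ≤ atTop)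
    (xs : ℕ → X) (x : X) (hx : Tendsto xs 𝒰 (nhds x)) :
    Tendsto (fun n => r n (xs n)) 𝒰 (nhds x) := by
  obtain ⟨z, -, hz⟩ := isCompact_univ.ultrafilter_le_nhds
    (𝒰.map (fun n => r n (xs n))) (by simp)
  have hz' : Tendsto (fun n => r n (xs n)) 𝒰 (nhds z) := hz
  have key : ∀ m, r m z = r m x := by
    intro m
    have h1 : Tendsto (fun n => r m (r n (xs n))) 𝒰 (nhds (r m z)) :=
      ((hrcont m).tendsto z).comp hz'
    have h2 : Tendsto (fun n => r m (xs n)) 𝒰 (nhds (r m x)) :=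
      ((hrcont m).tendsto x).comp hx
    have heq : ∀ᶠ n in (𝒰 : Filter ℕ), r m (r n (xs n)) = r m (xs n) := by
      filter_upwards [h𝒰 (eventually_ge_atTop m)] with n hn
      have h3 := congrFun (hr m n) (xs n)
      simp only [Function.comp_apply] at h3
      rw [h3, min_eq_left hn]
    exact tendsto_nhds_unique (h1.congr' heq) h2
  have hzx : z = x := by
    have hx2 : Tendsto (fun m => r m z) atTop (nhds x) := by
      have : (fun m => r m z) = fun m => r m x := funext key
      rw [this]; exact hconv x
    exact tendsto_nhds_unique (hconv z) hx2
  rwa [hzx] at hz'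

lemma stepA {X Y : Type u} [TopologicalSpace X] [CompactSpace X] [T2Space X]
    [TopologicalSpace Y] [T2Space Y]
    (r : ℕ → X → X) (hrcont : ∀ n, Continuous (r n))
    (hr : ∀ n m : ℕ, r n ∘ r m = r (min n m))
    (hconv : ∀ x : X, Tendsto (fun n => r n x) atTop (nhds x))
    (f : X → Y) (hf : Continuous f)
    (U : Set Y) (hU : IsOpen U) (y : Y) (hy : y ∈ U) :
    ∃ n, ∀ x x' : X, f x ∉ U → f x' = y → f (r n x) ≠ f (r n x') := by
  by_contra h
  push_neg at h
  choose xs xs' hxs hxs' heq using h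
  set 𝒰 := Ultrafilter.of (atTop : Filter ℕ) with h𝒰def
  have h𝒰 : (𝒰 : Filter ℕ) ≤ atTop := Ultrafilter.of_le _
  obtain ⟨x, -, hx⟩ := isCompact_univ.ultrafilter_le_nhds (𝒰.map xs) (by simp)
  obtain ⟨x', -, hx'⟩ := isCompact_univ.ultrafilter_le_nhds (𝒰.map xs') (by simp)
  have hx : Tendsto xs 𝒰 (nhds x) := hx
  have hx' : Tendsto xs' 𝒰 (nhds x') := hx'
  have l1 : Tendsto (fun n => f (r n (xs n))) 𝒰 (nhds (f x)) :=
    (hf.tendsto x).comp (retr_lim r hrcont hr hconv 𝒰 h𝒰 xs x hx)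
  have l2 : Tendsto (fun n => f (r n (xs' n))) 𝒰 (nhds (f x')) :=
    (hf.tendsto x').comp (retr_lim r hrcont hr hconv 𝒰 h𝒰 xs' x' hx')
  have hfeq : f x = f x' :=
    tendsto_nhds_unique (l1.congr heq) l2
  have hfx : f x ∈ Uᶜ := by
    have ht : Tendsto (fun n => f (xs n)) 𝒰 (nhds (f x)) := (hf.tendsto x).comp hx
    exact hU.isClosed_compl.mem_of_tendsto ht (Eventually.of_forall hxs)
  have hfx' : f x' = y := by
    have ht : Tendsto (fun n => f (xs' n)) 𝒰 (nhds (f x')) := (hf.tendsto x').comp hx'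
    have ht2 : Tendsto (fun _ : ℕ => y) 𝒰 (nhds (f x')) := ht.congr hxs'
    exact tendsto_nhds_unique ht2 tendsto_const_nhds
  exact hfx (by rw [hfeq, hfx']; exact hy)

lemma finset_union_mem {α : Type v} {Y : Type u} (B : Set (Set Y))
    (hBunion : ∀ b₁ ∈ B, ∀ b₂ ∈ B, b₁ ∪ b₂ ∈ B)
    (t : Finset α) (ht : t.Nonempty) (g : α → Set Y) (hg : ∀ i ∈ t, g i ∈ B) :
    (⋃ i ∈ t, g i) ∈ B := by
  classical
  induction t using Finset.induction_on with
  | empty => exact absurd ht (by simp)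
  | @insert a s ha ih =>
    by_cases hse : s.Nonempty
    · have h1 := ih hse (fun i hi => hg i (Finset.mem_insert_of_mem hi))
      have h2 : g a ∈ B := hg a (Finset.mem_insert_self _ _)
      rw [Finset.set_biUnion_insert]
      exact hBunion _ h2 _ h1
    · rw [Finset.not_nonempty_iff_eq_empty] at hse
      subst hse
      simpa using hg a (Finset.mem_insert_self _ _)

lemma cover_lemma {Y : Type u} [TopologicalSpace Y] (S V : Set Y) (hV : IsOpen V)
    (B : Set (Set Y))
    (hBopen : ∀ b ∈ B, ∃ U : Set Y, IsOpen U ∧ b = U ∩ S)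
    (hBbase : ∀ y ∈ V ∩ S, ∃ b ∈ B, y ∈ b ∧ b ⊆ V ∩ S)
    (hBunion : ∀ b₁ ∈ B, ∀ b₂ ∈ B, b₁ ∪ b₂ ∈ B)
    (C0 : Set Y) (hC0 : IsCompact C0) (hne : C0.Nonempty)
    (hsub : C0 ⊆ V ∩ S) :
    ∃ b ∈ B, C0 ⊆ b ∧ b ⊆ V ∩ S := by
  classical
  have hchoice : ∀ y ∈ C0, ∃ b U, b ∈ B ∧ y ∈ b ∧ b ⊆ V ∩ S ∧ IsOpen U ∧ b = U ∩ S := by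
    intro y hy
    obtain ⟨b, hbB, hyb, hbsub⟩ := hBbase y (hsub hy)
    obtain ⟨U, hUo, hUe⟩ := hBopen b hbB
    exact ⟨b, U, hbB, hyb, hbsub, hUo, hUe⟩
  choose! b U hbB hyb hbsub hUo hUe using hchoice
  have hcov : C0 ⊆ ⋃ y ∈ C0, U y := by
    intro z hz
    have : z ∈ b z := hyb z hz
    rw [hUe z hz] at this
    exact mem_biUnion hz this.1
  obtain ⟨t, htsub, htfin, htcov⟩ := hC0.elim_finite_subcover_image (fun y hy => hUo y hy) hcov
  have htne : t.Nonempty := by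
    rcases hne with ⟨z, hz⟩
    rcases mem_iUnion₂.1 (htcov hz) with ⟨w, hw, -⟩
    exact ⟨w, hw⟩
  refine ⟨⋃ i ∈ htfin.toFinset, b i, ?_, ?_, ?_⟩
  · exact finset_union_mem B hBunion _ (by simpa [Set.Finite.toFinset_nonempty] using htne)
      b (fun i hi => hbB i (htsub (htfin.mem_toFinset.1 hi)))
  · intro z hz
    rcases mem_iUnion₂.1 (htcov hz) with ⟨w, hw, hzw⟩
    have hwC0 : w ∈ C0 := htsub hw
    have : z ∈ b w := by rw [hUe w hwC0]; exact ⟨hzw, (hsub hz).2⟩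
    exact mem_biUnion (htfin.mem_toFinset.2 hw) this
  · exact iUnion₂_subset fun i hi => hbsub i (htsub (htfin.mem_toFinset.1 hi))

lemma main12 {X Y : Type u} [TopologicalSpace X] [CompactSpace X] [T2Space X]
    [TopologicalSpace Y] [T2Space Y]
    (r : ℕ → X → X) (hrcont : ∀ n, Continuous (r n))
    (hr : ∀ n m : ℕ, r n ∘ r m = r (min n m))
    (hconv : ∀ x : X, Filter.Tendsto (fun n => r n x) Filter.atTop (nhds x))
    (f : X → Y) (hf : Continuous f) (hfs : Function.Surjective f)
    (B : ℕ → Set (Set Y))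
    (hBopen : ∀ n, ∀ b ∈ B n, ∃ U : Set Y, IsOpen U ∧ b = U ∩ f '' (r n '' Set.univ))
    (hBbase : ∀ n, ∀ V : Set Y, IsOpen V → ∀ y ∈ V ∩ f '' (r n '' Set.univ),
      ∃ b ∈ B n, y ∈ b ∧ b ⊆ V ∩ f '' (r n '' Set.univ))
    (hBunion : ∀ n, ∀ b₁ ∈ B n, ∀ b₂ ∈ B n, b₁ ∪ b₂ ∈ B n) :
    (∀ c ∈ {c : Set Y | ∃ n, ∃ b ∈ B n,
        c = Set.univ \ f '' (Set.univ \ (f ∘ r n) ⁻¹' b)}, IsOpen c) ∧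
    (∀ U : Set Y, IsOpen U → ∀ y ∈ U, ∃ c ∈ {c : Set Y | ∃ n, ∃ b ∈ B n,
        c = Set.univ \ f '' (Set.univ \ (f ∘ r n) ⁻¹' b)}, y ∈ c ∧ c ⊆ U) := by
  constructor
  · rintro c ⟨n, b, hbB, rfl⟩
    obtain ⟨U', hU'o, hU'e⟩ := hBopen n b hbB
    have hpre : (f ∘ r n) ⁻¹' b = (f ∘ r n) ⁻¹' U' := by
      ext x
      simp only [mem_preimage, Function.comp_apply, hU'e, mem_inter_iff]
      exact ⟨fun h => h.1, fun h => ⟨h, ⟨r n x, ⟨x, mem_univ x, rfl⟩, rfl⟩⟩⟩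
    rw [hpre, ← Set.compl_eq_univ_diff, ← Set.compl_eq_univ_diff]
    exact (hf.isClosedMap _ ((hU'o.preimage (hf.comp (hrcont n))).isClosed_compl)).isOpen_compl
  · intro U hU y hy
    obtain ⟨n, hn⟩ := stepA r hrcont hr hconv f hf U hU y hy
    set Sn : Set Y := f '' (r n '' Set.univ) with hSn
    set V : Set Y := (f '' (r n '' (f ⁻¹' U)ᶜ))ᶜ with hV
    have hVo : IsOpen V :=
      ((((hU.preimage hf).isClosed_compl.isCompact.image (hrcont n)).image hf).isClosed).isOpen_compl
    set C0 : Set Y := f '' (r n '' (f ⁻¹' {y})) with hC0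
    have hC0c : IsCompact C0 :=
      ((((isClosed_singleton (x := y)).preimage hf).isCompact).image (hrcont n)).image hf
    have hC0ne : C0.Nonempty := by
      obtain ⟨x', hx'⟩ := hfs y
      exact ⟨f (r n x'), ⟨r n x', ⟨x', by simp [hx'], rfl⟩, rfl⟩⟩
    have hC0sub : C0 ⊆ V ∩ Sn := by
      rintro z ⟨w, ⟨x', hx', rfl⟩, rfl⟩
      simp only [mem_preimage, mem_singleton_iff] at hx'
      constructor
      · rintro ⟨w', ⟨x, hx, rfl⟩, hfw⟩
        exact hn x x' (by simpa using hx) hx' hfw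
      · exact ⟨r n x', ⟨x', mem_univ _, rfl⟩, rfl⟩
    obtain ⟨b, hbB, hC0b, hbsub⟩ := cover_lemma Sn V hVo (B n)
      (hBopen n) (hBbase n V hVo) (hBunion n) C0 hC0c hC0ne hC0sub
    refine ⟨Set.univ \ f '' (Set.univ \ (f ∘ r n) ⁻¹' b), ⟨n, b, hbB, rfl⟩, ?_, ?_⟩
    · refine ⟨mem_univ y, ?_⟩
      rintro ⟨x, ⟨-, hx2⟩, hfx⟩
      exact hx2 (hC0b ⟨r n x, ⟨x, by simp [hfx], rfl⟩, rfl⟩)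
    · intro z hz
      by_contra hzU
      obtain ⟨x, rfl⟩ := hfs z
      have hx2 : x ∈ (f ∘ r n) ⁻¹' b := by
        by_contra hx3
        exact hz.2 ⟨x, ⟨mem_univ x, hx3⟩, rfl⟩
      have hVmem : f (r n x) ∈ V := (hbsub hx2).1
      exact hVmem ⟨r n x, ⟨x, by simpa using hzU, rfl⟩, rfl⟩

lemma tweight_le_basis {Y : Type u} [TopologicalSpace Y] {B : Set (Set Y)}
    (hB : IsTopologicalBasis B) : tweight Y ≤ Cardinal.mk B :=
  ciInf_le' _ (⟨B, hB⟩ : {B : Set (Set Y) // IsTopologicalBasis B})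

lemma exists_basis_tweight (Y : Type u) [TopologicalSpace Y] :
    ∃ B : Set (Set Y), IsTopologicalBasis B ∧ Cardinal.mk B = tweight Y := by
  have hne : Nonempty {B : Set (Set Y) // IsTopologicalBasis B} :=
    ⟨⟨_, isTopologicalBasis_opens⟩⟩
  have h := csInf_mem (Set.range_nonempty
    (fun B : {B : Set (Set Y) // IsTopologicalBasis B} => Cardinal.mk B.1))
  obtain ⟨⟨B, hB⟩, hBe⟩ := h
  exact ⟨B, hB, by rw [tweight, iInf]; exact hBe⟩

lemma tweight_subtype_le {Y : Type u} [TopologicalSpace Y] (S : Set Y) :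
    tweight ↥S ≤ tweight Y := by
  have hne : Nonempty {B : Set (Set Y) // IsTopologicalBasis B} :=
    ⟨⟨_, isTopologicalBasis_opens⟩⟩
  refine le_ciInf fun ⟨B, hB⟩ => ?_
  have h1 : IsTopologicalBasis ((preimage ((↑) : S → Y)) '' B) :=
    hB.isInducing Topology.IsInducing.subtypeVal
  exact (tweight_le_basis h1).trans Cardinal.mk_image_le

end aux

/-- given an inverse sequence of internal retractions `(r n)` of a compact
Hausdorff space `X` (with `r n ∘ r m = r (min n m)` and `r n x → x`), a continuous
surjection `f : X → Y` onto a Hausdorff space, and for each `n` a base `B n` of the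
subspace `f '' (r n '' X)` of `Y` closed under finite unions, the family
`C = { Y \ f(X \ (f ∘ r n)⁻¹(b)) : n ∈ ℕ, b ∈ B n }` is a base of the topology of `Y`;
in particular, if the weights of the `f '' (r n '' X)` are all infinite, then the
weight of `Y` is their supremum. -/
theorem base_of_image_of_retractive_sequence
    {X Y : Type u} [TopologicalSpace X] [CompactSpace X] [T2Space X]
    [TopologicalSpace Y] [T2Space Y]
    (r : ℕ → X → X) (hrcont : ∀ n, Continuous (r n))
    (hr : ∀ n m : ℕ, r n ∘ r m = r (min n m))
    (hconv : ∀ x : X, Filter.Tendsto (fun n => r n x) Filter.atTop (nhds x))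
    (f : X → Y) (hf : Continuous f) (hfs : Function.Surjective f)
    (B : ℕ → Set (Set Y))
    (hBopen : ∀ n, ∀ b ∈ B n, ∃ U : Set Y, IsOpen U ∧ b = U ∩ f '' (r n '' Set.univ))
    (hBbase : ∀ n, ∀ V : Set Y, IsOpen V → ∀ y ∈ V ∩ f '' (r n '' Set.univ),
      ∃ b ∈ B n, y ∈ b ∧ b ⊆ V ∩ f '' (r n '' Set.univ))
    (hBunion : ∀ n, ∀ b₁ ∈ B n, ∀ b₂ ∈ B n, b₁ ∪ b₂ ∈ B n) :
    (∀ c ∈ {c : Set Y | ∃ n, ∃ b ∈ B n,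
        c = Set.univ \ f '' (Set.univ \ (f ∘ r n) ⁻¹' b)}, IsOpen c) ∧
    (∀ U : Set Y, IsOpen U → ∀ y ∈ U, ∃ c ∈ {c : Set Y | ∃ n, ∃ b ∈ B n,
        c = Set.univ \ f '' (Set.univ \ (f ∘ r n) ⁻¹' b)}, y ∈ c ∧ c ⊆ U) ∧
    ((∀ n, Cardinal.aleph0 ≤ tweight ↥(f '' (r n '' Set.univ))) →
      tweight Y = ⨆ n : ℕ, tweight ↥(f '' (r n '' Set.univ))) := by
  classical
  obtain ⟨h1, h2⟩ := main12 r hrcont hr hconv f hf hfs B hBopen hBbase hBunion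
  refine ⟨h1, h2, ?_⟩
  intro hinf
  have hbdd : BddAbove (Set.range fun n : ℕ => tweight ↥(f '' (r n '' Set.univ))) :=
    Cardinal.bddAbove_range _
  have hge : (⨆ n : ℕ, tweight ↥(f '' (r n '' Set.univ))) ≤ tweight Y :=
    ciSup_le fun n => tweight_subtype_le _
  have hsupinf : Cardinal.aleph0 ≤ ⨆ n : ℕ, tweight ↥(f '' (r n '' Set.univ)) :=
    (hinf 0).trans (le_ciSup hbdd 0)
  choose D hDb hDc using fun n => exists_basis_tweight ↥(f '' (r n '' Set.univ))
  have hinfD : ∀ n, Infinite ↥(D n) := fun n => by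
    rw [Cardinal.infinite_iff, hDc n]; exact hinf n
  have hUex : ∀ n (i : ↥(D n)), ∃ U : Set Y, IsOpen U ∧
      (Subtype.val : ↥(f '' (r n '' Set.univ)) → Y) ⁻¹' U
        = (i : Set ↥(f '' (r n '' Set.univ))) := by
    intro n i
    exact isOpen_induced_iff.1 ((hDb n).isOpen i.2)
  choose Uo hUoo hUoe using hUex
  set B' : ℕ → Set (Set Y) := fun n =>
    { b | ∃ t : Finset ↥(D n), t.Nonempty ∧
        b = ⋃ i ∈ t, Subtype.val '' (i : Set ↥(f '' (r n '' Set.univ))) } with hB'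
  have hB'open : ∀ n, ∀ b ∈ B' n, ∃ U : Set Y, IsOpen U ∧ b = U ∩ f '' (r n '' Set.univ) := by
    rintro n b ⟨t, -, rfl⟩
    refine ⟨⋃ i ∈ t, Uo n i, isOpen_biUnion fun i _ => hUoo n i, ?_⟩
    have hrep : ∀ i ∈ t, Subtype.val '' (i : Set ↥(f '' (r n '' Set.univ)))
        = Uo n i ∩ f '' (r n '' Set.univ) := by
      intro i _
      rw [← hUoe n i, Subtype.image_preimage_coe, inter_comm]
    ext z
    constructor
    · intro hz
      rcases mem_iUnion₂.1 hz with ⟨i, hit, hzi⟩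
      rw [hrep i hit] at hzi
      exact ⟨mem_biUnion hit hzi.1, hzi.2⟩
    · rintro ⟨hz1, hz2⟩
      rcases mem_iUnion₂.1 hz1 with ⟨i, hit, hzi⟩
      exact mem_biUnion hit (by rw [hrep i hit]; exact ⟨hzi, hz2⟩)
  have hB'base : ∀ n, ∀ V : Set Y, IsOpen V → ∀ y ∈ V ∩ f '' (r n '' Set.univ),
      ∃ b ∈ B' n, y ∈ b ∧ b ⊆ V ∩ f '' (r n '' Set.univ) := by
    rintro n V hV y ⟨hyV, hyS⟩
    obtain ⟨d, hdD, hyd, hdsub⟩ := (hDb n).exists_subset_of_mem_open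
      (show (⟨y, hyS⟩ : ↥(f '' (r n '' Set.univ))) ∈ Subtype.val ⁻¹' V from hyV)
      (hV.preimage continuous_subtype_val)
    refine ⟨Subtype.val '' d,
      ⟨{(⟨d, hdD⟩ : ↥(D n))}, Finset.singleton_nonempty _, by simp⟩,
      ⟨⟨y, hyS⟩, hyd, rfl⟩, ?_⟩
    rintro z ⟨w, hwd, rfl⟩
    exact ⟨hdsub hwd, w.2⟩
  have hB'union : ∀ n, ∀ b₁ ∈ B' n, ∀ b₂ ∈ B' n, b₁ ∪ b₂ ∈ B' n := by
    rintro n b₁ ⟨t₁, ht₁, rfl⟩ b₂ ⟨t₂, ht₂, rfl⟩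
    exact ⟨t₁ ∪ t₂, ht₁.mono Finset.subset_union_left,
      by rw [Finset.set_biUnion_union]⟩
  have hB'card : ∀ n, Cardinal.mk ↥(B' n) ≤ tweight ↥(f '' (r n '' Set.univ)) := by
    intro n
    haveI := hinfD n
    have hsub : B' n ⊆ Set.range (fun t : Finset ↥(D n) =>
        ⋃ i ∈ t, Subtype.val '' (i : Set ↥(f '' (r n '' Set.univ)))) := by
      rintro b ⟨t, -, rfl⟩; exact ⟨t, rfl⟩
    calc Cardinal.mk ↥(B' n) ≤ Cardinal.mk ↥(Set.range (fun t : Finset ↥(D n) =>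
          ⋃ i ∈ t, Subtype.val '' (i : Set ↥(f '' (r n '' Set.univ))))) :=
        Cardinal.mk_le_mk_of_subset hsub
      _ ≤ Cardinal.mk (Finset ↥(D n)) := Cardinal.mk_range_le
      _ = Cardinal.mk ↥(D n) := Cardinal.mk_finset_of_infinite _
      _ = tweight ↥(f '' (r n '' Set.univ)) := hDc n
  obtain ⟨hopen', hbase'⟩ := main12 r hrcont hr hconv f hf hfs B' hB'open hB'base hB'union
  have hC'basis : IsTopologicalBasis {c : Set Y | ∃ n, ∃ b ∈ B' n,
      c = Set.univ \ f '' (Set.univ \ (f ∘ r n) ⁻¹' b)} :=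
    isTopologicalBasis_of_isOpen_of_nhds hopen' (fun a u hau hu => hbase' u hu a hau)
  have hC'card : Cardinal.mk ↥{c : Set Y | ∃ n, ∃ b ∈ B' n,
      c = Set.univ \ f '' (Set.univ \ (f ∘ r n) ⁻¹' b)}
      ≤ ⨆ n : ℕ, tweight ↥(f '' (r n '' Set.univ)) := by
    have hsurj2 : Function.Surjective (fun p : (n : ℕ) × ↥(B' n) =>
        (⟨Set.univ \ f '' (Set.univ \ (f ∘ r p.1) ⁻¹' p.2.1),
          ⟨p.1, p.2.1, p.2.2, rfl⟩⟩ :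
          ↥{c : Set Y | ∃ n, ∃ b ∈ B' n,
            c = Set.univ \ f '' (Set.univ \ (f ∘ r n) ⁻¹' b)})) := by
      rintro ⟨c, n, b, hb, rfl⟩
      exact ⟨⟨n, ⟨b, hb⟩⟩, rfl⟩
    calc Cardinal.mk ↥{c : Set Y | ∃ n, ∃ b ∈ B' n,
          c = Set.univ \ f '' (Set.univ \ (f ∘ r n) ⁻¹' b)}
        ≤ Cardinal.mk ((n : ℕ) × ↥(B' n)) := Cardinal.mk_le_of_surjective hsurj2
      _ = Cardinal.sum (fun n => Cardinal.mk ↥(B' n)) := Cardinal.mk_sigma _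
      _ ≤ Cardinal.sum (fun n => tweight ↥(f '' (r n '' Set.univ))) :=
        Cardinal.sum_le_sum _ _ hB'card
      _ ≤ Cardinal.lift (Cardinal.mk ℕ) * ⨆ n : ℕ, tweight ↥(f '' (r n '' Set.univ)) :=
        Cardinal.sum_le_lift_mk_mul_iSup _
      _ = ⨆ n : ℕ, tweight ↥(f '' (r n '' Set.univ)) := by
        rw [Cardinal.mk_nat, Cardinal.lift_aleph0]
        exact Cardinal.mul_eq_right hsupinf hsupinf Cardinal.aleph0_ne_zero
  exact le_antisymm ((tweight_le_basis hC'basis).trans hC'card) hge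
end

section
/- Let κ be a regular uncountable cardinal, X a Hausdorff topological space, and φ : κ+1 → X a continuous map, where κ+1 (the set of ordinals ≤ κ) carries the order topology, such that φ(ξ) ≠ φ(κ) for every ξ < κ. Then there exists a closed unbounded set C ⊆ κ such that φ restricted to C ∪ {κ} is injective; in particular, X contains a subspace homeomorphic to ω₁+1. -/
universe v

/-- The canonical homeomorphism between `Iic (lift o)` and `Iic o`. -/
noncomputable def liftIicHomeo (o : Ordinal.{0}) :
    ↥(Set.Iic (Ordinal.lift.{v} o)) ≃ₜ ↥(Set.Iic o) := by
  have g : ↥(Set.Iic o) ≃o ↥(Set.Iic (Ordinal.lift.{v} o)) := by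
    refine StrictMono.orderIsoOfSurjective
      (fun y => ⟨Ordinal.lift.{v} y.1, Ordinal.lift_le.mpr y.2⟩) ?_ ?_
    · intro a b hab
      exact Subtype.mk_lt_mk.mpr (Ordinal.lift_lt.mpr (Subtype.coe_lt_coe.mpr hab))
    · rintro ⟨x, hx⟩
      obtain ⟨a, ha⟩ := Ordinal.mem_range_lift_of_le hx
      refine ⟨⟨a, ?_⟩, Subtype.ext ha⟩
      rw [← ha] at hx
      exact Ordinal.lift_le.mp hx
  exact g.symm.toHomeomorph

/-- `Iic ω₁` in any universe is homeomorphic to the universe-0 version. -/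
noncomputable def aleph1IicHomeo :
    ↥(Set.Iic (Cardinal.aleph.{v} 1).ord) ≃ₜ ↥(Set.Iic (Cardinal.aleph.{0} 1).ord) := by
  have h1 : (Cardinal.aleph.{v} 1).ord = Ordinal.lift.{v} (Cardinal.aleph.{0} 1).ord := by
    rw [Cardinal.lift_ord, Cardinal.lift_aleph, Ordinal.lift_one]
  rw [h1]
  exact liftIicHomeo _

/-- if `κ` is a regular uncountable cardinal and `φ : κ+1 → X` is a
continuous map into a Hausdorff space (where `κ+1` is the ordinal space of ordinals
`≤ κ.ord` with its topology) such that `φ ξ ≠ φ κ` for all `ξ < κ`, then there is a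
closed unbounded `C ⊆ κ` such that `φ` is injective on `C ∪ {κ}`; in particular `X`
contains a subspace homeomorphic to `ω₁ + 1`. -/
theorem club_injective_of_continuous_nonconstant
    {X : Type*} [TopologicalSpace X] [T2Space X]
    (κ : Cardinal.{0}) (hreg : κ.IsRegular) (hunc : Cardinal.aleph0 < κ)
    (φ : ↥(Set.Iic κ.ord) → X) (hφ : Continuous φ)
    (hne : ∀ ξ : ↥(Set.Iic κ.ord), ξ.1 < κ.ord → φ ξ ≠ φ ⟨κ.ord, Set.self_mem_Iic⟩) :
    (∃ C : Set Ordinal.{0}, C ⊆ Set.Iio κ.ord ∧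
      (∀ α < κ.ord, ∃ β ∈ C, α ≤ β) ∧
      (∀ s ⊆ C, s.Nonempty → sSup s < κ.ord → sSup s ∈ C) ∧
      Set.InjOn φ {x : ↥(Set.Iic κ.ord) | x.1 ∈ C ∨ x.1 = κ.ord}) ∧
    ∃ s : Set X, Nonempty (↥(Set.Iic (Cardinal.aleph 1).ord) ≃ₜ ↥s) := by
  classical
  have hKlim : Order.IsSuccLimit κ.ord := Cardinal.isSuccLimit_ord hreg.aleph0_le
  have hcof : κ.ord.cof = κ := hreg.cof_eq
  -- separation function
  have key : ∀ ξ : Ordinal, ∃ a, ξ < κ.ord →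
      a < κ.ord ∧ ∀ η (hη : η ≤ κ.ord) (hξ' : ξ ≤ κ.ord), a < η → φ ⟨η, hη⟩ ≠ φ ⟨ξ, hξ'⟩ := by
    intro ξ
    by_cases hξ : ξ < κ.ord
    · have hne' := hne ⟨ξ, hξ.le⟩ hξ
      obtain ⟨U, V, hU, hV, hxU, hKV, hUV⟩ := t2_separation hne'
      have hop : IsOpen (φ ⁻¹' V) := hV.preimage hφ
      rw [isOpen_induced_iff] at hop
      obtain ⟨t, ht, htp⟩ := hop
      have hKt : κ.ord ∈ t := by
        have h1 : (⟨κ.ord, Set.self_mem_Iic⟩ : ↥(Set.Iic κ.ord)) ∈ φ ⁻¹' V := hKV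
        rw [← htp] at h1; exact h1
      obtain ⟨a, haK, hIoo⟩ := (Ordinal.isOpen_iff.mp ht) κ.ord hKt hKlim
      refine ⟨a, fun _ => ⟨haK, ?_⟩⟩
      intro η hη hξ' ha hcontra
      have hφη : φ ⟨η, hη⟩ ∈ V := by
        rcases eq_or_lt_of_le hη with rfl | hlt
        · exact hKV
        · have h2 : (⟨η, hη⟩ : ↥(Set.Iic κ.ord)) ∈ Subtype.val ⁻¹' t := hIoo ⟨ha, hlt⟩
          rw [htp] at h2; exact h2
      have hφξ : φ (⟨η, hη⟩ : ↥(Set.Iic κ.ord)) ∈ U := by rw [hcontra]; exact hxU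
      exact (Set.disjoint_left.mp hUV hφξ) hφη
    · exact ⟨0, fun h => absurd h hξ⟩
  choose g hg using key
  set C : Set Ordinal.{0} := {α | α < κ.ord ∧ ∀ ξ < α, g ξ < α} with hCdef
  have hCsub : C ⊆ Set.Iio κ.ord := fun α h => h.1
  -- unboundedness
  have hub : ∀ α < κ.ord, ∃ β ∈ C, α ≤ β := by
    intro α hα
    let b : ℕ → Ordinal := fun n =>
      n.rec α fun _ p => max (Order.succ p) (Ordinal.bsup p fun ξ _ => Order.succ (g ξ))
    have hb0 : b 0 = α := rfl
    have hbs : ∀ n, b (n + 1)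
        = max (Order.succ (b n)) (Ordinal.bsup (b n) fun ξ _ => Order.succ (g ξ)) :=
      fun n => rfl
    have hbK : ∀ n, b n < κ.ord := by
      intro n
      induction n with
      | zero => exact hα
      | succ n ih =>
        rw [hbs]
        refine max_lt (hKlim.succ_lt ih) (Ordinal.bsup_lt_ord ?_ ?_)
        · rw [hcof]; exact Cardinal.lt_ord.mp ih
        · intro ξ hξ
          exact hKlim.succ_lt (hg ξ (hξ.trans ih)).1
    have hbdd : BddAbove (Set.range b) := Ordinal.bddAbove_range b
    have hsup : (⨆ n, b n) < κ.ord := by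
      refine Ordinal.iSup_lt_ord ?_ hbK
      rw [Cardinal.mk_nat, hcof]; exact hunc
    refine ⟨⨆ n, b n, ⟨hsup, ?_⟩, ?_⟩
    · intro ξ hξ
      obtain ⟨n, hn⟩ := (lt_ciSup_iff hbdd).mp hξ
      have h1 : Order.succ (g ξ) ≤ b (n + 1) := by
        rw [hbs]
        exact le_trans (Ordinal.le_bsup _ ξ hn) (le_max_right _ _)
      exact lt_of_lt_of_le (lt_of_lt_of_le (Order.lt_succ _) h1) (le_ciSup hbdd (n + 1))
    · rw [← hb0]; exact le_ciSup hbdd 0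
  -- sup-closedness
  have hclosed : ∀ s ⊆ C, s.Nonempty → sSup s < κ.ord → sSup s ∈ C := by
    intro s hs hsne hsK
    have hbdd : BddAbove s := ⟨κ.ord, fun x hx => (hCsub (hs hx)).le⟩
    refine ⟨hsK, fun ξ hξ => ?_⟩
    obtain ⟨β, hβs, hβ⟩ := exists_lt_of_lt_csSup hsne hξ
    exact lt_of_lt_of_le ((hs hβs).2 ξ hβ) (le_csSup hbdd hβs)
  -- injectivity
  have main : ∀ x y : ↥(Set.Iic κ.ord), x.1 ∈ C → (y.1 ∈ C ∨ y.1 = κ.ord) → x.1 < y.1 →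
      φ x ≠ φ y := by
    intro x y hxC hy hlt
    have hxK : x.1 < κ.ord := hCsub hxC
    have hgx : g x.1 < y.1 := by
      rcases hy with hyC | hyK
      · exact hyC.2 x.1 hlt
      · rw [hyK]; exact (hg x.1 hxK).1
    have := (hg x.1 hxK).2 y.1 y.2 x.2 hgx
    exact fun h => this h.symm
  have hinj : Set.InjOn φ {x : ↥(Set.Iic κ.ord) | x.1 ∈ C ∨ x.1 = κ.ord} := by
    intro x hx y hy hxy
    rcases hx with hxC | hxK
    · rcases lt_trichotomy x.1 y.1 with h | h | h
      · exact absurd hxy (main x y hxC hy h)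
      · exact Subtype.ext h
      · rcases hy with hyC | hyK
        · exact absurd hxy.symm (main y x hyC (Or.inl hxC) h)
        · exact absurd h (by rw [hyK]; exact not_lt.mpr x.2)
    · rcases hy with hyC | hyK
      · exact absurd hxy.symm (main y x hyC (Or.inr hxK) (by rw [hxK]; exact hCsub hyC))
      · exact Subtype.ext (hxK.trans hyK.symm)
  refine ⟨⟨C, hCsub, hub, hclosed, hinj⟩, ?_⟩
  -- Part 2
  set D : Set Ordinal.{0} := C ∪ Set.Ici κ.ord with hDdef
  have hDunbdd : ¬ BddAbove D := by
    rintro ⟨c, hc⟩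
    have h1 : Order.succ (max κ.ord c) ∈ D :=
      Or.inr (Set.mem_Ici.mpr (le_trans (le_max_left _ _) (Order.le_succ _)))
    have h2 := hc h1
    exact absurd h2 (not_le.mpr ((le_max_right κ.ord c).trans_lt (Order.lt_succ _)))
  have hDclosed : IsClosed D := by
    rw [Ordinal.isClosed_iff_iSup]
    intro ι hι f hf
    by_cases hK : ∀ i, f i ∈ C
    · have hbdd : BddAbove (Set.range f) := Ordinal.bddAbove_range f
      have hle : (⨆ i, f i) ≤ κ.ord := ciSup_le fun i => (hCsub (hK i)).le
      rcases lt_or_eq_of_le hle with h | h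
      · refine Or.inl ⟨h, fun ξ hξ => ?_⟩
        obtain ⟨i, hi⟩ := (lt_ciSup_iff hbdd).mp hξ
        exact lt_of_lt_of_le ((hK i).2 ξ hi) (le_ciSup hbdd i)
      · exact Or.inr (le_of_eq h.symm)
    · push_neg at hK
      obtain ⟨i, hi⟩ := hK
      have h1 : κ.ord ≤ f i := (hf i).resolve_left hi
      exact Or.inr (h1.trans (le_ciSup (Ordinal.bddAbove_range f) i))
  have hnorm : Order.IsNormal (Ordinal.enumOrd D) :=
    (Ordinal.enumOrd_isNormal_iff_isClosed hDunbdd).mpr hDclosed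
  obtain ⟨hsm, hcont⟩ := Order.isNormal_iff_strictMono_and_continuous.mp hnorm
  have hltK : ∀ i, i < κ.ord → Ordinal.enumOrd D i < κ.ord := by
    intro i
    induction i using Ordinal.induction with
    | _ i IH =>
      intro hiK
      have hm : Ordinal.bsup i (fun j _ => Order.succ (Ordinal.enumOrd D j)) < κ.ord := by
        refine Ordinal.bsup_lt_ord ?_ ?_
        · rw [hcof]; exact Cardinal.lt_ord.mp hiK
        · intro j hj
          exact hKlim.succ_lt (IH j hj (hj.trans hiK))
      obtain ⟨β, hβC, hβge⟩ := hub _ hm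
      refine lt_of_le_of_lt (Ordinal.enumOrd_le_of_forall_lt (Or.inl hβC) ?_) (hCsub hβC)
      intro b hb
      exact lt_of_lt_of_le (lt_of_lt_of_le (Order.lt_succ _)
        (Ordinal.le_bsup _ b hb)) hβge
  have hleK : ∀ i, i ≤ κ.ord → Ordinal.enumOrd D i ≤ κ.ord := by
    intro i hi
    rcases lt_or_eq_of_le hi with h | rfl
    · exact (hltK i h).le
    · exact (hnorm.le_iff_forall_le hKlim).mpr fun b hb => (hltK b hb).le
  have hω1 : (Cardinal.aleph 1).ord ≤ κ.ord := by
    rw [Cardinal.ord_le_ord, ← Cardinal.succ_aleph0]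
    exact Order.succ_le_of_lt hunc
  set ψ : ↥(Set.Iic (Cardinal.aleph 1).ord) → ↥(Set.Iic κ.ord) :=
    fun i => ⟨Ordinal.enumOrd D i.1, hleK i.1 (i.2.trans hω1)⟩ with hψdef
  have hψcont : Continuous ψ :=
    Continuous.subtype_mk (hcont.comp continuous_subtype_val) _
  have hmem : ∀ i : ↥(Set.Iic (Cardinal.aleph 1).ord),
      ψ i ∈ {x : ↥(Set.Iic κ.ord) | x.1 ∈ C ∨ x.1 = κ.ord} := by
    intro i
    rcases Ordinal.enumOrd_mem hDunbdd i.1 with h | h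
    · exact Or.inl h
    · exact Or.inr (le_antisymm (hleK i.1 (i.2.trans hω1)) h)
  have hFinj : Function.Injective (φ ∘ ψ) := by
    intro i j h
    have h1 : ψ i = ψ j := hinj (hmem i) (hmem j) h
    have h2 : Ordinal.enumOrd D i.1 = Ordinal.enumOrd D j.1 := congrArg Subtype.val h1
    exact Subtype.ext (Ordinal.enumOrd_injective hDunbdd h2)
  have hFcont : Continuous (φ ∘ ψ) := hφ.comp hψcont
  have hIic : Set.Iic (Cardinal.aleph 1).ord = Set.Icc 0 (Cardinal.aleph 1).ord := by
    ext x; simp [zero_le]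
  have hcomp : IsCompact (Set.Iic (Cardinal.aleph 1).ord) := hIic ▸ isCompact_Icc
  haveI : CompactSpace ↥(Set.Iic (Cardinal.aleph 1).ord) :=
    isCompact_iff_compactSpace.mp hcomp
  have hemb : Topology.IsClosedEmbedding (φ ∘ ψ) := hFcont.isClosedEmbedding hFinj
  exact ⟨Set.range (φ ∘ ψ),
    ⟨aleph1IicHomeo.trans (hemb.toIsEmbedding.toHomeomorph)⟩⟩
end

section
/- Let X be a compact Hausdorff space which is a retract of a Valdivia compact space, i.e. there exist a Valdivia compact space Y and continuous maps r : Y → X and g : X → Y with r ∘ g = id_X. Then X contains no cutting P-point. -/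
open Set Filter Topology


universe u

/-- A compact space is Valdivia compact if it embeds into some Tychonoff cube `[0,1]^κ`
in such a way that its image is the closure of the intersection of the image with the
Σ-product (the points of countable support). -/
def IsValdiviaCompact (X : Type u) [TopologicalSpace X] : Prop :=
  CompactSpace X ∧ T2Space X ∧
    ∃ (κ : Type u) (e : X → κ → ↥unitInterval), Topology.IsEmbedding e ∧
      Set.range e = closure (Set.range e ∩ {x | {a | x a ≠ 0}.Countable})

/-- `p` is a P-point in `Y` if `p` is not isolated and `p` is not in the closure of the
union of any sequence of closed sets avoiding `p`. -/
def IsPPoint {Y : Type*} [TopologicalSpace Y] (p : Y) : Prop :=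
  ¬ IsOpen ({p} : Set Y) ∧
    ∀ F : ℕ → Set Y, (∀ n, IsClosed (F n)) → (∀ n, p ∉ F n) →
      p ∉ closure (⋃ n, F n)

/-- `p` is a cutting P-point in `X` if `X = A ∪ B` with `A, B` closed, `A ∩ B = {p}`,
and `p` is a P-point both in `A` and in `B` (with their subspace topologies). -/
def IsCuttingPPoint {X : Type*} [TopologicalSpace X] (p : X) : Prop :=
  ∃ (A B : Set X), IsClosed A ∧ IsClosed B ∧ A ∪ B = Set.univ ∧ A ∩ B = {p} ∧
    ∃ (hpA : p ∈ A) (hpB : p ∈ B),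
      IsPPoint (⟨p, hpA⟩ : A) ∧ IsPPoint (⟨p, hpB⟩ : B)

lemma aux_countable_closed {κ : Type u} (Wfun : Finset (κ × ℚ × ℚ) → Bool → Set κ)
    (hW : ∀ b s, (Wfun b s).Countable) :
    ∃ C : Set κ, C.Countable ∧
      ∀ (b : Finset (κ × ℚ × ℚ)) (s : Bool), (Prod.fst '' (↑b : Set (κ × ℚ × ℚ))) ⊆ C → Wfun b s ⊆ C := by
  classical
  set step : Set κ → Set κ := fun C =>
    C ∪ ⋃ b ∈ {b : Finset (κ × ℚ × ℚ) | (Prod.fst '' (↑b : Set (κ × ℚ × ℚ))) ⊆ C},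
      (Wfun b true ∪ Wfun b false) with hstep
  have hsub : ∀ C, C ⊆ step C := fun C => Set.subset_union_left
  have hstep_cnt : ∀ C : Set κ, C.Countable → (step C).Countable := by
    intro C hC
    refine hC.union (Set.Countable.biUnion ?_ fun b _ => (hW b true).union (hW b false))
    have h1 : ({x : κ × ℚ × ℚ | x.1 ∈ C}).Countable := by
      have he : {x : κ × ℚ × ℚ | x.1 ∈ C} = C ×ˢ (Set.univ : Set (ℚ × ℚ)) := by
        ext x; simp [Set.mem_prod]
      rw [he]; exact hC.prod Set.countable_univ
    have h2 : {t : Set (κ × ℚ × ℚ) | t.Finite ∧ t ⊆ {x | x.1 ∈ C}}.Countable :=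
      Set.countable_setOf_finite_subset h1
    have h3 := h2.preimage (Finset.coe_injective (α := κ × ℚ × ℚ))
    refine h3.mono ?_
    intro b hb
    simp only [Set.mem_preimage, Set.mem_setOf_eq]
    refine ⟨b.finite_toSet, ?_⟩
    intro x hx
    exact hb ⟨x, hx, rfl⟩
  set Cn : ℕ → Set κ := fun n => Nat.rec (∅ : Set κ) (fun _ C => step C) n with hCn
  have hCnS : ∀ n, Cn (n+1) = step (Cn n) := fun n => rfl
  have hmono : Monotone Cn := by
    apply monotone_nat_of_le_succ
    intro n
    rw [hCnS]
    exact hsub _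
  have hcnt : ∀ n, (Cn n).Countable := by
    intro n
    induction n with
    | zero => exact Set.countable_empty
    | succ k ih => rw [hCnS]; exact hstep_cnt _ ih
  refine ⟨⋃ n, Cn n, Set.countable_iUnion hcnt, ?_⟩
  intro b s hb
  have hex : ∀ t : κ × ℚ × ℚ, t ∈ b → ∃ n, t.1 ∈ Cn n := by
    intro t ht
    have := hb ⟨t, ht, rfl⟩
    simpa using this
  choose nf hnf using hex
  set N : ℕ := b.attach.sup (fun z => nf z.1 z.2) with hN
  have hbN : (Prod.fst '' (↑b : Set (κ × ℚ × ℚ))) ⊆ Cn N := by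
    rintro a ⟨t, ht, rfl⟩
    have hle : nf t ht ≤ N := Finset.le_sup (f := fun z => nf z.1 z.2) (Finset.mem_attach _ ⟨t, ht⟩)
    exact hmono hle (hnf t ht)
  have hsubN : Wfun b s ⊆ Cn (N+1) := by
    rw [hCnS]
    intro x hx
    refine Set.subset_union_right ?_
    refine Set.mem_biUnion (show b ∈ _ from hbN) ?_
    cases s
    · exact Set.mem_union_right _ hx
    · exact Set.mem_union_left _ hx
  exact hsubN.trans (Set.subset_iUnion Cn (N+1))

/-- a retract of a Valdivia compact space contains no cutting P-point. -/
theorem no_cutting_ppoint_of_retract_of_valdivia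
    {X : Type u} [TopologicalSpace X] [CompactSpace X] [T2Space X]
    (h : ∃ (Y : Type u) (tY : TopologicalSpace Y), @IsValdiviaCompact Y tY ∧
      ∃ (r : Y → X) (g : X → Y), @Continuous Y X tY _ r ∧ @Continuous X Y _ tY g ∧
        r ∘ g = id) :
    ∀ p : X, ¬ IsCuttingPPoint p := by
  classical
  intro p hp
  obtain ⟨A, B, hAcl, hBcl, hABu, hABi, hpA, hpB, hPA, hPB⟩ := hp
  obtain ⟨Y, tY, hV, r, g, hrc, hgc, hrg⟩ := h
  obtain ⟨hYcomp, hYt2, κ, e, he, hSig⟩ := hV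
  have hrg' : ∀ x, r (g x) = x := fun x => congrFun hrg x
  -- the two open "sides"
  set U : Set X := A \ {p} with hUdef
  set V : Set X := B \ {p} with hVdef
  have hUB : U = Bᶜ := by
    ext x
    constructor
    · rintro ⟨hxA, hxp⟩ hxB
      exact hxp (show x ∈ ({p} : Set X) from hABi ▸ ⟨hxA, hxB⟩)
    · intro hxB
      have hxA : x ∈ A := by
        have : x ∈ A ∪ B := hABu ▸ Set.mem_univ x
        rcases this with h1 | h1
        · exact h1
        · exact absurd h1 hxB
      refine ⟨hxA, ?_⟩
      intro hxp
      exact hxB (by rwa [Set.mem_singleton_iff.mp hxp])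
  have hVA : V = Aᶜ := by
    ext x
    constructor
    · rintro ⟨hxB, hxp⟩ hxA
      exact hxp (show x ∈ ({p} : Set X) from hABi ▸ ⟨hxA, hxB⟩)
    · intro hxA
      have hxB : x ∈ B := by
        have : x ∈ A ∪ B := hABu ▸ Set.mem_univ x
        rcases this with h1 | h1
        · exact absurd h1 hxA
        · exact h1
      refine ⟨hxB, ?_⟩
      intro hxp
      exact hxA (by rwa [Set.mem_singleton_iff.mp hxp])
  have hUo : IsOpen U := hUB ▸ hBcl.isOpen_compl
  have hVo : IsOpen V := hVA ▸ hAcl.isOpen_compl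
  have hpU : p ∉ U := fun hmem => hmem.2 rfl
  -- p is in the closure of U (non-isolatedness in A)
  have hpclU : p ∈ closure U := by
    by_contra hcon
    apply hPA.1
    have hset : {(⟨p, hpA⟩ : A)} = (Subtype.val : A → X) ⁻¹' (closure U)ᶜ := by
      ext ⟨x, hxA⟩
      simp only [Set.mem_singleton_iff, Set.mem_preimage, Set.mem_compl_iff, Subtype.mk.injEq]
      constructor
      · rintro rfl; exact hcon
      · intro hx
        by_contra hne
        exact hx (subset_closure ⟨hxA, fun hs => hne (Set.mem_singleton_iff.mp hs)⟩)
    rw [hset]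
    exact (isClosed_closure.isOpen_compl).preimage continuous_subtype_val
  have hpclV : p ∈ closure V := by
    by_contra hcon
    apply hPB.1
    have hset : {(⟨p, hpB⟩ : B)} = (Subtype.val : B → X) ⁻¹' (closure V)ᶜ := by
      ext ⟨x, hxB⟩
      simp only [Set.mem_singleton_iff, Set.mem_preimage, Set.mem_compl_iff, Subtype.mk.injEq]
      constructor
      · rintro rfl; exact hcon
      · intro hx
        by_contra hne
        exact hx (subset_closure ⟨hxB, fun hs => hne (Set.mem_singleton_iff.mp hs)⟩)
    rw [hset]
    exact (isClosed_closure.isOpen_compl).preimage continuous_subtype_val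
  -- sides upstairs
  set Uhat : Set Y := r ⁻¹' U with hUhat
  set Vhat : Set Y := r ⁻¹' V with hVhat
  set Side : Bool → Set Y := fun s => if s then Uhat else Vhat with hSide
  have hSideo : ∀ s, IsOpen (Side s) := by
    intro s
    cases s
    · exact hVo.preimage hrc
    · exact hUo.preimage hrc
  -- boxes
  set Box : Finset (κ × ℚ × ℚ) → Set (κ → ↥unitInterval) := fun b =>
    {x | ∀ t ∈ b, ((t.2.1 : ℝ) < (x t.1 : ℝ)) ∧ ((x t.1 : ℝ) < (t.2.2 : ℝ))} with hBox
  have hBoxOpen : ∀ b, IsOpen (Box b) := by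
    intro b
    have hEq : Box b = ⋂ t ∈ b,
        ((fun x : κ → ↥unitInterval => (x t.1 : ℝ)) ⁻¹' Set.Ioo (t.2.1 : ℝ) (t.2.2 : ℝ)) := by
      ext x
      simp [hBox, Set.mem_iInter, Set.mem_Ioo]
    rw [hEq]
    exact isOpen_biInter_finset fun t _ =>
      isOpen_Ioo.preimage (continuous_subtype_val.comp (continuous_apply t.1))
  -- density of countable-support points in open sets of Y
  have hdense : ∀ (S : Set Y), IsOpen S → S.Nonempty →
      ∃ d ∈ S, {a | e d a ≠ 0}.Countable := by
    intro S hS hSne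
    obtain ⟨O', hO', hpre⟩ := he.toIsInducing.isOpen_iff.mp hS
    obtain ⟨y, hy⟩ := hSne
    have hyO : e y ∈ O' := by rw [← hpre] at hy; exact hy
    have hycl : e y ∈ closure (Set.range e ∩ {x | {a | x a ≠ 0}.Countable}) := by
      rw [← hSig]; exact Set.mem_range_self y
    obtain ⟨z, hzO, ⟨⟨d, rfl⟩, hzc⟩⟩ := mem_closure_iff.mp hycl O' hO' hyO
    exact ⟨d, by rw [← hpre]; exact hzO, hzc⟩
  -- witnesses
  have hwit : ∀ (b : Finset (κ × ℚ × ℚ)) (s : Bool),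
      ∃ d : Y, (∃ y ∈ Side s, e y ∈ Box b) →
        (d ∈ Side s ∧ e d ∈ Box b ∧ {a | e d a ≠ 0}.Countable) := by
    intro b s
    by_cases hne : ∃ y ∈ Side s, e y ∈ Box b
    · obtain ⟨y, hyS, hyB⟩ := hne
      obtain ⟨d, ⟨hdS, hdB⟩, hcnt⟩ := hdense (Side s ∩ e ⁻¹' Box b)
        ((hSideo s).inter ((hBoxOpen b).preimage he.continuous)) ⟨y, hyS, hyB⟩
      exact ⟨d, fun _ => ⟨hdS, hdB, hcnt⟩⟩
    · exact ⟨g p, fun hcon => absurd hcon hne⟩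
  choose wit hwitspec using hwit
  set Wfun : Finset (κ × ℚ × ℚ) → Bool → Set κ := fun b s =>
    if (∃ y ∈ Side s, e y ∈ Box b) then {a | e (wit b s) a ≠ 0} else ∅ with hWfun
  have hWcnt : ∀ b s, (Wfun b s).Countable := by
    intro b s
    by_cases hne : ∃ y ∈ Side s, e y ∈ Box b
    · rw [hWfun]; simp only [if_pos hne]; exact (hwitspec b s hne).2.2
    · rw [hWfun]; simp only [if_neg hne]; exact Set.countable_empty
  obtain ⟨C, hCcnt, hCcl⟩ := aux_countable_closed Wfun hWcnt
  -- the closure property we need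
  have hCP : ∀ (s : Bool) (b : Finset (κ × ℚ × ℚ)),
      (Prod.fst '' (↑b : Set (κ × ℚ × ℚ))) ⊆ C → (∃ y ∈ Side s, e y ∈ Box b) →
      ∃ d ∈ Side s, e d ∈ Box b ∧ {a | e d a ≠ 0} ⊆ C := by
    intro s b hb hne
    obtain ⟨hdS, hdB, _⟩ := hwitspec b s hne
    refine ⟨wit b s, hdS, hdB, ?_⟩
    have : Wfun b s = {a | e (wit b s) a ≠ 0} := by rw [hWfun]; simp only [if_pos hne]
    exact this ▸ hCcl b s hb
  -- the truncation map
  set piC : (κ → ↥unitInterval) → (κ → ↥unitInterval) := fun x a => if a ∈ C then x a else 0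
    with hpiC
  have hpiCc : Continuous piC := by
    refine continuous_pi fun a => ?_
    by_cases hm : a ∈ C
    · have : (fun x : κ → ↥unitInterval => piC x a) = fun x => x a := by
        funext x; rw [hpiC]; simp [if_pos hm]
      rw [this]; exact continuous_apply a
    · have : (fun x : κ → ↥unitInterval => piC x a) = fun _ => (0 : ↥unitInterval) := by
        funext x; rw [hpiC]; simp [if_neg hm]
      rw [this]; exact continuous_const
  -- small-support parts of the sides
  set T : Bool → Set Y := fun s => {d | d ∈ Side s ∧ {a | e d a ≠ 0} ⊆ C} with hT
  -- KEY LEMMA A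
  have lemA : ∀ (s : Bool), ∀ y ∈ Side s, piC (e y) ∈ closure (e '' T s) := by
    intro s y hy
    rw [mem_closure_iff]
    intro O hO hmem
    obtain ⟨F, u, hu, hsubO⟩ := isOpen_pi_iff.mp hO _ hmem
    have hrat : ∀ a, a ∈ F → a ∈ C → ∃ q1 q2 : ℚ,
        ((q1 : ℝ) < (e y a : ℝ)) ∧ ((e y a : ℝ) < (q2 : ℝ)) ∧
        ∀ v : ↥unitInterval, (q1 : ℝ) < (v : ℝ) → (v : ℝ) < (q2 : ℝ) → v ∈ u a := by
      intro a haF haC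
      have hya : e y a ∈ u a := by
        have h2 := (hu a haF).2
        simpa [hpiC, if_pos haC] using h2
      obtain ⟨ε, hε, hball⟩ := Metric.isOpen_iff.mp (hu a haF).1 _ hya
      obtain ⟨q1, hq11, hq12⟩ := exists_rat_btwn (show (e y a : ℝ) - ε < (e y a : ℝ) by linarith)
      obtain ⟨q2, hq21, hq22⟩ := exists_rat_btwn (show (e y a : ℝ) < (e y a : ℝ) + ε by linarith)
      refine ⟨q1, q2, hq12, hq21, fun v h1 h2 => hball ?_⟩
      rw [Metric.mem_ball, Subtype.dist_eq, Real.dist_eq, abs_lt]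
      constructor <;> linarith
    choose q1 q2 hq1 hq2 hq3 using hrat
    set b : Finset (κ × ℚ × ℚ) := (F.filter (fun a => a ∈ C)).attach.image
      (fun z => (z.1, q1 z.1 (Finset.mem_filter.mp z.2).1 (Finset.mem_filter.mp z.2).2,
                       q2 z.1 (Finset.mem_filter.mp z.2).1 (Finset.mem_filter.mp z.2).2)) with hb
    have hbmem : ∀ a (haF : a ∈ F) (haC : a ∈ C),
        (a, q1 a haF haC, q2 a haF haC) ∈ b := by
      intro a haF haC
      rw [hb]
      exact Finset.mem_image.mpr ⟨⟨a, Finset.mem_filter.mpr ⟨haF, haC⟩⟩, Finset.mem_attach _ _, rfl⟩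
    have hbC : Prod.fst '' (↑b : Set (κ × ℚ × ℚ)) ⊆ C := by
      rintro _ ⟨t, ht, rfl⟩
      rw [hb] at ht
      simp only [Finset.mem_coe] at ht
      obtain ⟨z, _, rfl⟩ := Finset.mem_image.mp ht
      exact (Finset.mem_filter.mp z.2).2
    have hyBox : e y ∈ Box b := by
      intro t ht
      rw [hb] at ht
      obtain ⟨z, _, rfl⟩ := Finset.mem_image.mp ht
      exact ⟨hq1 _ _ _, hq2 _ _ _⟩
    obtain ⟨d, hdS, hdB, hdC⟩ := hCP s b hbC ⟨y, hy, hyBox⟩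
    refine ⟨e d, hsubO ?_, Set.mem_image_of_mem e ⟨hdS, hdC⟩⟩
    rw [Set.mem_pi]
    intro a haF
    by_cases haC : a ∈ C
    · have hbd := hdB _ (hbmem a haF haC)
      exact hq3 a haF haC _ hbd.1 hbd.2
    · have h0 : e d a = 0 := by
        by_contra hne
        exact haC (hdC hne)
      have h1 : piC (e y) a ∈ u a := (hu a haF).2
      rw [h0]
      simpa [hpiC, if_neg haC] using h1
  -- the central point
  set s0 : κ → ↥unitInterval := piC (e (g p)) with hs0def
  have hgS : ∀ s : Bool, g p ∈ closure (Side s) := by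
    intro s
    have h1 : p ∈ closure (if s then U else V) := by
      cases s
      · exact hpclV
      · exact hpclU
    have h2 : g p ∈ closure (g '' (if s then U else V)) :=
      image_closure_subset_closure_image hgc ⟨p, h1, rfl⟩
    refine closure_mono ?_ h2
    rintro _ ⟨w, hw, rfl⟩
    cases s
    · show g w ∈ Vhat
      rw [hVhat]
      simpa [hrg' w] using hw
    · show g w ∈ Uhat
      rw [hUhat]
      simpa [hrg' w] using hw
  have hs0 : ∀ s : Bool, s0 ∈ closure (e '' T s) := by
    intro s
    have h1 : e (g p) ∈ closure (e '' Side s) :=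
      image_closure_subset_closure_image he.continuous ⟨g p, hgS s, rfl⟩
    have h2 : piC (e (g p)) ∈ closure (piC '' (e '' Side s)) :=
      image_closure_subset_closure_image hpiCc ⟨e (g p), h1, rfl⟩
    have h3 : piC '' (e '' Side s) ⊆ closure (e '' T s) := by
      rintro _ ⟨_, ⟨y, hy, rfl⟩, rfl⟩
      exact lemA s y hy
    have h4 := closure_mono h3 h2
    rwa [closure_closure] at h4
  -- extract the point y0
  haveI : CompactSpace Y := hYcomp
  have hclT_sub : ∀ s : Bool, closure (e '' T s) ⊆ e '' closure (T s) := by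
    intro s
    refine closure_minimal (Set.image_mono (f := e) subset_closure) ?_
    exact (isClosed_closure.isCompact.image he.continuous).isClosed
  obtain ⟨y0, hy0T, hy0e⟩ := hclT_sub true (hs0 true)
  obtain ⟨y1, hy1T, hy1e⟩ := hclT_sub false (hs0 false)
  have hy01 : y1 = y0 := he.injective (hy1e.trans hy0e.symm)
  -- r y0 = p
  have hrT : ∀ s : Bool, r '' T s ⊆ (if s then U else V) := by
    intro s
    rintro _ ⟨d, ⟨hdS, _⟩, rfl⟩
    cases s
    · exact hdS
    · exact hdS
  have hry : r y0 = p := by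
    have h1 : r y0 ∈ closure U := by
      have hm : r y0 ∈ r '' closure (T true) := ⟨y0, hy0T, rfl⟩
      have h2 := image_closure_subset_closure_image hrc hm
      exact closure_mono (by simpa using hrT true) h2
    have h1' : r y0 ∈ closure V := by
      rw [← hy01]
      have hm : r y1 ∈ r '' closure (T false) := ⟨y1, hy1T, rfl⟩
      have h2 := image_closure_subset_closure_image hrc hm
      exact closure_mono (by simpa using hrT false) h2
    have hmem : r y0 ∈ A ∩ B :=
      ⟨closure_minimal Set.diff_subset hAcl h1, closure_minimal Set.diff_subset hBcl h1'⟩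
    exact Set.mem_singleton_iff.mp (hABi ▸ hmem)
  -- now extract a sequence in U converging to p
  have hfinal : ∃ x : ℕ → X, (∀ n, x n ∈ U) ∧ Tendsto x atTop (𝓝 p) := by
    by_cases hCne : C.Nonempty
    · obtain ⟨c, hc⟩ := Set.Countable.exists_eq_range hCcnt hCne
      have hWn : ∀ n : ℕ, ∃ d, d ∈ T true ∧
          ∀ i ∈ Finset.range (n+1), dist (e d (c i)) (s0 (c i)) < 1/(n+1) := by
        intro n
        set Wn : Set (κ → ↥unitInterval) :=
          ⋂ i ∈ Finset.range (n+1),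
            ((fun x : κ → ↥unitInterval => x (c i)) ⁻¹' Metric.ball (s0 (c i)) (1/(n+1)))
          with hWndef
        have hWno : IsOpen Wn := isOpen_biInter_finset fun i _ =>
          Metric.isOpen_ball.preimage (continuous_apply (c i))
        have hWnm : s0 ∈ Wn := by
          rw [hWndef]
          refine Set.mem_iInter₂.mpr fun i _ => ?_
          simp only [Set.mem_preimage, Metric.mem_ball, dist_self]
          positivity
        obtain ⟨z, hzW, hzT⟩ := mem_closure_iff.mp (hs0 true) Wn hWno hWnm
        obtain ⟨d, hdT, rfl⟩ := hzT
        refine ⟨d, hdT, ?_⟩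
        intro i hi
        have hm := Set.mem_iInter₂.mp (hWndef ▸ hzW) i hi
        simpa [Metric.mem_ball] using hm
      choose t ht hdist using hWn
      have htend : Tendsto (fun n => e (t n)) atTop (𝓝 (e y0)) := by
        rw [tendsto_pi_nhds]
        intro a
        by_cases haC : a ∈ C
        · have hrange : a ∈ Set.range c := by rwa [← hc]
          obtain ⟨i, rfl⟩ := hrange
          rw [Metric.tendsto_atTop]
          intro ε hε
          obtain ⟨N, hN⟩ := exists_nat_one_div_lt hε
          refine ⟨max i N, fun n hn => ?_⟩
          have h1 : dist (e (t n) (c i)) (s0 (c i)) < 1/(n+1) :=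
            hdist n i (Finset.mem_range.mpr (Nat.lt_succ_of_le (le_trans (le_max_left i N) hn)))
          have h2 : (1:ℝ)/(n+1) ≤ 1/(N+1) := by
            apply one_div_le_one_div_of_le
            · positivity
            · have : (N : ℝ) ≤ (n : ℝ) := by
                exact_mod_cast le_trans (le_max_right i N) hn
              linarith
          have h3 : e y0 (c i) = s0 (c i) := by rw [hy0e]
          rw [h3]
          calc dist (e (t n) (c i)) (s0 (c i)) < 1/(n+1) := h1
            _ ≤ 1/(N+1) := h2
            _ < ε := hN
        · have h0 : ∀ n, e (t n) a = 0 := by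
            intro n
            by_contra hne
            exact haC ((ht n).2 hne)
          have h1 : e y0 a = 0 := by
            rw [hy0e, hs0def]
            simp [hpiC, if_neg haC]
          have heq : (fun n => e (t n) a) = fun _ => (0 : ↥unitInterval) := funext h0
          rw [heq, h1]
          exact tendsto_const_nhds
      have htY : Tendsto t atTop (𝓝 y0) := by
        rw [he.toIsInducing.tendsto_nhds_iff]
        exact htend
      refine ⟨fun n => r (t n), fun n => (ht n).1, ?_⟩
      have hcomp := (hrc.tendsto y0).comp htY
      rw [hry] at hcomp
      exact hcomp
    · exfalso
      have hCe : C = ∅ := Set.not_nonempty_iff_eq_empty.mp hCne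
      have hTsub : e '' T true ⊆ {fun _ => (0 : ↥unitInterval)} := by
        rintro _ ⟨d, ⟨_, hsupp⟩, rfl⟩
        have hall : ∀ a, e d a = 0 := by
          intro a
          by_contra hne
          have hmem := hsupp hne
          rw [hCe] at hmem
          exact hmem
        simp only [Set.mem_singleton_iff]
        funext a
        exact hall a
      have h1 : s0 ∈ ({fun _ => (0:↥unitInterval)} : Set _) :=
        closure_minimal hTsub isClosed_singleton (hs0 true)
      have h2 : (e '' T true).Nonempty := by
        by_contra hcon
        rw [Set.not_nonempty_iff_eq_empty] at hcon
        have hmem := hs0 true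
        rw [hcon, closure_empty] at hmem
        exact hmem
      obtain ⟨z, d, hdT, hde⟩ := h2
      have hz0 : e d = fun _ => (0:↥unitInterval) :=
        Set.mem_singleton_iff.mp (hTsub ⟨d, hdT, rfl⟩)
      have hds0 : e d = s0 := by
        rw [hz0]
        exact (Set.mem_singleton_iff.mp h1).symm
      have hdy0 : d = y0 := he.injective (hds0.trans hy0e.symm)
      have hru : r y0 ∈ U := by
        rw [← hdy0]
        exact hdT.1
      rw [hry] at hru
      exact hpU hru
  obtain ⟨x, hxU, hxp⟩ := hfinal
  -- contradiction with the P-point property of p in A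
  have hxA : ∀ n, x n ∈ A := fun n => (hxU n).1
  set Fs : ℕ → Set ↥A := fun n => {⟨x n, hxA n⟩} with hFs
  have hnot := hPA.2 Fs (fun n => isClosed_singleton) (by
    intro n hmem
    rw [hFs] at hmem
    have : p = x n := congrArg Subtype.val (Set.mem_singleton_iff.mp hmem)
    exact (hxU n).2 (Set.mem_singleton_iff.mpr this.symm))
  apply hnot
  have htsub : Tendsto (fun n => (⟨x n, hxA n⟩ : ↥A)) atTop (𝓝 ⟨p, hpA⟩) :=
    tendsto_subtype_rng.mpr hxp
  exact mem_closure_of_tendsto htsub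
    (Filter.Eventually.of_forall fun n => Set.mem_iUnion.mpr ⟨n, rfl⟩)
end

section
/- Let X be a compact linearly ordered topological space (a linear order with its order topology) and p ∈ X. Then p is a cutting P-point of X if and only if p is a P-point both of the closed ray (←, p] = {x ∈ X : x ≤ p} and of the closed ray [p, →) = {x ∈ X : p ≤ x} (each taken with the subspace topology). -/
open Set

/-- The "closure part" of the P-point property transfers from a closed cover `A ∪ B = univ`
to any closed set `C` containing `p`. -/
lemma ppoint_closure_transfer {X : Type*} [TopologicalSpace X] {p : X} {A B C : Set X}
    (hUnion : A ∪ B = Set.univ) (hpA : p ∈ A) (hpB : p ∈ B)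
    (hC : IsClosed C) (hpC : p ∈ C)
    (h1 : ∀ F : ℕ → Set A, (∀ n, IsClosed (F n)) → (∀ n, (⟨p, hpA⟩ : A) ∉ F n) →
      (⟨p, hpA⟩ : A) ∉ closure (⋃ n, F n))
    (h2 : ∀ F : ℕ → Set B, (∀ n, IsClosed (F n)) → (∀ n, (⟨p, hpB⟩ : B) ∉ F n) →
      (⟨p, hpB⟩ : B) ∉ closure (⋃ n, F n)) :
    ∀ F : ℕ → Set C, (∀ n, IsClosed (F n)) → (∀ n, (⟨p, hpC⟩ : C) ∉ F n) →
      (⟨p, hpC⟩ : C) ∉ closure (⋃ n, F n) := by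
  intro F hFc hFp
  set S : ℕ → Set X := fun n => Subtype.val '' F n with hSdef
  have hSc : ∀ n, IsClosed (S n) := fun n =>
    hC.isClosedEmbedding_subtypeVal.isClosedMap _ (hFc n)
  have hSp : ∀ n, p ∉ S n := by
    intro n hmem
    obtain ⟨x, hx, hxval⟩ := hmem
    exact hFp n ((Subtype.ext hxval : x = ⟨p, hpC⟩) ▸ hx)
  have key : ∀ (D : Set X) (hpD : p ∈ D),
      (∀ F : ℕ → Set D, (∀ n, IsClosed (F n)) → (∀ n, (⟨p, hpD⟩ : D) ∉ F n) →
        (⟨p, hpD⟩ : D) ∉ closure (⋃ n, F n)) →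
      p ∉ closure ((⋃ n, S n) ∩ D) := by
    intro D hpD hD
    have h := hD (fun n => Subtype.val ⁻¹' S n)
      (fun n => (hSc n).preimage continuous_subtype_val)
      (fun n hmem => hSp n hmem)
    rw [closure_subtype] at h
    simp only [Set.image_iUnion, Set.image_preimage_eq_inter_range, Subtype.range_val,
      ← Set.iUnion_inter] at h
    exact h
  have hApart := key A hpA h1
  have hBpart := key B hpB h2
  rw [closure_subtype]
  have : (Subtype.val '' ⋃ n, F n : Set X) = ⋃ n, S n := Set.image_iUnion
  rw [this]
  have hsplit : (⋃ n, S n) = ((⋃ n, S n) ∩ A) ∪ ((⋃ n, S n) ∩ B) := by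
    rw [← Set.inter_union_distrib_left, hUnion, Set.inter_univ]
  rw [hsplit, closure_union]
  intro hmem
  rcases hmem with h | h
  · exact hApart h
  · exact hBpart h

/-- The hard part: in a compact LOTS, if `p` is a cutting point witnessed by `A, B`, with
`p` a P-point in both, then `p` is not isolated in `Iic p`. -/
lemma not_isolated_aux {X : Type*} [LinearOrder X] [TopologicalSpace X] [OrderTopology X]
    [CompactSpace X] {p : X} {A B : Set X} (hA : IsClosed A) (hB : IsClosed B)
    (hInter : A ∩ B = {p}) (hpA : p ∈ A) (hpB : p ∈ B)
    (hPA : IsPPoint (⟨p, hpA⟩ : A)) (hPB : IsPPoint (⟨p, hpB⟩ : B)) :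
    ¬ IsOpen ({⟨p, Set.self_mem_Iic⟩} : Set (Set.Iic p)) := by
  intro hiso
  rw [isOpen_induced_iff] at hiso
  obtain ⟨U, hUopen, hUeq⟩ := hiso
  have hpU : p ∈ U := by
    have : (⟨p, self_mem_Iic⟩ : Iic p) ∈ (Subtype.val ⁻¹' U) := by rw [hUeq]; rfl
    exact this
  have hUIic : ∀ x, x ≤ p → x ∈ U → x = p := by
    intro x hx hxU
    have h : (⟨x, hx⟩ : Iic p) ∈ Subtype.val ⁻¹' U := hxU
    rw [hUeq] at h
    exact Subtype.mk_eq_mk.mp h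
  -- from non-isolation in a closed piece, every open nbhd of p contains a point of the
  -- piece strictly above p
  have keygen : ∀ (C : Set X) (hpC : p ∈ C), ¬ IsOpen ({⟨p, hpC⟩} : Set C) →
      ∀ V : Set X, IsOpen V → p ∈ V → ∃ a, a ∈ C ∧ p < a ∧ a ∈ V := by
    intro C hpC hni V hV hpV
    by_contra hcon
    push_neg at hcon
    apply hni
    rw [isOpen_induced_iff]
    refine ⟨V ∩ U, hV.inter hUopen, ?_⟩
    ext ⟨x, hxC⟩
    simp only [Set.mem_preimage, Set.mem_inter_iff, Set.mem_singleton_iff,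
      Subtype.mk_eq_mk]
    constructor
    · rintro ⟨hxV, hxU⟩
      rcases le_or_gt x p with hle | hlt
      · exact hUIic x hle hxU
      · exact absurd hxV (hcon x hxC hlt)
    · rintro rfl
      exact ⟨hpV, hpU⟩
  have hA' := keygen A hpA hPA.1
  have hB' := keygen B hpB hPB.1
  have hTA : ∀ c : X, ∃ a, a ∈ A ∧ p < a ∧ (p < c → a < c) := by
    intro c
    by_cases hc : p < c
    · obtain ⟨a, ha, hpa, hav⟩ := hA' (Iio c) isOpen_Iio hc
      exact ⟨a, ha, hpa, fun _ => hav⟩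
    · obtain ⟨a, ha, hpa, -⟩ := hA' univ isOpen_univ (mem_univ p)
      exact ⟨a, ha, hpa, fun h => absurd h hc⟩
  have hTB : ∀ c : X, ∃ b, b ∈ B ∧ p < b ∧ (p < c → b < c) := by
    intro c
    by_cases hc : p < c
    · obtain ⟨b, hb, hpb, hbv⟩ := hB' (Iio c) isOpen_Iio hc
      exact ⟨b, hb, hpb, fun _ => hbv⟩
    · obtain ⟨b, hb, hpb, -⟩ := hB' univ isOpen_univ (mem_univ p)
      exact ⟨b, hb, hpb, fun h => absurd h hc⟩
  choose fA hfA1 hfA2 hfA3 using hTA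
  choose fB hfB1 hfB2 hfB3 using hTB
  -- interleaved decreasing sequences
  set g : ℕ → X × X :=
    fun n => Nat.rec (fA p, fB (fA p)) (fun _ q => (fA q.2, fB (fA q.2))) n with hgdef
  have hg0 : g 0 = (fA p, fB (fA p)) := rfl
  have hgs : ∀ n, g (n + 1) = (fA (g n).2, fB (fA (g n).2)) := fun n => rfl
  set a : ℕ → X := fun n => (g n).1 with hadef
  set b : ℕ → X := fun n => (g n).2 with hbdef
  have inv : ∀ n, a n ∈ A ∧ b n ∈ B ∧ p < a n ∧ p < b n ∧ b n < a n := by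
    intro n
    induction n with
    | zero =>
      exact ⟨hfA1 p, hfB1 _, hfA2 p, hfB2 _, hfB3 _ (hfA2 p)⟩
    | succ n ih =>
      have h1 : a (n + 1) = fA (b n) := congrArg Prod.fst (hgs n)
      have h2 : b (n + 1) = fB (fA (b n)) := congrArg Prod.snd (hgs n)
      rw [h1, h2]
      exact ⟨hfA1 _, hfB1 _, hfA2 _, hfB2 _, hfB3 _ (hfA2 _)⟩
  have hlink : ∀ n, a (n + 1) < b n := by
    intro n
    have h1 : a (n + 1) = fA (b n) := congrArg Prod.fst (hgs n)
    rw [h1]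
    exact hfA3 _ (inv n).2.2.2.1
  -- least elements of the closures
  obtain ⟨qa, hqa⟩ := (isClosed_closure (s := range a)).isCompact.exists_isLeast
    ⟨a 0, subset_closure ⟨0, rfl⟩⟩
  obtain ⟨qb, hqb⟩ := (isClosed_closure (s := range b)).isCompact.exists_isLeast
    ⟨b 0, subset_closure ⟨0, rfl⟩⟩
  have hqaA : qa ∈ A := by
    have hsub : closure (range a) ⊆ A := by
      rw [← hA.closure_eq]
      exact closure_mono (range_subset_iff.mpr fun n => (inv n).1)
    exact hsub hqa.1
  have hqbB : qb ∈ B := by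
    have hsub : closure (range b) ⊆ B := by
      rw [← hB.closure_eq]
      exact closure_mono (range_subset_iff.mpr fun n => (inv n).2.1)
    exact hsub hqb.1
  have hqalb : qa ∈ lowerBounds (range b) := by
    rintro x ⟨n, rfl⟩
    exact le_of_lt (lt_of_le_of_lt (hqa.2 (subset_closure ⟨n + 1, rfl⟩)) (hlink n))
  have hqbla : qb ∈ lowerBounds (range a) := by
    rintro x ⟨n, rfl⟩
    exact le_of_lt (lt_of_le_of_lt (hqb.2 (subset_closure ⟨n, rfl⟩)) (inv n).2.2.2.2)
  have hle1 : qa ≤ qb := by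
    rw [← lowerBounds_closure] at hqalb
    exact hqalb hqb.1
  have hle2 : qb ≤ qa := by
    rw [← lowerBounds_closure] at hqbla
    exact hqbla hqa.1
  have hqab : qa = qb := le_antisymm hle1 hle2
  have hqap : qa = p := by
    have : qa ∈ A ∩ B := ⟨hqaA, hqab ▸ hqbB⟩
    rw [hInter] at this
    exact this
  have hpcl : p ∈ closure (range a) := hqap ▸ hqa.1
  -- contradiction with the P-point property of p in A
  refine hPA.2 (fun n => Subtype.val ⁻¹' {a n})
    (fun n => isClosed_singleton.preimage continuous_subtype_val)
    (fun n hmem => absurd (Set.mem_singleton_iff.mp hmem).symm (ne_of_gt (inv n).2.2.1))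
    ?_
  rw [closure_subtype]
  have hsing : ∀ n, ({a n} : Set X) ∩ A = {a n} :=
    fun n => Set.inter_eq_self_of_subset_left (Set.singleton_subset_iff.mpr (inv n).1)
  simp only [Set.image_iUnion, Set.image_preimage_eq_inter_range, Subtype.range_val,
    hsing, Set.iUnion_singleton_eq_range]
  exact hpcl

/-- in a compact linearly ordered topological space `X`, a point `p` is a
cutting P-point if and only if `p` is a P-point of both closed rays `(←, p]` and
`[p, →)` with their subspace topologies. -/
theorem cutting_ppoint_iff_ppoint_rays
    {X : Type*} [LinearOrder X] [TopologicalSpace X] [OrderTopology X] [CompactSpace X]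
    (p : X) :
    IsCuttingPPoint p ↔
      IsPPoint (⟨p, Set.self_mem_Iic⟩ : Set.Iic p) ∧
      IsPPoint (⟨p, Set.self_mem_Ici⟩ : Set.Ici p) := by
  constructor
  · rintro ⟨A, B, hA, hB, hUnion, hInter, hpA, hpB, hPA, hPB⟩
    have hcomp : CompactSpace Xᵒᵈ := ⟨(CompactSpace.isCompact_univ : IsCompact (Set.univ : Set X))⟩
    constructor
    · exact ⟨not_isolated_aux hA hB hInter hpA hpB hPA hPB,
        ppoint_closure_transfer hUnion hpA hpB isClosed_Iic self_mem_Iic hPA.2 hPB.2⟩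
    · refine ⟨?_, ppoint_closure_transfer hUnion hpA hpB isClosed_Ici self_mem_Ici hPA.2 hPB.2⟩
      exact not_isolated_aux (X := Xᵒᵈ) (p := OrderDual.toDual p) hA hB hInter hpA hpB hPA hPB
  · rintro ⟨h1, h2⟩
    exact ⟨Iic p, Ici p, isClosed_Iic, isClosed_Ici, Iic_union_Ici,
      by rw [Iic_inter_Ici, Icc_self], self_mem_Iic, self_mem_Ici, h1, h2⟩
end

section
/- Let K be a compact linearly ordered topological space and let L = K ×_lex {0,1} be the lexicographic product of K with the two-element chain, with its order topology. Then L is a compact linearly ordered topological space with no cutting P-points (indeed, every point of L is isolated from at least one side), the first-coordinate projection f : L → K is a continuous order-preserving surjection each of whose fibers has exactly two points, and if K is scattered then L is scattered. -/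
universe u

/-- A linearly ordered set is scattered if it contains no copy of the rationals,
i.e. there is no strictly monotone map from `ℚ` into it. -/
def IsScatteredOrder (α : Type u) [LinearOrder α] : Prop :=
  ¬ ∃ f : ℚ → α, StrictMono f

/-- The lexicographic product `K ×ₗ {0,1}` carries its order topology. -/
noncomputable instance lexTwoTopology (K : Type u) [LinearOrder K] :
    TopologicalSpace (K ×ₗ Bool) := Preorder.topology _

open Set Filter Topology

section Aux

variable {α : Type*} [LinearOrder α] [TopologicalSpace α] [OrderTopology α] [CompactSpace α]

/-- Core lemma: in a compact LOTS, a point isolated from the left is not a cutting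
P-point. -/
lemma aux_no_cutting_left (p : α) (hp : IsMin p ∨ ∃ q, q ⋖ p) : ¬ IsCuttingPPoint p := by
  rintro ⟨A, B, hA, hB, hABu, hABi, hpA, hpB, hPA, hPB⟩
  -- Step A : neighborhoods contained in [p, ∞) resp. [p, c)
  have hUinf : ∃ U : Set α, IsOpen U ∧ p ∈ U ∧ U ⊆ Ici p := by
    rcases hp with hmin | ⟨q, hq⟩
    · exact ⟨univ, isOpen_univ, mem_univ _, fun x _ => hmin.isBot x⟩
    · exact ⟨Ioi q, isOpen_Ioi, hq.1, fun x hx => not_lt.1 (hq.2 hx)⟩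
  have hUc : ∀ c, p < c → ∃ U : Set α, IsOpen U ∧ p ∈ U ∧ U ⊆ Ico p c := by
    intro c hc
    obtain ⟨U, hUo, hpU, hUs⟩ := hUinf
    exact ⟨U ∩ Iio c, hUo.inter isOpen_Iio, ⟨hpU, hc⟩,
      fun x hx => ⟨hUs hx.1, hx.2⟩⟩
  -- Step B : non-isolation gives points ≠ p in every neighborhood
  have nonisol : ∀ (C : Set α) (hpC : p ∈ C), ¬ IsOpen ({(⟨p, hpC⟩ : C)} : Set C) →
      ∀ U : Set α, IsOpen U → p ∈ U → ∃ x, x ∈ C ∧ x ∈ U ∧ x ≠ p := by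
    intro C hpC hiso U hUo hpU
    by_contra h
    push_neg at h
    apply hiso
    have : ({(⟨p, hpC⟩ : C)} : Set C) = Subtype.val ⁻¹' U := by
      ext ⟨x, hx⟩
      simp only [Set.mem_singleton_iff, Set.mem_preimage]
      constructor
      · intro hxe
        have : x = p := congrArg Subtype.val hxe
        rw [this]; exact hpU
      · intro hxU
        exact Subtype.ext (h x hx hxU)
    rw [this]
    exact hUo.preimage continuous_subtype_val
  have hAx : ∀ c, p < c → ∃ a, a ∈ A ∧ p < a ∧ a < c := by
    intro c hc
    obtain ⟨U, hUo, hpU, hUs⟩ := hUc c hc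
    obtain ⟨x, hxA, hxU, hxne⟩ := nonisol A hpA hPA.1 U hUo hpU
    exact ⟨x, hxA, lt_of_le_of_ne (hUs hxU).1 (Ne.symm hxne), (hUs hxU).2⟩
  have hBx : ∀ c, p < c → ∃ b, b ∈ B ∧ p < b ∧ b < c := by
    intro c hc
    obtain ⟨U, hUo, hpU, hUs⟩ := hUc c hc
    obtain ⟨x, hxB, hxU, hxne⟩ := nonisol B hpB hPB.1 U hUo hpU
    exact ⟨x, hxB, lt_of_le_of_ne (hUs hxU).1 (Ne.symm hxne), (hUs hxU).2⟩
  have hex : ∃ c, p < c := by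
    by_contra h
    push_neg at h
    obtain ⟨U, hUo, hpU, hUs⟩ := hUinf
    obtain ⟨x, _, hxU, hxne⟩ := nonisol A hpA hPA.1 U hUo hpU
    exact hxne (le_antisymm (h x) (hUs hxU))
  -- Step C : interleaved sequences
  have hAx' : ∀ c : α, ∃ a, p < c → a ∈ A ∧ p < a ∧ a < c := by
    intro c
    by_cases h : p < c
    · obtain ⟨a, h1, h2, h3⟩ := hAx c h
      exact ⟨a, fun _ => ⟨h1, h2, h3⟩⟩
    · exact ⟨p, fun hc => absurd hc h⟩
  have hBx' : ∀ c : α, ∃ b, p < c → b ∈ B ∧ p < b ∧ b < c := by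
    intro c
    by_cases h : p < c
    · obtain ⟨b, h1, h2, h3⟩ := hBx c h
      exact ⟨b, fun _ => ⟨h1, h2, h3⟩⟩
    · exact ⟨p, fun hc => absurd hc h⟩
  choose FA hFA using hAx'
  choose FB hFB using hBx'
  obtain ⟨c₀, hc₀⟩ := hex
  let s : ℕ → α × α := fun n =>
    Nat.rec (FA c₀, FB (FA c₀)) (fun _ prev => (FA prev.2, FB (FA prev.2))) n
  let a : ℕ → α := fun n => (s n).1
  let b : ℕ → α := fun n => (s n).2
  have inv : ∀ n, (a n ∈ A ∧ p < a n) ∧ (b n ∈ B ∧ p < b n ∧ b n < a n) := by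
    intro n
    induction n with
    | zero =>
      have h1 := hFA c₀ hc₀
      have h2 := hFB (FA c₀) h1.2.1
      exact ⟨⟨h1.1, h1.2.1⟩, h2.1, h2.2.1, h2.2.2⟩
    | succ n ih =>
      have h1 := hFA (b n) ih.2.2.1
      have h2 := hFB (FA (b n)) h1.2.1
      exact ⟨⟨h1.1, h1.2.1⟩, h2.1, h2.2.1, h2.2.2⟩
  have hstep : ∀ n, a (n + 1) < b n := fun n => (hFA (b n) (inv n).2.2.1).2.2
  -- Step D : the least element of the closure of the sequences is p
  set S : Set α := range a ∪ range b with hS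
  have hSne : (closure S).Nonempty :=
    ⟨a 0, subset_closure (Or.inl ⟨0, rfl⟩)⟩
  obtain ⟨m, hmcl, hmlb⟩ := (isClosed_closure (s := S)).isCompact.exists_isLeast hSne
  have hlb : ∀ x ∈ S, m ≤ x := fun x hx => hmlb (subset_closure hx)
  have hmb : ∀ n, m < b n := fun n =>
    lt_of_le_of_lt (hlb _ (Or.inl ⟨n + 1, rfl⟩)) (hstep n)
  have hma : ∀ n, m < a n := fun n => (hmb n).trans (inv n).2.2.2
  have hpm : p ≤ m := by
    have hsub : closure S ⊆ Ici p := by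
      apply closure_minimal _ isClosed_Ici
      rintro x (⟨n, rfl⟩ | ⟨n, rfl⟩)
      · exact (inv n).1.2.le
      · exact (inv n).2.2.1.le
    exact hsub hmcl
  have hnbhd : ∀ U ∈ 𝓝 m, (∃ n, a n ∈ U) ∧ (∃ n, b n ∈ U) := by
    intro U hU
    obtain ⟨u, hmu, hIco⟩ := exists_Ico_subset_of_mem_nhds hU ⟨a 0, hma 0⟩
    have hIio : Iio u ∈ 𝓝 m := isOpen_Iio.mem_nhds hmu
    obtain ⟨x, hxIio, hxS⟩ := mem_closure_iff_nhds.1 hmcl (Iio u) hIio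
    rcases hxS with ⟨n, rfl⟩ | ⟨n, rfl⟩
    · constructor
      · exact ⟨n, hIco ⟨(hma n).le, hxIio⟩⟩
      · exact ⟨n, hIco ⟨(hmb n).le, lt_trans (inv n).2.2.2 hxIio⟩⟩
    · constructor
      · exact ⟨n + 1, hIco ⟨(hma (n + 1)).le, lt_trans (hstep n) hxIio⟩⟩
      · exact ⟨n, hIco ⟨(hmb n).le, hxIio⟩⟩
  have hmA : m ∈ A := by
    have : m ∈ closure A := mem_closure_iff_nhds.2 fun t ht => by
      obtain ⟨n, hn⟩ := (hnbhd t ht).1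
      exact ⟨a n, hn, (inv n).1.1⟩
    rwa [hA.closure_eq] at this
  have hmB : m ∈ B := by
    have : m ∈ closure B := mem_closure_iff_nhds.2 fun t ht => by
      obtain ⟨n, hn⟩ := (hnbhd t ht).2
      exact ⟨b n, hn, (inv n).2.1⟩
    rwa [hB.closure_eq] at this
  have hmp : m = p := by
    have : m ∈ A ∩ B := ⟨hmA, hmB⟩
    rw [hABi] at this
    exact this
  -- Step E : contradiction with the P-point property of A
  subst hmp
  set F : ℕ → Set A := fun n => Subtype.val ⁻¹' Ici (a n) with hF
  have hFclosed : ∀ n, IsClosed (F n) := fun n =>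
    isClosed_Ici.preimage continuous_subtype_val
  have hFavoid : ∀ n, (⟨m, hpA⟩ : A) ∉ F n := fun n => not_le.2 (hma n)
  apply hPA.2 F hFclosed hFavoid
  rw [mem_closure_iff]
  intro O hO hpO
  obtain ⟨t, ht, rfl⟩ := isOpen_induced_iff.1 hO
  obtain ⟨n, hn⟩ := (hnbhd t (ht.mem_nhds hpO)).1
  exact ⟨⟨a n, (inv n).1.1⟩, hn, Set.mem_iUnion.2 ⟨n, le_refl (a n)⟩⟩

/-- Dual version: a point isolated from the right is not a cutting P-point. -/
lemma aux_no_cutting_right (p : α) (hp : IsMax p ∨ ∃ q, p ⋖ q) : ¬ IsCuttingPPoint p := by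
  haveI : CompactSpace αᵒᵈ := ‹CompactSpace α›
  have h := aux_no_cutting_left (α := αᵒᵈ) (OrderDual.toDual p) ?_
  · intro hc
    exact h hc
  · rcases hp with h1 | ⟨q, hq⟩
    · exact Or.inl h1.toDual
    · exact Or.inr ⟨OrderDual.toDual q, hq.toDual⟩

end Aux

section LexLemmas

variable {K : Type u} [LinearOrder K]

lemma lex_lt_iff' (p q : K ×ₗ Bool) :
    p < q ↔ (ofLex p).1 < (ofLex q).1 ∨ ((ofLex p).1 = (ofLex q).1 ∧ (ofLex p).2 < (ofLex q).2) :=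
  Prod.Lex.lt_iff

lemma lex_le_iff' (p q : K ×ₗ Bool) :
    p ≤ q ↔ (ofLex p).1 < (ofLex q).1 ∨ ((ofLex p).1 = (ofLex q).1 ∧ (ofLex p).2 ≤ (ofLex q).2) :=
  Prod.Lex.le_iff

lemma lex_covby (k : K) : toLex (k, false) ⋖ toLex (k, true) := by
  constructor
  · rw [Prod.Lex.lt_iff]; simp
  · intro x h1 h2
    induction x using Lex.rec with
    | _ x =>
    rw [Prod.Lex.lt_iff] at h1 h2
    simp only [Bool.lt_iff] at h1 h2
    rcases h1 with h1 | ⟨e1, i1⟩ <;> rcases h2 with h2 | ⟨e2, i2⟩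
    · exact absurd (h1.trans h2) (lt_irrefl _)
    · exact absurd h1 (by rw [e2]; exact lt_irrefl _)
    · exact absurd h2 (by rw [← e1]; exact lt_irrefl _)
    · rw [i1.2] at i2; exact absurd i2.1 (by simp)

lemma lex_compact [TopologicalSpace K] [OrderTopology K] [CompactSpace K] :
    CompactSpace (K ×ₗ Bool) := by
  haveI : OrderTopology (K ×ₗ Bool) := ⟨rfl⟩
  set f : K ×ₗ Bool → K := fun p => (ofLex p).1 with hf
  constructor
  rw [isCompact_iff_ultrafilter_le_nhds]
  intro U _
  set V := U.map f with hV
  set k := V.lim with hkdef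
  have hk : (V : Filter K) ≤ 𝓝 k := V.le_nhds_lim
  have hk' : Tendsto f (U : Filter (K ×ₗ Bool)) (𝓝 k) := hk
  have pullIoi : ∀ k' : K, k' < k → ∀ᶠ b in (U : Filter (K ×ₗ Bool)), k' < f b := by
    intro k' h
    exact hk' (Ioi_mem_nhds h)
  have pullIio : ∀ k' : K, k < k' → ∀ᶠ b in (U : Filter (K ×ₗ Bool)), f b < k' := by
    intro k' h
    exact hk' (Iio_mem_nhds h)
  rcases U.mem_or_compl_mem (Set.Iic (toLex (k, false))) with hmem | hmem
  · refine ⟨toLex (k, false), Set.mem_univ _, ?_⟩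
    have : Tendsto id (U : Filter (K ×ₗ Bool)) (𝓝 (toLex (k, false))) := by
      rw [tendsto_order]
      constructor
      · intro a' ha'
        have hlt : f a' < k := by
          rcases (lex_lt_iff' a' (toLex (k, false))).1 ha' with h | ⟨h1, h2⟩
          · exact h
          · exact absurd h2 (by simp [Bool.lt_iff])
        filter_upwards [pullIoi _ hlt] with b hb
        exact (lex_lt_iff' a' b).2 (Or.inl hb)
      · intro a' ha'
        rcases (lex_lt_iff' (toLex (k, false)) a').1 ha' with h | ⟨h1, h2⟩
        · filter_upwards [pullIio _ h] with b hb
          exact (lex_lt_iff' b a').2 (Or.inl hb)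
        · filter_upwards [hmem] with b hb
          exact lt_of_le_of_lt hb ha'
    exact Filter.tendsto_id'.1 this
  · refine ⟨toLex (k, true), Set.mem_univ _, ?_⟩
    have hmem' : {b : K ×ₗ Bool | toLex (k, false) < b} ∈ (U : Filter (K ×ₗ Bool)) := by
      have e : {b : K ×ₗ Bool | toLex (k, false) < b} = (Iic (toLex (k, false)))ᶜ := by
        ext b; simp [Set.mem_compl_iff, not_le]
      rw [e]; exact hmem
    have : Tendsto id (U : Filter (K ×ₗ Bool)) (𝓝 (toLex (k, true))) := by
      rw [tendsto_order]
      constructor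
      · intro a' ha'
        rcases (lex_lt_iff' a' (toLex (k, true))).1 ha' with h | ⟨h1, h2⟩
        · filter_upwards [pullIoi _ h] with b hb
          exact (lex_lt_iff' a' b).2 (Or.inl hb)
        · have : a' = toLex (k, false) := by
            have h2' : (ofLex a').2 = false := by
              cases hcase : (ofLex a').2
              · rfl
              · rw [hcase] at h2; exact absurd h2 (by simp)
            have : ofLex a' = (k, false) := Prod.ext h1 h2'
            simpa using congrArg toLex this
          rw [this]
          exact hmem'
      · intro a' ha'
        have hlt : k < f a' := by
          rcases (lex_lt_iff' (toLex (k, true)) a').1 ha' with h | ⟨h1, h2⟩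
          · exact h
          · exact absurd h2 (by simp [Bool.lt_iff])
        filter_upwards [pullIio _ hlt] with b hb
        exact (lex_lt_iff' b a').2 (Or.inl hb)
    exact Filter.tendsto_id'.1 this

end LexLemmas

/-- if `K` is a compact linearly ordered space, then the lexicographic
product `L = K ×ₗ {0,1}` (with its order topology) is compact, has no cutting P-points
(indeed every point of `L` is isolated from at least one side), the first-coordinate
projection is a continuous order-preserving surjection whose fibers have exactly two
points, and `L` is scattered whenever `K` is scattered. -/
theorem lex_double_of_compact_lots
    {K : Type u} [LinearOrder K] [TopologicalSpace K] [OrderTopology K] [CompactSpace K] :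
    CompactSpace (K ×ₗ Bool) ∧
    (∀ p : K ×ₗ Bool, ¬ IsCuttingPPoint p) ∧
    (∀ p : K ×ₗ Bool, (IsMin p ∨ ∃ q, q ⋖ p) ∨ (IsMax p ∨ ∃ q, p ⋖ q)) ∧
    Continuous (fun p : K ×ₗ Bool => (ofLex p).1) ∧
    Monotone (fun p : K ×ₗ Bool => (ofLex p).1) ∧
    Function.Surjective (fun p : K ×ₗ Bool => (ofLex p).1) ∧
    (∀ k : K, Set.ncard ((fun p : K ×ₗ Bool => (ofLex p).1) ⁻¹' {k}) = 2) ∧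
    (IsScatteredOrder K → IsScatteredOrder (K ×ₗ Bool)) := by
  haveI : OrderTopology (K ×ₗ Bool) := ⟨rfl⟩
  haveI hcomp : CompactSpace (K ×ₗ Bool) := lex_compact
  -- the one-sided isolation property
  have hsides : ∀ p : K ×ₗ Bool, (IsMin p ∨ ∃ q, q ⋖ p) ∨ (IsMax p ∨ ∃ q, p ⋖ q) := by
    intro p
    cases hcase : (ofLex p).2 with
    | false =>
      refine Or.inr (Or.inr ⟨toLex ((ofLex p).1, true), ?_⟩)
      have : p = toLex ((ofLex p).1, false) := by
        have : ofLex p = ((ofLex p).1, false) := Prod.ext rfl hcase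
        simpa using congrArg toLex this
      rw [this]
      exact lex_covby _
    | true =>
      refine Or.inl (Or.inr ⟨toLex ((ofLex p).1, false), ?_⟩)
      have : p = toLex ((ofLex p).1, true) := by
        have : ofLex p = ((ofLex p).1, true) := Prod.ext rfl hcase
        simpa using congrArg toLex this
      rw [this]
      exact lex_covby _
  have hmono : Monotone (fun p : K ×ₗ Bool => (ofLex p).1) := by
    intro p q hpq
    rcases (lex_le_iff' p q).1 hpq with h | ⟨h, _⟩
    · exact h.le
    · exact h.le
  have hcont : Continuous (fun p : K ×ₗ Bool => (ofLex p).1) := by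
    rw [continuous_iff_continuousAt]
    intro p
    unfold ContinuousAt
    rw [tendsto_order]
    constructor
    · intro a' ha'
      have hopen : Ioi (toLex (a', true)) ∈ 𝓝 p := by
        apply isOpen_Ioi.mem_nhds
        exact (lex_lt_iff' _ _).2 (Or.inl ha')
      filter_upwards [hopen] with b hb
      rcases (lex_lt_iff' (toLex (a', true)) b).1 hb with h | ⟨h, h2⟩
      · exact h
      · exact absurd h2 (by simp [Bool.lt_iff])
    · intro a' ha'
      have hopen : Iio (toLex (a', false)) ∈ 𝓝 p := by
        apply isOpen_Iio.mem_nhds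
        exact (lex_lt_iff' _ _).2 (Or.inl ha')
      filter_upwards [hopen] with b hb
      rcases (lex_lt_iff' b (toLex (a', false))).1 hb with h | ⟨h, h2⟩
      · exact h
      · exact absurd h2 (by simp [Bool.lt_iff])
  have hfiber : ∀ k : K,
      (fun p : K ×ₗ Bool => (ofLex p).1) ⁻¹' {k} = {toLex (k, false), toLex (k, true)} := by
    intro k
    ext p
    simp only [Set.mem_preimage, Set.mem_singleton_iff, Set.mem_insert_iff]
    constructor
    · intro h
      cases hcase : (ofLex p).2 with
      | false =>
        left
        have : ofLex p = (k, false) := Prod.ext h hcase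
        simpa using congrArg toLex this
      | true =>
        right
        have : ofLex p = (k, true) := Prod.ext h hcase
        simpa using congrArg toLex this
    · rintro (rfl | rfl) <;> rfl
  refine ⟨hcomp, ?_, hsides, hcont, hmono, ?_, ?_, ?_⟩
  · -- no cutting P-points
    intro p
    rcases hsides p with h | h
    · exact aux_no_cutting_left p h
    · exact aux_no_cutting_right p h
  · -- surjectivity
    intro k
    exact ⟨toLex (k, false), rfl⟩
  · -- fibers have two points
    intro k
    rw [hfiber k]
    apply Set.ncard_pair
    intro h
    have : ((k, false) : K × Bool) = (k, true) := by
      simpa using congrArg ofLex h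
    simpa using congrArg Prod.snd this
  · -- scattered
    intro hK
    rintro ⟨g, hg⟩
    apply hK
    refine ⟨fun q => (ofLex (g q)).1, ?_⟩
    have hmg : Monotone fun q => (ofLex (g q)).1 := hmono.comp hg.monotone
    apply hmg.strictMono_of_injective
    intro q r hqr
    replace hqr : (ofLex (g q)).1 = (ofLex (g r)).1 := hqr
    by_contra hne
    -- wlog q < r
    rcases lt_or_gt_of_ne hne with hlt | hlt
    case _ =>
      have hs : q < (q + r) / 2 ∧ (q + r) / 2 < r := by constructor <;> linarith
      have h1 : g q < g ((q + r) / 2) := hg hs.1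
      have h2 : g ((q + r) / 2) < g r := hg hs.2
      have e1 : (ofLex (g q)).1 = (ofLex (g ((q + r) / 2))).1 :=
        le_antisymm (hmono h1.le) (by rw [hqr]; exact hmono h2.le)
      have e2 : (ofLex (g ((q + r) / 2))).1 = (ofLex (g r)).1 := by
        rw [← e1, hqr]
      have b1 : (ofLex (g q)).2 < (ofLex (g ((q + r) / 2))).2 := by
        rcases (lex_lt_iff' _ _).1 h1 with h | ⟨_, h⟩
        · rw [e1] at h; exact absurd h (lt_irrefl _)
        · exact h
      have b2 : (ofLex (g ((q + r) / 2))).2 < (ofLex (g r)).2 := by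
        rcases (lex_lt_iff' _ _).1 h2 with h | ⟨_, h⟩
        · rw [e2] at h; exact absurd h (lt_irrefl _)
        · exact h
      rw [Bool.lt_iff] at b1 b2
      rw [b1.2] at b2
      exact absurd b2.1 (by simp)
    case _ =>
      have hs : r < (q + r) / 2 ∧ (q + r) / 2 < q := by constructor <;> linarith
      have h1 : g r < g ((q + r) / 2) := hg hs.1
      have h2 : g ((q + r) / 2) < g q := hg hs.2
      have e1 : (ofLex (g r)).1 = (ofLex (g ((q + r) / 2))).1 :=
        le_antisymm (hmono h1.le) (by rw [← hqr]; exact hmono h2.le)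
      have e2 : (ofLex (g ((q + r) / 2))).1 = (ofLex (g q)).1 := by
        rw [← e1, ← hqr]
      have b1 : (ofLex (g r)).2 < (ofLex (g ((q + r) / 2))).2 := by
        rcases (lex_lt_iff' _ _).1 h1 with h | ⟨_, h⟩
        · rw [e1] at h; exact absurd h (lt_irrefl _)
        · exact h
      have b2 : (ofLex (g ((q + r) / 2))).2 < (ofLex (g q)).2 := by
        rcases (lex_lt_iff' _ _).1 h2 with h | ⟨_, h⟩
        · rw [e2] at h; exact absurd h (lt_irrefl _)
        · exact h
      rw [Bool.lt_iff] at b1 b2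
      rw [b1.2] at b2
      exact absurd b2.1 (by simp)
end

section
/- The extended long ray R→+1, i.e. the lexicographic product ω₁ ×_lex [0,1) with a greatest element adjoined, equipped with the order topology, is Valdivia compact. -/
universe u

/-- The set of countable ordinals, i.e. ω₁, as a linear order. -/
abbrev OmegaOneSeg : Type 1 := ↥(Set.Iio (Cardinal.aleph 1).ord)

/-- The half-open unit interval `[0,1)`. -/
abbrev IcoUnit : Type := ↥(Set.Ico (0 : ℝ) 1)

/-- The extended long ray `R→ + 1`: the lexicographic product `ω₁ ×ₗ [0,1)` with a
greatest element adjoined. -/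
abbrev LongRayPlusOne : Type 1 := WithTop (OmegaOneSeg ×ₗ IcoUnit)

/-- `R→ + 1` carries its order topology. -/
noncomputable instance : TopologicalSpace LongRayPlusOne :=
  Preorder.topology LongRayPlusOne

namespace LongRayAux

lemma omega1_isLimit : Order.IsSuccLimit (Cardinal.aleph 1).ord :=
  Cardinal.isSuccLimit_ord (Cardinal.aleph0_le_aleph 1)

def abot : OmegaOneSeg := ⟨0, omega1_isLimit.pos⟩
def bbot : IcoUnit := ⟨0, le_refl 0, zero_lt_one⟩
def asucc (a : OmegaOneSeg) : OmegaOneSeg :=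
  ⟨a.val + 1, by
    have := omega1_isLimit.succ_lt a.2
    rwa [Ordinal.add_one_eq_succ]⟩

lemma lt_asucc (a : OmegaOneSeg) : a < asucc a := by
  show a.val < a.val + 1
  rw [Ordinal.add_one_eq_succ]
  exact Order.lt_succ _

lemma lexle {p q : OmegaOneSeg ×ₗ IcoUnit} :
    p ≤ q ↔ (ofLex p).1 < (ofLex q).1 ∨
      ((ofLex p).1 = (ofLex q).1 ∧ (ofLex p).2 ≤ (ofLex q).2) := by
  conv_lhs => rw [← toLex_ofLex p, ← toLex_ofLex q]
  exact Prod.Lex.le_iff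

lemma lexlt {p q : OmegaOneSeg ×ₗ IcoUnit} :
    p < q ↔ (ofLex p).1 < (ofLex q).1 ∨
      ((ofLex p).1 = (ofLex q).1 ∧ (ofLex p).2 < (ofLex q).2) := by
  conv_lhs => rw [← toLex_ofLex p, ← toLex_ofLex q]
  exact Prod.Lex.lt_iff



open Set

lemma exists_isLUB_lex (S : Set (OmegaOneSeg ×ₗ IcoUnit)) (hne : S.Nonempty)
    (b : OmegaOneSeg ×ₗ IcoUnit) (hb : b ∈ upperBounds S) : ∃ c, IsLUB S c := by
  classical
  -- the set of first coordinates, as ordinals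
  set F : Set Ordinal := (fun p => ((ofLex p).1 : Ordinal)) '' S with hF
  have hFne : F.Nonempty := hne.image _
  have hFbdd : BddAbove F := by
    refine ⟨((ofLex b).1 : Ordinal), ?_⟩
    rintro _ ⟨p, hp, rfl⟩
    rcases lexle.mp (hb hp) with h | ⟨h, _⟩
    · exact le_of_lt h
    · exact le_of_eq (congrArg _ h)
  have hβ : IsLUB F (sSup F) := isLUB_csSup hFne hFbdd
  have hFb : ∀ o ∈ F, o ≤ ((ofLex b).1 : Ordinal) := by
    rintro _ ⟨p, hp, rfl⟩
    rcases lexle.mp (hb hp) with h | ⟨h, _⟩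
    · exact le_of_lt h
    · exact le_of_eq (congrArg _ h)
  have hβlt : sSup F < (Cardinal.aleph 1).ord :=
    lt_of_le_of_lt (csSup_le hFne hFb) ((ofLex b).1.2)
  set β : OmegaOneSeg := ⟨sSup F, hβlt⟩ with hβdef
  -- γ is an upper bound of first coords of any upper bound u of S
  have first_le : ∀ u ∈ upperBounds S, sSup F ≤ ((ofLex u).1 : Ordinal) := by
    intro u hu
    refine csSup_le hFne ?_
    rintro _ ⟨p, hp, rfl⟩
    rcases lexle.mp (hu hp) with h | ⟨h, _⟩
    · exact le_of_lt h
    · exact le_of_eq (congrArg _ h)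
  by_cases hmem : sSup F ∈ F
  · -- the sup of first coordinates is attained
    set T : Set ℝ := (fun p => (((ofLex p).2 : IcoUnit) : ℝ)) ''
      (S ∩ {p | (ofLex p).1 = β}) with hT
    have hTne : T.Nonempty := by
      obtain ⟨p, hp, hpv⟩ := hmem
      exact ⟨_, ⟨p, ⟨hp, Subtype.ext hpv⟩, rfl⟩⟩
    have hTbdd : BddAbove T := by
      refine ⟨1, ?_⟩
      rintro _ ⟨p, _, rfl⟩
      exact le_of_lt (ofLex p).2.2.2
    have hs : IsLUB T (sSup T) := isLUB_csSup hTne hTbdd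
    have hs0 : (0 : ℝ) ≤ sSup T := by
      obtain ⟨r, hr⟩ := hTne
      obtain ⟨p, _, rfl⟩ := hr
      exact le_trans (ofLex p).2.2.1 (hs.1 ⟨p, ‹_›, rfl⟩)
    -- if β appears with second coords, the ≤-comparison on T
    have hTle : ∀ u ∈ upperBounds S, (ofLex u).1 = β →
        sSup T ≤ (((ofLex u).2 : IcoUnit) : ℝ) := by
      intro u hu huβ
      refine csSup_le hTne ?_
      rintro _ ⟨p, ⟨hp, hpβ⟩, rfl⟩
      rcases lexle.mp (hu hp) with h | ⟨_, h⟩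
      · exact absurd h (by rw [hpβ, huβ]; exact lt_irrefl _)
      · exact h
    by_cases hlt : sSup T < 1
    · refine ⟨toLex (β, ⟨sSup T, hs0, hlt⟩), ?_, ?_⟩
      · intro p hp
        rcases lt_or_eq_of_le (hβ.1 ⟨p, hp, rfl⟩) with h | h
        · exact lexle.mpr (Or.inl h)
        · refine lexle.mpr (Or.inr ⟨Subtype.ext h, ?_⟩)
          exact hs.1 ⟨p, ⟨hp, Subtype.ext h⟩, rfl⟩
      · intro u hu
        rcases lt_or_eq_of_le (first_le u hu) with h | h
        · exact lexle.mpr (Or.inl h)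
        · have hβu : β = (ofLex u).1 := Subtype.ext h
          exact lexle.mpr (Or.inr ⟨hβu, hTle u hu hβu.symm⟩)
    · refine ⟨toLex (asucc β, bbot), ?_, ?_⟩
      · intro p hp
        refine lexle.mpr (Or.inl (lt_of_le_of_lt ?_ (lt_asucc β)))
        exact hβ.1 ⟨p, hp, rfl⟩
      · intro u hu
        rcases lt_or_eq_of_le (first_le u hu) with h | h
        · have h1 : (asucc β : OmegaOneSeg) ≤ (ofLex u).1 := by
            show (sSup F) + 1 ≤ _
            rw [Ordinal.add_one_eq_succ]
            exact Order.succ_le_of_lt h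
          rcases lt_or_eq_of_le h1 with h2 | h2
          · exact lexle.mpr (Or.inl h2)
          · exact lexle.mpr (Or.inr ⟨h2, (ofLex u).2.2.1⟩)
        · exact absurd (lt_of_le_of_lt (hTle u hu (Subtype.ext h.symm)) (ofLex u).2.2.2) hlt
  · -- sup of first coordinates not attained
    refine ⟨toLex (β, bbot), ?_, ?_⟩
    · intro p hp
      have h1 : ((ofLex p).1 : Ordinal) ≤ sSup F := hβ.1 ⟨p, hp, rfl⟩
      have h2 : ((ofLex p).1 : Ordinal) ≠ sSup F := fun h => hmem (h ▸ ⟨p, hp, rfl⟩)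
      exact lexle.mpr (Or.inl (Subtype.coe_lt_coe.mp (lt_of_le_of_ne h1 h2)))
    · intro u hu
      rcases lt_or_eq_of_le (first_le u hu) with h | h
      · exact lexle.mpr (Or.inl h)
      · exact lexle.mpr (Or.inr ⟨Subtype.ext h, (ofLex u).2.2.1⟩)


def xbot : LongRayPlusOne := (toLex (abot, bbot) : OmegaOneSeg ×ₗ IcoUnit)

lemma xbot_le (x : LongRayPlusOne) : xbot ≤ x := by
  induction x using WithTop.recTopCoe with
  | top => exact le_top
  | coe p =>
    refine WithTop.coe_le_coe.mpr (lexle.mpr ?_)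
    rcases eq_or_lt_of_le (zero_le (a := ((ofLex p).1 : Ordinal))) with h | h
    · exact Or.inr ⟨Subtype.ext h, (ofLex p).2.2.1⟩
    · exact Or.inl (Subtype.coe_lt_coe.mp h)

lemma exists_isLUB_long (S : Set LongRayPlusOne) : ∃ c, IsLUB S c := by
  classical
  by_cases htop : ∃ b : OmegaOneSeg ×ₗ IcoUnit, (b : LongRayPlusOne) ∈ upperBounds S
  · obtain ⟨b, hb⟩ := htop
    have htopS : (⊤ : LongRayPlusOne) ∉ S := fun h =>
      absurd (hb h) (by simp)
    set S' : Set (OmegaOneSeg ×ₗ IcoUnit) := {p | (p : LongRayPlusOne) ∈ S} with hS'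
    by_cases hne : S'.Nonempty
    · have hbS' : b ∈ upperBounds S' := fun p hp => WithTop.coe_le_coe.mp (hb hp)
      obtain ⟨c, hc⟩ := exists_isLUB_lex S' hne b hbS'
      refine ⟨(c : LongRayPlusOne), ?_, ?_⟩
      · intro x hx
        induction x using WithTop.recTopCoe with
        | top => exact absurd hx htopS
        | coe p => exact WithTop.coe_le_coe.mpr (hc.1 hx)
      · intro u hu
        induction u using WithTop.recTopCoe with
        | top => exact le_top
        | coe v =>
          exact WithTop.coe_le_coe.mpr (hc.2 (fun p hp => WithTop.coe_le_coe.mp (hu hp)))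
    · have hSempty : S = ∅ := by
        ext x
        simp only [Set.mem_empty_iff_false, iff_false]
        intro hx
        induction x using WithTop.recTopCoe with
        | top => exact htopS hx
        | coe p => exact hne ⟨p, hx⟩
      exact ⟨xbot, by simp [hSempty, isLUB_empty_iff]; exact fun x => xbot_le x⟩
  · refine ⟨⊤, fun x _ => le_top, ?_⟩
    intro u hu
    induction u using WithTop.recTopCoe with
    | top => exact le_refl _
    | coe v => exact absurd ⟨v, hu⟩ htop

noncomputable instance : SupSet LongRayPlusOne :=
  ⟨fun S => (exists_isLUB_long S).choose⟩

lemma isLUB_sSup' (S : Set LongRayPlusOne) : IsLUB S (sSup S) :=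
  (exists_isLUB_long S).choose_spec

instance : OrderBot LongRayPlusOne where
  bot := xbot
  bot_le := xbot_le

instance : BoundedOrder LongRayPlusOne :=
  { (inferInstance : OrderTop LongRayPlusOne), (inferInstance : OrderBot LongRayPlusOne) with }

noncomputable instance : CompleteLattice LongRayPlusOne :=
  { (inferInstance : Lattice LongRayPlusOne), (inferInstance : BoundedOrder LongRayPlusOne) with
    sSup := SupSet.sSup
    isLUB_sSup := fun S => isLUB_sSup' S
    sInf := fun S => sSup (lowerBounds S)
    isGLB_sInf := fun S => ⟨fun x hx => (isLUB_sSup' (lowerBounds S)).2 (fun _ hy => hy hx),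
      fun x hx => (isLUB_sSup' (lowerBounds S)).1 hx⟩ }

noncomputable instance : CompleteLinearOrder LongRayPlusOne :=
  { (inferInstance : CompleteLattice LongRayPlusOne),
    (inferInstance : LinearOrder LongRayPlusOne),
    LinearOrder.toBiheytingAlgebra _ with }

instance : OrderTopology LongRayPlusOne := ⟨rfl⟩

instance : Nonempty OmegaOneSeg := ⟨abot⟩

/-! ### The coordinate functions of the embedding -/

noncomputable def coord (x : LongRayPlusOne) (α : OmegaOneSeg) : unitInterval :=
  WithTop.recTopCoe 1 (fun p =>
    if (ofLex p).1 < α then 0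
    else if α < (ofLex p).1 then 1
    else ⟨((ofLex p).2 : ℝ), (ofLex p).2.2.1, le_of_lt (ofLex p).2.2.2⟩) x

lemma coord_top (α : OmegaOneSeg) : coord ⊤ α = 1 := rfl

lemma coord_coe_of_lt {p : OmegaOneSeg ×ₗ IcoUnit} {α : OmegaOneSeg}
    (h : (ofLex p).1 < α) : coord (p : LongRayPlusOne) α = 0 := by
  simp [coord, h]

lemma coord_coe_of_gt {p : OmegaOneSeg ×ₗ IcoUnit} {α : OmegaOneSeg}
    (h : α < (ofLex p).1) : coord (p : LongRayPlusOne) α = 1 := by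
  simp [coord, h, asymm h]

lemma coord_coe_of_eq {p : OmegaOneSeg ×ₗ IcoUnit} {α : OmegaOneSeg}
    (h : (ofLex p).1 = α) :
    coord (p : LongRayPlusOne) α =
      ⟨((ofLex p).2 : ℝ), (ofLex p).2.2.1, le_of_lt (ofLex p).2.2.2⟩ := by
  simp [coord, h]

lemma unit_le_one (z : unitInterval) : z ≤ 1 := Subtype.coe_le_coe.mp z.2.2

lemma unit_nonneg (z : unitInterval) : 0 ≤ z := Subtype.coe_le_coe.mp z.2.1

lemma coord_mono (α : OmegaOneSeg) : Monotone (fun x => coord x α) := by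
  intro x y hxy
  dsimp only
  induction y using WithTop.recTopCoe with
  | top => rw [coord_top]; exact unit_le_one _
  | coe q =>
    induction x using WithTop.recTopCoe with
    | top => exact absurd hxy (WithTop.not_top_le_coe q)
    | coe p =>
      have hpq : p ≤ q := WithTop.coe_le_coe.mp hxy
      by_cases h1 : (ofLex p).1 < α
      · rw [coord_coe_of_lt h1]; exact unit_nonneg _
      by_cases h2 : α < (ofLex q).1
      · rw [coord_coe_of_gt h2]; exact unit_le_one _
      -- now α ≤ p.1 and q.1 ≤ α, and p.1 ≤ q.1
      have hle : (ofLex p).1 ≤ (ofLex q).1 := by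
        rcases lexle.mp hpq with h | ⟨h, _⟩
        · exact le_of_lt h
        · exact le_of_eq h
      have hpα : (ofLex p).1 = α :=
        le_antisymm (le_trans hle (not_lt.mp h2)) (not_lt.mp h1)
      have hqα : (ofLex q).1 = α := le_antisymm (not_lt.mp h2) (le_trans (hpα ▸ le_refl _) hle)
      rw [coord_coe_of_eq hpα, coord_coe_of_eq hqα]
      rcases lexle.mp hpq with h | ⟨_, h⟩
      · exact absurd h (by rw [hpα, hqα]; exact lt_irrefl α)
      · exact Subtype.mk_le_mk.mpr h

lemma coord_surj (α : OmegaOneSeg) : Function.Surjective (fun x => coord x α) := by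
  intro c
  by_cases h : (c : ℝ) < 1
  · refine ⟨((toLex (α, ⟨(c : ℝ), c.2.1, h⟩) : OmegaOneSeg ×ₗ IcoUnit) : LongRayPlusOne), ?_⟩
    exact (coord_coe_of_eq rfl).trans (Subtype.ext rfl)
  · exact ⟨⊤, by dsimp only; rw [coord_top]
                 exact (Subtype.ext (le_antisymm c.2.2 (not_lt.mp h))).symm⟩

lemma coord_continuous (α : OmegaOneSeg) : Continuous (fun x => coord x α) :=
  (coord_mono α).continuous_of_surjective (coord_surj α)

lemma coord_injective : Function.Injective (fun x : LongRayPlusOne => fun α => coord x α) := by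
  have key : ∀ x y : LongRayPlusOne, x < y →
      (fun α => coord x α) = (fun α => coord y α) → False := by
    intro x y hlt hxy
    induction x using WithTop.recTopCoe with
    | top => exact not_top_lt hlt
    | coe p =>
      have h1 := congrFun hxy (ofLex p).1
      rw [coord_coe_of_eq rfl] at h1
      induction y using WithTop.recTopCoe with
      | top =>
        rw [coord_top] at h1
        exact absurd (congrArg Subtype.val h1) (ne_of_lt (ofLex p).2.2.2)
      | coe q =>
        have hpq : p < q := WithTop.coe_lt_coe.mp hlt
        rcases lexlt.mp hpq with h | ⟨h, h2⟩
        · rw [coord_coe_of_gt h] at h1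
          exact absurd (congrArg Subtype.val h1) (ne_of_lt (ofLex p).2.2.2)
        · rw [coord_coe_of_eq h.symm] at h1
          have := congrArg Subtype.val h1
          exact absurd (Subtype.ext this : (ofLex p).2 = (ofLex q).2) (ne_of_lt h2)
  intro x y hxy
  rcases lt_trichotomy x y with h | h | h
  · exact absurd hxy (fun hh => key x y h hh)
  · exact h
  · exact absurd hxy.symm (fun hh => key y x h hh)

lemma countable_Iic (β : OmegaOneSeg) : {α : OmegaOneSeg | α ≤ β}.Countable := by
  have hsucc : (β : Ordinal) + 1 < (Cardinal.aleph 1).ord := by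
    have := omega1_isLimit.succ_lt β.2
    rwa [Ordinal.add_one_eq_succ]
  have h1 : (Set.Iio ((β : Ordinal) + 1)).Countable := by
    rw [Cardinal.countable_iff_lt_aleph_one, Ordinal.mk_Iio_ordinal,
      Cardinal.lift_lt_aleph_one]
    exact Cardinal.lt_ord.mp hsucc
  have h2 : {α : OmegaOneSeg | α ≤ β} = Subtype.val ⁻¹' Set.Iio ((β : Ordinal) + 1) := by
    ext α
    simp only [Set.mem_setOf_eq, Set.mem_preimage, Set.mem_Iio]
    rw [Ordinal.add_one_eq_succ, Order.lt_succ_iff]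
    exact ⟨fun h => Subtype.coe_le_coe.mpr h, fun h => Subtype.coe_le_coe.mp h⟩
  rw [h2]
  exact h1.preimage Subtype.val_injective

lemma supp_countable (p : OmegaOneSeg ×ₗ IcoUnit) :
    {α : OmegaOneSeg | coord (p : LongRayPlusOne) α ≠ 0}.Countable := by
  refine (countable_Iic (ofLex p).1).mono ?_
  intro α hα
  by_contra hc
  exact hα (coord_coe_of_lt (not_le.mp hc))

end LongRayAux

open LongRayAux

/-- the extended long ray `R→ + 1` is Valdivia compact. -/
theorem longRayPlusOne_isValdivia : IsValdiviaCompact LongRayPlusOne := by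
  classical
  refine ⟨inferInstance, inferInstance, OmegaOneSeg, fun x α => coord x α, ?_, ?_⟩
  · exact ((continuous_pi coord_continuous).isClosedEmbedding coord_injective).toIsEmbedding
  · have hclosed : IsClosed (Set.range (fun x : LongRayPlusOne => fun α => coord x α)) :=
      ((continuous_pi coord_continuous).isClosedEmbedding coord_injective).isClosed_range
    refine Set.Subset.antisymm ?_ ?_
    · rintro _ ⟨x, rfl⟩
      induction x using WithTop.recTopCoe with
      | coe p => exact subset_closure ⟨Set.mem_range_self _, supp_countable p⟩
      | top =>
        have h1 : Filter.Tendsto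
            (fun β : OmegaOneSeg =>
              (fun α => coord (((toLex (β, bbot) : OmegaOneSeg ×ₗ IcoUnit)) : LongRayPlusOne) α))
            Filter.atTop (nhds (fun α => coord ⊤ α)) := by
          rw [tendsto_pi_nhds]
          intro α
          refine Filter.Tendsto.congr' ?_ tendsto_const_nhds
          refine Filter.eventually_atTop.mpr ⟨asucc α, fun β hβ => ?_⟩
          exact (coord_coe_of_gt (show α < (ofLex (toLex (β, bbot))).1 from
            lt_of_lt_of_le (lt_asucc α) hβ)).symm
        refine mem_closure_of_tendsto h1 ?_
        exact Filter.Eventually.of_forall (fun β => ⟨Set.mem_range_self _, supp_countable _⟩)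
    · calc closure (Set.range (fun x : LongRayPlusOne => fun α => coord x α) ∩
            {x | {a | x a ≠ 0}.Countable})
          ⊆ closure (Set.range (fun x : LongRayPlusOne => fun α => coord x α)) :=
            closure_mono Set.inter_subset_left
        _ = _ := hclosed.closure_eq
end

section
/- Every compact linearly ordered topological space which is metrizable, zero-dimensional (has a base of clopen sets), and dense-in-itself (has no isolated points) is order isomorphic (hence also homeomorphic) to the Cantor set 2^ω endowed with the lexicographic order <_lx, where x <_lx y iff x(n) < y(n) for the least n with x(n) ≠ y(n). -/
universe u

/-- The Cantor set `2^ω` with the lexicographic order. -/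
abbrev CantorLex : Type := Lex (ℕ → Bool)

/-- `CantorLex` carries its order topology (which coincides with the usual Cantor space
topology). -/
noncomputable instance : TopologicalSpace CantorLex := Preorder.topology CantorLex

namespace CantorLexAux

attribute [local instance 0] Classical.propDecidable

variable {X : Type u} [LinearOrder X]

/-- There is a jump (covering pair) inside the interval `p` whose left endpoint has
index `n`. -/
def JQ (e : X → ℕ) (p : X × X) (n : ℕ) : Prop :=
  ∃ c d : X, p.1 ≤ c ∧ c ⋖ d ∧ d ≤ p.2 ∧ e c = n

/-- The index of the chosen jump inside `p` (junk value if there is none). -/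
noncomputable def jIdx (e : X → ℕ) (p : X × X) : ℕ :=
  if h : ∃ n, JQ e p n then Nat.find h else 0

/-- The chosen jump (covering pair) inside `p` minimizing the index `e` of its left
endpoint (junk value `p` if there is none). -/
noncomputable def jcd (e : X → ℕ) (p : X × X) : X × X :=
  if h : ∃ n, JQ e p n then
    ((Nat.find_spec h).choose, (Nat.find_spec h).choose_spec.choose)
  else p

theorem jcd_spec (e : X → ℕ) (p : X × X) (h : ∃ c d : X, p.1 ≤ c ∧ c ⋖ d ∧ d ≤ p.2) :
    p.1 ≤ (jcd e p).1 ∧ (jcd e p).1 ⋖ (jcd e p).2 ∧ (jcd e p).2 ≤ p.2 ∧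
      e (jcd e p).1 = jIdx e p := by
  obtain ⟨c, d, h1, h2, h3⟩ := h
  have hn : ∃ n, JQ e p n := ⟨e c, c, d, h1, h2, h3, rfl⟩
  rw [jcd, jIdx, dif_pos hn, dif_pos hn]
  exact (Nat.find_spec hn).choose_spec.choose_spec

theorem jIdx_min (e : X → ℕ) (p : X × X) {c d : X} (hc : p.1 ≤ c) (hcd : c ⋖ d)
    (hd : d ≤ p.2) : jIdx e p ≤ e c := by
  have hn : ∃ n, JQ e p n := ⟨e c, c, d, hc, hcd, hd, rfl⟩
  rw [jIdx, dif_pos hn]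
  exact Nat.find_le ⟨c, d, hc, hcd, hd, rfl⟩

/-- Split the interval `p` at its chosen jump; `false` takes the left part, `true` the
right part. -/
noncomputable def splitI (e : X → ℕ) (p : X × X) (b : Bool) : X × X :=
  if b then ((jcd e p).2, p.2) else (p.1, (jcd e p).1)

/-- The interval at stage `n` following the branch `y`. -/
noncomputable def itv (e : X → ℕ) (q : X × X) (y : ℕ → Bool) : ℕ → X × X
  | 0 => q
  | n + 1 => splitI e (itv e q y n) (y n)

/-- The interval at stage `n` containing the point `x`. -/
noncomputable def gtv (e : X → ℕ) (q : X × X) (x : X) : ℕ → X × X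
  | 0 => q
  | n + 1 => splitI e (gtv e q x n) (if (jcd e (gtv e q x n)).2 ≤ x then true else false)

/-- The bit chosen by the point `x` at stage `n`. -/
noncomputable def fb (e : X → ℕ) (q : X × X) (x : X) (n : ℕ) : Bool :=
  if (jcd e (gtv e q x n)).2 ≤ x then true else false

theorem gtv_succ (e : X → ℕ) (q : X × X) (x : X) (n : ℕ) :
    gtv e q x (n + 1) = splitI e (gtv e q x n) (fb e q x n) := rfl

end CantorLexAux

/-- every nonempty compact metrizable zero-dimensional dense-in-itself
linearly ordered topological space is order isomorphic (hence also homeomorphic) to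
the Cantor set `2^ω` with the lexicographic order. -/
theorem compact_metrizable_zero_dim_perfect_lots_iso_cantor
    {X : Type u} [LinearOrder X] [TopologicalSpace X] [OrderTopology X]
    [CompactSpace X] [Nonempty X] [TopologicalSpace.MetrizableSpace X]
    (hzd : ∃ B : Set (Set X), TopologicalSpace.IsTopologicalBasis B ∧ ∀ b ∈ B, IsClopen b)
    (hdense : ∀ x : X, ¬ IsOpen ({x} : Set X)) :
    Nonempty (X ≃o CantorLex) ∧ Nonempty (X ≃ₜ CantorLex) := by
  classical
  open CantorLexAux in
  letI : MetricSpace X := TopologicalSpace.metrizableSpaceMetric X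
  haveI : SecondCountableTopology X := inferInstance
  obtain ⟨B, hB, hBclopen⟩ := hzd
  obtain ⟨bot, hbot⟩ := isCompact_univ.exists_isLeast (Set.univ_nonempty (α := X))
  obtain ⟨top, htop⟩ := isCompact_univ.exists_isGreatest (Set.univ_nonempty (α := X))
  have hbot' : ∀ x : X, bot ≤ x := fun x => hbot.2 (Set.mem_univ x)
  have htop' : ∀ x : X, x ≤ top := fun x => htop.2 (Set.mem_univ x)
  -- Step 1: between any two points there is a jump (覆盖 pair).
  have key : ∀ a b : X, a < b → ∃ c d : X, a ≤ c ∧ c ⋖ d ∧ d ≤ b := by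
    intro a b hab
    obtain ⟨V, hVB, hbV, hVa⟩ := hB.exists_subset_of_mem_open
      (show b ∈ ({a}ᶜ : Set X) from fun h => hab.ne' (Set.mem_singleton_iff.mp h))
      isClosed_singleton.isOpen_compl
    have hV := hBclopen V hVB
    have hUclopen : IsClopen (Vᶜ : Set X) := hV.compl
    have haU : a ∈ (Vᶜ : Set X) := fun h => hVa h rfl
    have hbU : b ∉ (Vᶜ : Set X) := fun h => h hbV
    have hKc : IsCompact ((Vᶜ : Set X) ∩ Set.Icc a b) :=
      (hUclopen.isClosed.inter isClosed_Icc).isCompact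
    obtain ⟨c, ⟨hcU, hca, hcb⟩, hcub⟩ :=
      hKc.exists_isGreatest ⟨a, haU, le_refl a, hab.le⟩
    have hcltb : c < b := lt_of_le_of_ne hcb (fun h => hbU (h ▸ hcU))
    have hK'c : IsCompact ((Vᶜᶜ : Set X) ∩ Set.Icc c b) :=
      (hUclopen.compl.isClosed.inter isClosed_Icc).isCompact
    obtain ⟨d, ⟨hdU, hdc, hdb⟩, hdlb⟩ :=
      hK'c.exists_isLeast ⟨b, hbU, hcltb.le, le_refl b⟩
    have hcd : c < d := lt_of_le_of_ne hdc (fun h => hdU (h ▸ hcU))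
    refine ⟨c, d, hca, ⟨hcd, fun z h1 h2 => ?_⟩, hdb⟩
    by_cases hz : z ∈ (Vᶜ : Set X)
    · exact absurd (hcub ⟨hz, hca.trans h1.le, h2.le.trans hdb⟩) (not_le.mpr h1)
    · exact absurd (hdlb ⟨hz, h1.le, h2.le.trans hdb⟩) (not_le.mpr h2)
  -- The invariant on intervals.
  set P : X × X → Prop := fun p =>
    (p.1 = bot ∨ ∃ c, c ⋖ p.1) ∧ (p.2 = top ∨ ∃ d, p.2 ⋖ d) ∧ p.1 ≤ p.2 with hPdef
  -- Step 2: good intervals are nondegenerate (no isolated points).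
  have Plt : ∀ p : X × X, P p → p.1 < p.2 := by
    rintro ⟨a, b⟩ ⟨h1, h2, h3⟩
    dsimp only at h1 h2 h3 ⊢
    rcases h3.lt_or_eq with h | h
    · exact h
    exfalso
    subst h
    apply hdense a
    rcases h1 with rfl | ⟨c, hc⟩ <;> rcases h2 with h2 | ⟨d, hd⟩
    · have : ({a} : Set X) = Set.univ := by
        ext y
        simp only [Set.mem_singleton_iff, Set.mem_univ, iff_true]
        exact le_antisymm (h2 ▸ htop' y) (hbot' y)
      rw [this]; exact isOpen_univ
    · have : ({a} : Set X) = Set.Iio d := by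
        ext y
        simp only [Set.mem_singleton_iff, Set.mem_Iio]
        exact ⟨fun h => h ▸ hd.lt, fun h => le_antisymm (hd.le_of_lt h) (hbot' y)⟩
      rw [this]; exact isOpen_Iio
    · have : ({a} : Set X) = Set.Ioi c := by
        ext y
        simp only [Set.mem_singleton_iff, Set.mem_Ioi]
        exact ⟨fun h => h ▸ hc.lt, fun h => le_antisymm (h2 ▸ htop' y) (hc.ge_of_gt h)⟩
      rw [this]; exact isOpen_Ioi
    · have : ({a} : Set X) = Set.Ioo c d := by
        ext y
        simp only [Set.mem_singleton_iff, Set.mem_Ioo]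
        exact ⟨fun h => h ▸ ⟨hc.lt, hd.lt⟩,
          fun h => le_antisymm (hd.le_of_lt h.2) (hc.ge_of_gt h.1)⟩
      rw [this]; exact isOpen_Ioo
  -- Step 3: an injective enumeration of left endpoints of jumps.
  have hcnt : Set.Countable {x : X | ∃ y, x ⋖ y} := countable_setOf_covBy_right
  obtain ⟨e₀, he₀⟩ := Set.countable_iff_exists_injective.mp hcnt
  set e : X → ℕ := fun x =>
    if h : x ∈ {x : X | ∃ y, x ⋖ y} then e₀ ⟨x, h⟩ else 0 with he
  have einj : ∀ c c' : X, (∃ d, c ⋖ d) → (∃ d', c' ⋖ d') → e c = e c' → c = c' := by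
    intro c c' h h' hee
    rw [he] at hee
    simp only [dif_pos (show c ∈ {x : X | ∃ y, x ⋖ y} from h),
      dif_pos (show c' ∈ {x : X | ∃ y, x ⋖ y} from h')] at hee
    exact congrArg Subtype.val (he₀ hee)
  -- Abbreviations for the recursive construction.
  set q : X × X := (bot, top) with hq
  set I : (ℕ → Bool) → ℕ → X × X := itv e q with hI
  set G : X → ℕ → X × X := gtv e q with hG
  set F : X → ℕ → Bool := fb e q with hF
  have Isucc : ∀ y n, I y (n + 1) = splitI e (I y n) (y n) := fun _ _ => rfl
  have Gsucc : ∀ x n, G x (n + 1) = splitI e (G x n) (F x n) := fun _ _ => rfl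
  have Fdef : ∀ x n, F x n = if (jcd e (G x n)).2 ≤ x then true else false := by
    intro x n
    rw [hF, hG]
    unfold CantorLexAux.fb
    exact if_congr Iff.rfl rfl rfl
  -- Step 4: invariants are preserved by splitting.
  have hPsplit : ∀ p : X × X, P p → ∀ b : Bool, P (splitI e p b) := by
    intro p hp b
    obtain ⟨hc, hcd, hd, -⟩ := jcd_spec e p (key p.1 p.2 (Plt p hp))
    cases b
    · simp only [splitI, Bool.false_eq_true, if_false]
      exact ⟨hp.1, Or.inr ⟨_, hcd⟩, hc⟩
    · simp only [splitI, if_true]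
      exact ⟨Or.inr ⟨_, hcd⟩, hp.2.1, hd⟩
  have hstep : ∀ p : X × X, P p → ∀ b : Bool,
      p.1 ≤ (splitI e p b).1 ∧ (splitI e p b).2 ≤ p.2 := by
    intro p hp b
    obtain ⟨hc, hcd, hd, -⟩ := jcd_spec e p (key p.1 p.2 (Plt p hp))
    cases b
    · simp only [splitI, Bool.false_eq_true, if_false]
      exact ⟨le_refl _, (hcd.lt.le).trans hd⟩
    · simp only [splitI, if_true]
      exact ⟨hc.trans hcd.lt.le, le_refl _⟩
  have hPI : ∀ y n, P (I y n) := by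
    intro y n
    induction n with
    | zero => exact ⟨Or.inl rfl, Or.inl rfl, hbot' top⟩
    | succ n ih => rw [Isucc]; exact hPsplit _ ih _
  have hgf : ∀ (x : X) (n : ℕ), G x n = I (F x) n := by
    intro x n
    induction n with
    | zero => rfl
    | succ n ih => rw [Gsucc, Isucc, ih]
  have hPg : ∀ x n, P (G x n) := fun x n => (hgf x n) ▸ hPI (F x) n
  -- Step 5: `x` belongs to its interval at every stage.
  have hmem : ∀ (x : X) (n : ℕ), x ∈ Set.Icc (G x n).1 (G x n).2 := by
    intro x n
    induction n with
    | zero => exact ⟨hbot' x, htop' x⟩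
    | succ n ih =>
      obtain ⟨hc, hcd, hd, -⟩ := jcd_spec e (G x n) (key _ _ (Plt _ (hPg x n)))
      rw [Gsucc, Fdef]
      by_cases hdx : (jcd e (G x n)).2 ≤ x
      · simp only [if_pos hdx, splitI, if_true]
        exact ⟨hdx, ih.2⟩
      · simp only [if_neg hdx, splitI, Bool.false_eq_true, if_false]
        exact ⟨ih.1, hcd.le_of_lt (not_le.mp hdx)⟩
  -- Step 6: injectivity (separation by jumps).
  have hsep : ∀ x x' : X, x < x' → F x ≠ F x' := by
    intro x x' hxx' heq
    obtain ⟨c, d, hxc, hcd, hdx'⟩ := key x x' hxx'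
    have hgg : ∀ n, G x n = G x' n := by
      intro n
      induction n with
      | zero => rfl
      | succ n ih => rw [Gsucc, Gsucc, ih, heq]
    have hin : ∀ n, (G x n).1 ≤ c ∧ d ≤ (G x n).2 := fun n =>
      ⟨(hmem x n).1.trans hxc, hdx'.trans (hgg n ▸ (hmem x' n).2)⟩
    have hle : ∀ n, jIdx e (G x n) ≤ e c := fun n =>
      jIdx_min e _ (hin n).1 hcd (hin n).2
    have hmono : ∀ n, jIdx e (G x n) < jIdx e (G x (n + 1)) := by
      intro n
      obtain ⟨h1, h2, h3, h4⟩ := jcd_spec e (G x n) (key _ _ (Plt _ (hPg x n)))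
      obtain ⟨h1', h2', h3', h4'⟩ :=
        jcd_spec e (G x (n + 1)) (key _ _ (Plt _ (hPg x (n + 1))))
      have hsub1 : (G x n).1 ≤ (G x (n + 1)).1 ∧ (G x (n + 1)).2 ≤ (G x n).2 := by
        rw [Gsucc]; exact hstep _ (hPg x n) _
      have hle1 : jIdx e (G x n) ≤ e (jcd e (G x (n + 1))).1 :=
        jIdx_min e _ (hsub1.1.trans h1') h2' (h3'.trans hsub1.2)
      rw [← h4']
      rcases hle1.lt_or_eq with h | h
      · exact h
      exfalso
      -- equal indices force equal jumps, which is impossible after splitting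
      have hcc : (jcd e (G x n)).1 = (jcd e (G x (n + 1))).1 :=
        einj _ _ ⟨_, h2⟩ ⟨_, h2'⟩ (h4.trans h)
      have hdd : (jcd e (G x n)).2 = (jcd e (G x (n + 1))).2 :=
        h2.unique_right (hcc ▸ h2')
      cases hFxn : F x n
      · have h2eq : (G x (n + 1)).2 = (jcd e (G x n)).1 := by
          rw [Gsucc, hFxn]
          simp [splitI]
        have := h3'
        rw [h2eq, ← hdd] at this
        exact absurd this (not_le.mpr h2.lt)
      · have h1eq : (G x (n + 1)).1 = (jcd e (G x n)).2 := by
          rw [Gsucc, hFxn]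
          simp [splitI]
        have := h1'
        rw [h1eq] at this
        rw [← hcc] at this
        exact absurd this (not_le.mpr h2.lt)
    have hsm : StrictMono (fun n => jIdx e (G x n)) := strictMono_nat_of_lt_succ hmono
    exact absurd (hle (e c + 1)) (not_le.mpr (Nat.lt_of_succ_le hsm.le_apply))
  -- Step 7: strict monotonicity into the lexicographic order.
  have hsm : StrictMono (fun x : X => (toLex (F x) : CantorLex)) := by
    intro x x' hxx'
    have hne : F x ≠ F x' := hsep x x' hxx'
    have hexn : ∃ n, F x n ≠ F x' n := Function.ne_iff.mp hne
    have hnmin : ∀ k, k < Nat.find hexn → F x k = F x' k := fun k hk =>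
      not_not.mp (Nat.find_min hexn hk)
    have hgg : ∀ k, k ≤ Nat.find hexn → G x k = G x' k := by
      intro k hk
      induction k with
      | zero => rfl
      | succ k ih =>
        rw [Gsucc, Gsucc, ih (Nat.le_of_succ_le hk),
          hnmin k (Nat.lt_of_succ_le hk)]
    have hgn : G x (Nat.find hexn) = G x' (Nat.find hexn) := hgg _ le_rfl
    have hfx : F x (Nat.find hexn) = false ∧ F x' (Nat.find hexn) = true := by
      by_cases hdx : (jcd e (G x (Nat.find hexn))).2 ≤ x
      · exfalso
        apply Nat.find_spec hexn
        have hdx2 : (jcd e (G x' (Nat.find hexn))).2 ≤ x' := by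
          rw [← hgn]; exact hdx.trans hxx'.le
        rw [Fdef, Fdef, if_pos hdx, if_pos hdx2]
      · have h1 : F x (Nat.find hexn) = false := by rw [Fdef, if_neg hdx]
        cases h2 : F x' (Nat.find hexn)
        · exact absurd (h1.trans h2.symm) (Nat.find_spec hexn)
        · exact ⟨h1, rfl⟩
    refine ⟨Nat.find hexn, fun j hj => hnmin j hj, ?_⟩
    show F x (Nat.find hexn) < F x' (Nat.find hexn)
    rw [hfx.1, hfx.2]
    exact Bool.false_lt_true
  -- Step 8: surjectivity.
  have hsurj : Function.Surjective (fun x : X => (toLex (F x) : CantorLex)) := by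
    intro y
    set z : ℕ → Bool := ofLex y with hz
    have hne : ∀ n, (Set.Icc (I z n).1 (I z n).2).Nonempty :=
      fun n => Set.nonempty_Icc.mpr (hPI z n).2.2
    have hanti : Antitone (fun n => Set.Icc (I z n).1 (I z n).2) := by
      apply antitone_nat_of_succ_le
      intro n
      rw [Isucc]
      exact Set.Icc_subset_Icc (hstep _ (hPI z n) _).1 (hstep _ (hPI z n) _).2
    obtain ⟨x, hx⟩ :=
      IsCompact.nonempty_iInter_of_directed_nonempty_isCompact_isClosed
        (fun n => Set.Icc (I z n).1 (I z n).2) hanti.directed_ge hne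
        (fun n => isClosed_Icc.isCompact) (fun n => isClosed_Icc)
    simp only [Set.mem_iInter] at hx
    have hfz : ∀ n, (∀ k, k < n → F x k = z k) → F x n = z n := by
      intro n hkn
      have hgI : ∀ k, k ≤ n → G x k = I z k := by
        intro k hk
        induction k with
        | zero => rfl
        | succ k ih =>
          rw [Gsucc, ih (Nat.le_of_succ_le hk), hkn k (Nat.lt_of_succ_le hk), Isucc]
      have hgn := hgI n le_rfl
      obtain ⟨h1, h2, h3, -⟩ := jcd_spec e (I z n) (key _ _ (Plt _ (hPI z n)))
      have hx1 := hx (n + 1)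
      rw [Isucc] at hx1
      cases hzn : z n
      · rw [hzn] at hx1
        simp only [splitI, Bool.false_eq_true, if_false] at hx1
        have hxc : x ≤ (jcd e (I z n)).1 := hx1.2
        have hndx : ¬(jcd e (G x n)).2 ≤ x := by
          rw [hgn]
          exact fun h => absurd (h.trans hxc) (not_le.mpr h2.lt)
        rw [Fdef, if_neg hndx]
      · rw [hzn] at hx1
        simp only [splitI, if_true] at hx1
        have hdx : (jcd e (G x n)).2 ≤ x := by rw [hgn]; exact hx1.1
        rw [Fdef, if_pos hdx]
    have hall : ∀ n, F x n = z n := by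
      intro n
      induction n using Nat.strong_induction_on with
      | _ n ih => exact hfz n ih
    refine ⟨x, ?_⟩
    show (toLex (F x) : CantorLex) = y
    rw [funext hall, hz]
    exact toLex_ofLex y
  -- Conclusion.
  let iso : X ≃o CantorLex := StrictMono.orderIsoOfSurjective _ hsm hsurj
  haveI : OrderTopology CantorLex := ⟨rfl⟩
  exact ⟨⟨iso⟩, ⟨iso.toHomeomorph⟩⟩
end

section
/- Let X be a compact linearly ordered topological space and let a, b ∈ X with a < b. Then there exists a continuous order-preserving map f : X → [0,1] (x ≤ y implies f(x) ≤ f(y)) such that f(x) = 0 for all x ≤ a and f(x) = 1 for all x ≥ b. -/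
open Set

/-- in a compact linearly ordered topological space `X`, for any `a < b`
there is a continuous order-preserving map `f : X → [0,1]` with `f = 0` on `(←, a]`
and `f = 1` on `[b, →)`. -/
theorem exists_monotone_urysohn_of_compact_lots
    {X : Type*} [LinearOrder X] [TopologicalSpace X] [OrderTopology X] [CompactSpace X]
    (a b : X) (hab : a < b) :
    ∃ f : X → ↥unitInterval, Continuous f ∧ Monotone f ∧
      (∀ x : X, x ≤ a → f x = 0) ∧ (∀ x : X, b ≤ x → f x = 1) := by
  obtain ⟨f, hf0, hf1, hf01⟩ := exists_continuous_zero_one_of_isClosed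
    (isClosed_Iic (a := a)) (isClosed_Ici (a := b))
    (Iic_disjoint_Ici.2 (not_le.2 hab))
  -- the monotone envelope
  set g : X → ℝ := fun x => sSup (f '' Iic x) with hg
  have hbdd : ∀ x : X, BddAbove (f '' Iic x) := fun x =>
    ⟨1, fun r ⟨y, _, hy⟩ => hy ▸ (hf01 y).2⟩
  have hmem : ∀ x : X, f x ∈ f '' Iic x := fun x => ⟨x, le_refl x, rfl⟩
  have hgmono : Monotone g := fun x y hxy =>
    csSup_le_csSup (hbdd y) ⟨f x, hmem x⟩ (image_mono (Iic_subset_Iic.2 hxy))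
  have hle : ∀ x y : X, y ≤ x → f y ≤ g x := fun x y hyx =>
    le_csSup (hbdd x) ⟨y, hyx, rfl⟩
  -- the sup is attained
  have hmax : ∀ x : X, ∃ y ≤ x, g x = f y := by
    intro x
    obtain ⟨y, hy, hy'⟩ := (isClosed_Iic (a := x)).isCompact.exists_isMaxOn
      ⟨x, le_refl x⟩ (f.continuous.continuousOn)
    exact ⟨y, hy, le_antisymm (csSup_le ⟨f x, hmem x⟩
      (fun r ⟨z, hz, hz'⟩ => hz' ▸ hy' hz)) (hle x y hy)⟩
  have hg0 : ∀ x : X, 0 ≤ g x := fun x => le_trans (hf01 x).1 (hle x x le_rfl)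
  have hg1 : ∀ x : X, g x ≤ 1 := fun x => by
    obtain ⟨y, _, hy'⟩ := hmax x; rw [hy']; exact (hf01 y).2
  -- continuity of g
  have hgcont : Continuous g := by
    rw [(OrderTopology.topology_eq_generate_intervals (α := ℝ)),
      continuous_generateFrom_iff]
    rintro s ⟨r, rfl | rfl⟩
    · -- preimage of Ioi r
      have : g ⁻¹' Ioi r = {x | ∃ y ≤ x, r < f y} := by
        ext x
        constructor
        · intro hx
          obtain ⟨y, hy, hy'⟩ := hmax x
          exact ⟨y, hy, hy' ▸ hx⟩
        · rintro ⟨y, hy, hy'⟩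
          exact lt_of_lt_of_le hy' (hle x y hy)
      rw [this]
      refine isOpen_iff_mem_nhds.2 ?_
      rintro x ⟨y, hy, hy'⟩
      rcases eq_or_lt_of_le hy with rfl | hlt
      · exact Filter.mem_of_superset
          (((f.continuous.isOpen_preimage _ isOpen_Ioi).mem_nhds hy'))
          (fun z hz => ⟨z, le_refl z, hz⟩)
      · exact Filter.mem_of_superset ((isOpen_Ioi (a := y)).mem_nhds hlt)
          (fun z hz => ⟨y, le_of_lt hz, hy'⟩)
    · -- preimage of Iio r
      have : g ⁻¹' Iio r = {x | ∀ y ≤ x, f y < r} := by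
        ext x
        constructor
        · intro hx y hy
          exact lt_of_le_of_lt (hle x y hy) hx
        · intro h
          obtain ⟨y, hy, hy'⟩ := hmax x
          exact lt_of_eq_of_lt hy' (h y hy)
      rw [this]
      refine isOpen_iff_mem_nhds.2 ?_
      intro x hx
      by_cases htop : ∃ u : X, x < u
      · have hU : IsOpen (f ⁻¹' Iio r) := f.continuous.isOpen_preimage _ isOpen_Iio
        have hxU : f ⁻¹' Iio r ∈ nhds x := hU.mem_nhds (hx x le_rfl)
        obtain ⟨u, hxu, hu⟩ := exists_Ico_subset_of_mem_nhds hxU htop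
        refine Filter.mem_of_superset ((isOpen_Iio (a := u)).mem_nhds hxu) ?_
        intro z hz y hyz
        rcases le_or_gt y x with h | h
        · exact hx y h
        · exact hu ⟨le_of_lt h, lt_of_le_of_lt hyz hz⟩
      · push_neg at htop
        refine Filter.mem_of_superset Filter.univ_mem ?_
        intro z _ y hyz
        exact hx y (le_trans hyz (htop z))
  refine ⟨fun x => ⟨g x, hg0 x, hg1 x⟩, hgcont.subtype_mk _, fun x y hxy => hgmono hxy,
    fun x hx => ?_, fun x hx => ?_⟩
  · ext
    obtain ⟨y, hy, hy'⟩ := hmax x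
    simpa [hy'] using hf0 (le_trans hy hx)
  · ext
    have h1 : (1:ℝ) ≤ g x := by
      have := hle x b hx
      rwa [hf1 self_mem_Ici, Pi.one_apply] at this
    exact le_antisymm (hg1 x) h1
end

section
/- Let X be a compact linearly ordered topological space of weight ℵ₁. Then there exist compact metrizable linearly ordered topological spaces X_α for α < ω₁, continuous order-preserving surjections q^β_α : X_β → X_α for α ≤ β < ω₁ with q^α_α = id and q^β_α ∘ q^γ_β = q^γ_α for α ≤ β ≤ γ, and continuous order-preserving surjections q_α : X → X_α with q_α = q^β_α ∘ q_β for α ≤ β, such that: for every limit ordinal δ < ω₁ the diagonal map x ↦ (q^δ_ξ(x))_{ξ<δ} is a homeomorphism of X_δ onto the inverse limit of the sequence below δ, and the diagonal map x ↦ (q_α(x))_{α<ω₁} is a homeomorphism of X onto the inverse limit {(x_α) ∈ Π_{α<ω₁} X_α : q^β_α(x_β) = x_α for α ≤ β}. -/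
universe u

/-- `Z, q2, q` form a continuous inverse sequence of compact metrizable linearly
ordered spaces, indexed by `ω₁`, with continuous order-preserving surjective bonding
maps and projections, whose limit is `X`: at every limit ordinal `δ < ω₁` the diagonal
map is a homeomorphism of `Z δ` onto the inverse limit of the sequence below `δ`, and
the diagonal map of the projections is a homeomorphism of `X` onto the inverse limit
of the whole sequence. -/
def IsApproximatingSystem {X : Type u} [LinearOrder X] [TopologicalSpace X]
    (Z : OmegaOneSeg → Type u)
    [∀ α, LinearOrder (Z α)] [∀ α, TopologicalSpace (Z α)]
    (q2 : ∀ α β : OmegaOneSeg, α ≤ β → Z β → Z α)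
    (q : ∀ α : OmegaOneSeg, X → Z α) : Prop :=
  (∀ α, OrderTopology (Z α)) ∧ (∀ α, CompactSpace (Z α)) ∧
  (∀ α, TopologicalSpace.MetrizableSpace (Z α)) ∧
  (∀ (α β : OmegaOneSeg) (h : α ≤ β), Continuous (q2 α β h)) ∧
  (∀ (α β : OmegaOneSeg) (h : α ≤ β), Monotone (q2 α β h)) ∧
  (∀ (α β : OmegaOneSeg) (h : α ≤ β), Function.Surjective (q2 α β h)) ∧
  (∀ α : OmegaOneSeg, q2 α α le_rfl = id) ∧
  (∀ (α β γ : OmegaOneSeg) (hab : α ≤ β) (hbc : β ≤ γ),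
    q2 α β hab ∘ q2 β γ hbc = q2 α γ (hab.trans hbc)) ∧
  (∀ α, Continuous (q α)) ∧ (∀ α, Monotone (q α)) ∧
  (∀ α, Function.Surjective (q α)) ∧
  (∀ (α β : OmegaOneSeg) (h : α ≤ β), q2 α β h ∘ q β = q α) ∧
  (∀ δ : OmegaOneSeg, Order.IsSuccLimit (δ : Ordinal) →
    ∃ e : Z δ ≃ₜ {g : ∀ ξ : {ξ : OmegaOneSeg // ξ < δ}, Z ξ.1 //
        ∀ (ξ η : {ξ : OmegaOneSeg // ξ < δ}) (hle : ξ.1 ≤ η.1),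
          q2 ξ.1 η.1 hle (g η) = g ξ},
      ∀ (x : Z δ) (ξ : {ξ : OmegaOneSeg // ξ < δ}), (e x).1 ξ = q2 ξ.1 δ ξ.2.le x) ∧
  (∃ e : X ≃ₜ {g : ∀ α : OmegaOneSeg, Z α //
      ∀ (α β : OmegaOneSeg) (h : α ≤ β), q2 α β h (g β) = g α},
    ∀ (x : X) (α : OmegaOneSeg), (e x).1 α = q α x)

set_option linter.unusedSectionVars false

open Set Function TopologicalSpace

namespace InvLimAux

/-! ### A monotone Urysohn lemma for compact linearly ordered spaces -/

section MonoUry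
variable {X : Type*} [LinearOrder X] [TopologicalSpace X] [OrderTopology X] [CompactSpace X]

lemma exists_isLUB_mem_closure {S : Set X} (hS : S.Nonempty) :
    ∃ m, IsLUB S m ∧ m ∈ closure S := by
  obtain ⟨m, hmem, hub⟩ := (isClosed_closure (s := S)).isCompact.exists_isGreatest hS.closure
  refine ⟨m, ⟨fun s hs => hub (subset_closure hs), fun u hu => ?_⟩, hmem⟩
  have : closure S ⊆ Iic u := closure_minimal (fun s hs => hu hs) isClosed_Iic
  exact this hmem

lemma exists_isGLB_mem_closure {S : Set X} (hS : S.Nonempty) :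
    ∃ m, IsGLB S m ∧ m ∈ closure S := by
  obtain ⟨m, hmem, hlb⟩ := (isClosed_closure (s := S)).isCompact.exists_isLeast hS.closure
  refine ⟨m, ⟨fun s hs => hlb (subset_closure hs), fun u hu => ?_⟩, hmem⟩
  have : closure S ⊆ Ici u := closure_minimal (fun s hs => hu hs) isClosed_Ici
  exact this hmem

lemma isLUB_Iio_of_no_pred {m : X} (h : ¬ ∃ p, p < m ∧ Ioo p m = ∅) : IsLUB (Iio m) m := by
  constructor
  · exact fun t ht => le_of_lt ht
  · intro u hu
    by_contra hum
    push_neg at hum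
    have : Ioo u m ≠ ∅ := fun he => h ⟨u, hum, he⟩
    obtain ⟨t, ht⟩ := nonempty_iff_ne_empty.mpr this
    exact absurd (hu ht.2) (not_le.mpr ht.1)

lemma mem_closure_Iio_of_no_pred {m : X} (h : ¬ ∃ p, p < m ∧ Ioo p m = ∅)
    (hne : ∃ p, p < m) : m ∈ closure (Iio m) :=
  (isLUB_Iio_of_no_pred h).mem_closure ⟨hne.choose, hne.choose_spec⟩

/-- Monotone Urysohn lemma for compact linearly ordered spaces. -/
lemma exists_monotone_urysohn {a b : X} (hab : a < b) :
    ∃ g : X → ℝ, Continuous g ∧ Monotone g ∧ (∀ x, x ≤ a → g x = 0) ∧ (∀ x, b ≤ x → g x = 1) := by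
  obtain ⟨f, hf0, hf1, hf01⟩ := exists_continuous_zero_one_of_isClosed
    (isClosed_Iic (a := a)) (isClosed_Ici (a := b))
    (by rw [Set.disjoint_left]; intro x hx hx'; exact absurd (le_trans hx' hx) (not_le.mpr hab))
  set g : X → ℝ := fun x => sSup (f '' Iic x) with hg
  have hne : ∀ x : X, (f '' Iic x).Nonempty := fun x => ⟨f x, mem_image_of_mem f self_mem_Iic⟩
  have hbdd : ∀ x : X, BddAbove (f '' Iic x) := by
    intro x; exact ⟨1, fun v ⟨t, _, ht⟩ => ht ▸ (hf01 t).2⟩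
  have hfg : ∀ x, f x ≤ g x := fun x => le_csSup (hbdd x) (mem_image_of_mem f self_mem_Iic)
  have hmono : Monotone g := by
    intro x y hxy
    exact csSup_le_csSup (hbdd y) (hne x) (fun _ ⟨t, ht, e⟩ => ⟨t, Iic_subset_Iic.mpr hxy ht, e⟩)
  have hg0 : ∀ x, x ≤ a → g x = 0 := by
    intro x hx
    refine le_antisymm (csSup_le (hne x) ?_) ?_
    · rintro v ⟨t, ht, rfl⟩
      have : f t = 0 := hf0 (le_trans ht hx)
      simp [this]
    · have : f x = 0 := hf0 hx
      calc (0:ℝ) = f x := this.symm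
        _ ≤ g x := hfg x
  have hg1 : ∀ x, b ≤ x → g x = 1 := by
    intro x hx
    refine le_antisymm (csSup_le (hne x) ?_) ?_
    · rintro v ⟨t, ht, rfl⟩; exact (hf01 t).2
    · have : f b = 1 := hf1 (le_refl b)
      calc (1:ℝ) = f b := this.symm
        _ ≤ g x := le_csSup (hbdd x) (mem_image_of_mem f hx)
  -- continuity
  have hIoi : ∀ c : ℝ, IsOpen (g ⁻¹' Ioi c) := by
    intro c
    rcases eq_empty_or_nonempty (g ⁻¹' Ioi c) with hT | hT
    · simp [hT]
    set T := g ⁻¹' Ioi c with hTdef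
    have hupper : ∀ {s t : X}, s ∈ T → s ≤ t → t ∈ T := by
      intro s t hs hst
      exact lt_of_lt_of_le hs (hmono hst)
    obtain ⟨m, hglb, _⟩ := exists_isGLB_mem_closure hT
    by_cases hmT : m ∈ T
    · by_cases hmin : ∀ x, m ≤ x
      · have : T = univ := eq_univ_of_forall (fun x => hupper hmT (hmin x))
        rw [this]; exact isOpen_univ
      push_neg at hmin
      by_cases hsucc : ∃ p, p < m ∧ Ioo p m = ∅
      · obtain ⟨p, hpm, hpo⟩ := hsucc
        have : T = Ioi p := by
          apply Subset.antisymm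
          · intro x hx; exact lt_of_lt_of_le hpm (hglb.1 hx)
          · intro x hx
            have hmx : m ≤ x := by
              by_contra hxm
              exact absurd (mem_Ioo.mpr ⟨hx, not_le.mp hxm⟩) (by rw [hpo]; exact notMem_empty x)
            exact hupper hmT hmx
        rw [this]; exact isOpen_Ioi
      · exfalso
        have hmcl : m ∈ closure (Iio m) := mem_closure_Iio_of_no_pred hsucc hmin
        have hgm : c < g m := hmT
        obtain ⟨v, ⟨s, hsm, rfl⟩, hcv⟩ := exists_lt_of_lt_csSup (hne m) hgm
        have hflt : ∀ t, t < m → f t ≤ c := by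
          intro t htm
          have : t ∉ T := fun ht => absurd (hglb.1 ht) (not_le.mpr htm)
          have : ¬ c < g t := this
          exact le_trans (hfg t) (not_lt.mp this)
        have hsm' : s = m := by
          rcases lt_or_eq_of_le hsm with h | h
          · exact absurd (hflt s h) (not_le.mpr hcv)
          · exact h
        subst hsm'
        have : f s ≤ c := by
          have hcl : IsClosed {x : X | f x ≤ c} := isClosed_le (map_continuous f) continuous_const
          have : closure (Iio s) ⊆ {x : X | f x ≤ c} :=
            closure_minimal (fun t ht => hflt t ht) hcl
          exact this hmcl
        exact absurd this (not_le.mpr hcv)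
    · have : T = Ioi m := by
        apply Subset.antisymm
        · intro x hx
          exact lt_of_le_of_ne (hglb.1 hx) (fun h => hmT (h ▸ hx))
        · intro x hx
          have hex : ∃ t ∈ T, t < x := by
            by_contra h
            push_neg at h
            exact absurd (hglb.2 fun t ht => h t ht) (not_le.mpr hx)
          obtain ⟨t, htT, htx⟩ := hex
          exact hupper htT (le_of_lt htx)
      rw [this]; exact isOpen_Ioi
  have hIio : ∀ c : ℝ, IsOpen (g ⁻¹' Iio c) := by
    intro c
    rcases eq_empty_or_nonempty (g ⁻¹' Iio c) with hS | hS
    · simp [hS]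
    set S := g ⁻¹' Iio c with hSdef
    have hlower : ∀ {s t : X}, s ∈ S → t ≤ s → t ∈ S := by
      intro s t hs hts
      exact lt_of_le_of_lt (hmono hts) hs
    obtain ⟨m, hlub, _⟩ := exists_isLUB_mem_closure hS
    by_cases hmS : m ∈ S
    · by_cases hmax : ∀ x, x ≤ m
      · have : S = univ := eq_univ_of_forall (fun x => hlower hmS (hmax x))
        rw [this]; exact isOpen_univ
      push_neg at hmax
      by_cases hsucc : ∃ u, m < u ∧ Ioo m u = ∅
      · obtain ⟨p, hpm, hpo⟩ := hsucc
        have : S = Iio p := by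
          apply Subset.antisymm
          · intro x hx; exact lt_of_le_of_lt (hlub.1 hx) hpm
          · intro x hx
            have hxm : x ≤ m := by
              by_contra hxm
              exact absurd (mem_Ioo.mpr ⟨not_le.mp hxm, hx⟩) (by rw [hpo]; exact notMem_empty x)
            exact hlower hmS hxm
        rw [this]; exact isOpen_Iio
      · exfalso
        have hgm : g m < c := hmS
        set w : ℝ := (g m + c) / 2 with hw
        have hvw : g m < w := by rw [hw]; linarith
        have hwc : w < c := by rw [hw]; linarith
        have key : ∀ t, m < t → ∃ s, m < s ∧ s ≤ t ∧ w < f s := by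
          intro t hmt
          have htS : t ∉ S := fun ht => absurd (hlub.1 ht) (not_le.mpr hmt)
          have hgt : c ≤ g t := not_lt.mp htS
          obtain ⟨v, ⟨s, hst, rfl⟩, hws⟩ := exists_lt_of_lt_csSup (hne t) (lt_of_lt_of_le hwc hgt)
          have hms : m < s := by
            by_contra hsm
            have : f s ≤ g m := le_csSup (hbdd m) (mem_image_of_mem f (not_lt.mp hsm))
            exact absurd (lt_of_lt_of_le hws this) (not_lt.mpr (le_of_lt hvw))
          exact ⟨s, hms, hst, hws⟩
        have hmcl : m ∈ closure {x : X | w ≤ f x} := by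
          rw [mem_closure_iff]
          intro o ho hmo
          obtain ⟨u, hmu, hsub⟩ := exists_Ico_subset_of_mem_nhds (ho.mem_nhds hmo) hmax
          have : Ioo m u ≠ ∅ := fun he => hsucc ⟨u, hmu, he⟩
          obtain ⟨t, htm, htu⟩ := nonempty_iff_ne_empty.mpr this
          obtain ⟨s, hms, hst, hws⟩ := key t htm
          exact ⟨s, hsub ⟨le_of_lt hms, lt_of_le_of_lt hst htu⟩, le_of_lt hws⟩
        have hcl : IsClosed {x : X | w ≤ f x} := isClosed_le continuous_const (map_continuous f)
        have hwm : m ∈ {x : X | w ≤ f x} := by rw [← hcl.closure_eq]; exact hmcl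
        exact absurd (lt_of_le_of_lt hwm (lt_of_le_of_lt (hfg m) hvw)) (lt_irrefl w)
    · have : S = Iio m := by
        apply Subset.antisymm
        · intro x hx
          exact lt_of_le_of_ne (hlub.1 hx) (fun h => hmS (h ▸ hx))
        · intro x hx
          have hex : ∃ t ∈ S, x < t := by
            by_contra h
            push_neg at h
            exact absurd (hlub.2 fun t ht => h t ht) (not_le.mpr hx)
          obtain ⟨t, htS, htx⟩ := hex
          exact hlower htS (le_of_lt htx)
      rw [this]; exact isOpen_Iio
  refine ⟨g, ?_, hmono, hg0, hg1⟩
  have hgen : (inferInstance : TopologicalSpace ℝ) =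
      TopologicalSpace.generateFrom {s : Set ℝ | ∃ a, s = Ioi a ∨ s = Iio a} :=
    OrderTopology.topology_eq_generate_intervals
  have : @Continuous X ℝ _
      (TopologicalSpace.generateFrom {s : Set ℝ | ∃ a, s = Ioi a ∨ s = Iio a}) g := by
    apply continuous_generateFrom_iff.mpr
    rintro s ⟨c, rfl | rfl⟩
    · exact hIoi c
    · exact hIio c
  rwa [← hgen] at this

end MonoUry

/-! ### Countability of initial segments of `ω₁` -/

instance countable_seg (α : OmegaOneSeg) : Countable {γ : OmegaOneSeg // γ < α} := by
  have h0 : (Set.Iio (α : Ordinal)).Countable := by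
    rw [Cardinal.countable_iff_lt_aleph_one, Ordinal.mk_Iio_ordinal, Cardinal.lift_lt_aleph_one]
    exact Cardinal.lt_ord.mp α.2
  have h1 : Countable (Set.Iio (α : Ordinal)) := h0.to_subtype
  refine Function.Injective.countable
    (f := fun γ : {γ : OmegaOneSeg // γ < α} => (⟨γ.1.1, γ.2⟩ : Set.Iio (α : Ordinal))) ?_
  intro γ₁ γ₂ h
  simp only [Subtype.mk.injEq] at h
  exact Subtype.ext (Subtype.ext (Subtype.mk.inj h))

/-! ### The separating family of monotone maps -/

lemma exists_sep_family {X : Type u} [LinearOrder X] [TopologicalSpace X] [OrderTopology X]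
    [CompactSpace X] (hw : tweight X = Cardinal.aleph 1) :
    ∃ F : OmegaOneSeg → X → ℝ, (∀ γ, Continuous (F γ)) ∧ (∀ γ, Monotone (F γ)) ∧
      ∀ x y : X, x < y → ∃ γ, F γ x = 0 ∧ F γ y = 1 := by
  classical
  haveI hne : Nonempty {B : Set (Set X) // IsTopologicalBasis B} :=
    ⟨⟨_, isTopologicalBasis_opens⟩⟩
  obtain ⟨B0, hB0⟩ : ∃ B : {B : Set (Set X) // IsTopologicalBasis B},
      Cardinal.mk B.1 = Cardinal.aleph 1 := by
    have h1 : tweight X ∈ Set.range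
        (fun B : {B : Set (Set X) // IsTopologicalBasis B} => Cardinal.mk B.1) := by
      rw [tweight, iInf]
      exact csInf_mem (Set.range_nonempty _)
    obtain ⟨B, hB⟩ := h1
    have hB' : Cardinal.mk B.1 = tweight X := hB
    exact ⟨B, hB'.trans hw⟩
  have hBbasis := B0.2
  set P : Type u := {p : ↥B0.1 × ↥B0.1 //
    ∃ a b : X, a < b ∧ (p.1 : Set X) ⊆ Iic a ∧ (p.2 : Set X) ⊆ Ici b} with hP
  choose pa pb hpab hpU hpV using fun p : P => p.2
  choose gf hgc hgm hg0 hg1 using fun p : P => exists_monotone_urysohn (hpab p)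
  have key : ∀ x y : X, x < y → ∃ p : P, x ∈ (p.1.1 : Set X) ∧ y ∈ (p.1.2 : Set X) := by
    intro x y hxy
    have main : ∃ U, U ∈ B0.1 ∧ ∃ V, V ∈ B0.1 ∧ ∃ a b : X,
        a < b ∧ U ⊆ Iic a ∧ V ⊆ Ici b ∧ x ∈ U ∧ y ∈ V := by
      by_cases hjump : ∃ p q : X, x ≤ p ∧ p < q ∧ q ≤ y ∧ Ioo p q = ∅
      · obtain ⟨p, q, hxp, hpq, hqy, h0⟩ := hjump
        have hIic : Iic p = Iio q := by
          ext z
          simp only [mem_Iic, mem_Iio]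
          constructor
          · exact fun hz => lt_of_le_of_lt hz hpq
          · intro hz
            by_contra hzp
            have : z ∈ Ioo p q := ⟨not_le.mp hzp, hz⟩
            rw [h0] at this
            exact this
        have hIci : Ici q = Ioi p := by
          ext z
          simp only [mem_Ici, mem_Ioi]
          constructor
          · exact fun hz => lt_of_lt_of_le hpq hz
          · intro hz
            by_contra hzq
            have : z ∈ Ioo p q := ⟨hz, not_le.mp hzq⟩
            rw [h0] at this
            exact this
        obtain ⟨U, hUB, hxU, hUsub⟩ := hBbasis.exists_subset_of_mem_open
          (show x ∈ Iic p from hxp) (by rw [hIic]; exact isOpen_Iio)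
        obtain ⟨V, hVB, hyV, hVsub⟩ := hBbasis.exists_subset_of_mem_open
          (show y ∈ Ici q from hqy) (by rw [hIci]; exact isOpen_Ioi)
        exact ⟨U, hUB, V, hVB, p, q, hpq, hUsub, hVsub, hxU, hyV⟩
      · push_neg at hjump
        obtain ⟨z, hz⟩ := hjump x y le_rfl hxy le_rfl
        obtain ⟨z1, hz1⟩ := hjump x z le_rfl hz.1 (le_of_lt hz.2)
        obtain ⟨U, hUB, hxU, hUsub⟩ := hBbasis.exists_subset_of_mem_open
          (show x ∈ Iio z1 from hz1.1) isOpen_Iio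
        obtain ⟨V, hVB, hyV, hVsub⟩ := hBbasis.exists_subset_of_mem_open
          (show y ∈ Ioi z from hz.2) isOpen_Ioi
        exact ⟨U, hUB, V, hVB, z1, z, hz1.2, fun t ht => le_of_lt (hUsub ht),
          fun t ht => le_of_lt (hVsub ht), hxU, hyV⟩
    obtain ⟨U, hUB, V, hVB, a, b, hab, hU, hV, hxU, hyV⟩ := main
    exact ⟨⟨(⟨U, hUB⟩, ⟨V, hVB⟩), ⟨a, b, hab, hU, hV⟩⟩, hxU, hyV⟩
  have hPle : Cardinal.mk P ≤ Cardinal.aleph 1 := by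
    have h1 : Cardinal.mk P ≤ Cardinal.mk (↥B0.1 × ↥B0.1) := Cardinal.mk_subtype_le _
    have h2 : Cardinal.mk (↥B0.1 × ↥B0.1) = Cardinal.aleph 1 := by
      rw [Cardinal.mk_prod, Cardinal.lift_id, hB0]
      exact Cardinal.mul_eq_self (Cardinal.aleph0_le_aleph 1)
    rwa [h2] at h1
  obtain ⟨ι⟩ : Nonempty (P ↪ OmegaOneSeg) := by
    rw [← Cardinal.lift_mk_le']
    have hOm : Cardinal.aleph 1 ≤ Cardinal.mk OmegaOneSeg := by
      have h3 := Ordinal.mk_Iio_ordinal (Cardinal.aleph 1).ord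
      rw [Cardinal.card_ord] at h3
      calc Cardinal.aleph 1 ≤ Cardinal.lift.{1} (Cardinal.aleph 1) :=
            Cardinal.aleph_one_le_lift.mpr le_rfl
        _ = Cardinal.mk OmegaOneSeg := h3.symm
    calc Cardinal.lift.{1} (Cardinal.mk P) ≤ Cardinal.aleph 1 :=
          Cardinal.lift_le_aleph_one.mpr hPle
      _ ≤ Cardinal.lift.{u} (Cardinal.mk OmegaOneSeg) := Cardinal.aleph_one_le_lift.mpr hOm
  refine ⟨Function.extend ι gf (fun _ => fun _ => (0:ℝ)), ?_, ?_, ?_⟩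
  · intro γ
    rw [Function.extend_def]
    split_ifs with h
    · exact hgc _
    · exact continuous_const
  · intro γ
    rw [Function.extend_def]
    split_ifs with h
    · exact hgm _
    · exact monotone_const
  · intro x y hxy
    obtain ⟨p, hxp, hyp⟩ := key x y hxy
    refine ⟨ι p, ?_, ?_⟩
    · rw [ι.injective.extend_apply]
      exact hg0 p x (hpU p hxp)
    · rw [ι.injective.extend_apply]
      exact hg1 p y (hpV p hyp)

/-! ### The construction of the inverse system -/

section Construct

variable {X : Type u} [LinearOrder X] [TopologicalSpace X]

noncomputable def idx (α : OmegaOneSeg) : ℕ → Option {γ : OmegaOneSeg // γ < α} :=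
  (exists_surjective_nat (Option {γ : OmegaOneSeg // γ < α})).choose

lemma idx_surj (α : OmegaOneSeg) : Function.Surjective (idx α) :=
  (exists_surjective_nat (Option {γ : OmegaOneSeg // γ < α})).choose_spec

variable (F : OmegaOneSeg → X → ℝ)

noncomputable def qv (α : OmegaOneSeg) (x : X) : ℕ → ULift.{u} ℝ :=
  fun n => (idx α n).elim ⟨0⟩ (fun γ => ⟨F γ.1 x⟩)

@[reducible] noncomputable def Zt (α : OmegaOneSeg) : Type u := ↥(Set.range (qv F α))

noncomputable def qm (α : OmegaOneSeg) (x : X) : Zt F α := ⟨qv F α x, mem_range_self x⟩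

lemma qm_surj (α : OmegaOneSeg) : Function.Surjective (qm F α) :=
  fun z => ⟨z.2.choose, Subtype.ext z.2.choose_spec⟩

noncomputable def qb (α β : OmegaOneSeg) (_ : α ≤ β) (z : Zt F β) : Zt F α :=
  ⟨qv F α (surjInv (qm_surj F β) z), mem_range_self _⟩

lemma qv_eq_iff {α : OmegaOneSeg} {x y : X} :
    qv F α x = qv F α y ↔ ∀ γ : OmegaOneSeg, γ < α → F γ x = F γ y := by
  constructor
  · intro h γ hγ
    obtain ⟨n, hn⟩ := idx_surj α (some ⟨γ, hγ⟩)
    have h1 := congrFun h n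
    simp only [qv, hn, Option.elim] at h1
    exact congrArg ULift.down h1
  · intro h
    funext n
    rcases hidx : idx α n with _ | γ
    · simp [qv, hidx]
    · simp only [qv, hidx, Option.elim]
      exact congrArg ULift.up (h γ.1 γ.2)

lemma qv_le_iff {α : OmegaOneSeg} {x y : X} :
    qv F α x ≤ qv F α y ↔ ∀ γ : OmegaOneSeg, γ < α → F γ x ≤ F γ y := by
  constructor
  · intro h γ hγ
    obtain ⟨n, hn⟩ := idx_surj α (some ⟨γ, hγ⟩)
    have h1 := h n
    simp only [qv, hn, Option.elim] at h1
    exact h1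
  · intro h n
    rcases hidx : idx α n with _ | γ
    · simp [qv, hidx]
    · simp only [qv, hidx, Option.elim]
      exact h γ.1 γ.2

lemma qv_mono (hFm : ∀ γ, Monotone (F γ)) (α : OmegaOneSeg) {x y : X} (h : x ≤ y) :
    qv F α x ≤ qv F α y :=
  (qv_le_iff F).mpr fun γ _ => hFm γ h

lemma qv_cont (hFc : ∀ γ, Continuous (F γ)) (α : OmegaOneSeg) : Continuous (qv F α) := by
  apply continuous_pi
  intro n
  rcases hidx : idx α n with _ | γ
  · simp only [qv, hidx, Option.elim]
    exact continuous_const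
  · simp only [qv, hidx, Option.elim]
    exact continuous_uliftUp.comp (hFc γ.1)

lemma qm_cont (hFc : ∀ γ, Continuous (F γ)) (α : OmegaOneSeg) : Continuous (qm F α) :=
  (qv_cont F hFc α).subtype_mk _

lemma qv_surjInv (β : OmegaOneSeg) (z : Zt F β) :
    qv F β (surjInv (qm_surj F β) z) = z.1 :=
  congrArg Subtype.val (surjInv_eq (qm_surj F β) z)

lemma qb_qm {α β : OmegaOneSeg} (h : α ≤ β) (x : X) :
    qb F α β h (qm F β x) = qm F α x := by
  apply Subtype.ext
  show qv F α (surjInv (qm_surj F β) (qm F β x)) = qv F α x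
  have h1 : qv F β (surjInv (qm_surj F β) (qm F β x)) = qv F β x :=
    qv_surjInv F β (qm F β x)
  exact (qv_eq_iff F).mpr fun γ hγ => (qv_eq_iff F).mp h1 γ (lt_of_lt_of_le hγ h)

lemma qb_comp {α β γ : OmegaOneSeg} (hab : α ≤ β) (hbc : β ≤ γ) (z : Zt F γ) :
    qb F α β hab (qb F β γ hbc z) = qb F α γ (hab.trans hbc) z := by
  obtain ⟨x, rfl⟩ := qm_surj F γ z
  rw [qb_qm, qb_qm, qb_qm]

noncomputable def Zlo (hFm : ∀ γ, Monotone (F γ)) (α : OmegaOneSeg) : LinearOrder (Zt F α) :=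
  { (inferInstance : PartialOrder (Zt F α)) with
    le_total := by
      rintro ⟨z, hz⟩ ⟨w, hw⟩
      obtain ⟨x, rfl⟩ := hz
      obtain ⟨y, rfl⟩ := hw
      rcases le_total x y with h | h
      · exact Or.inl (Subtype.mk_le_mk.mpr (qv_mono F hFm α h))
      · exact Or.inr (Subtype.mk_le_mk.mpr (qv_mono F hFm α h))
    toDecidableLE := Classical.decRel _ }

lemma Zt_compact [CompactSpace X] (hFc : ∀ γ, Continuous (F γ)) (α : OmegaOneSeg) :
    CompactSpace (Zt F α) :=
  isCompact_iff_compactSpace.mp (isCompact_range (qv_cont F hFc α))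

noncomputable instance : SecondCountableTopology (ULift.{u} ℝ) :=
  (Homeomorph.ulift (X := ℝ)).isEmbedding.secondCountableTopology

lemma qm_mono (hFm : ∀ γ, Monotone (F γ)) (α : OmegaOneSeg) :
    letI := Zlo F hFm α
    Monotone (qm F α) := by
  letI := Zlo F hFm α
  intro x y h
  exact Subtype.coe_le_coe.mp (qv_mono F hFm α h)

lemma qb_mono (hFm : ∀ γ, Monotone (F γ)) {α β : OmegaOneSeg} (h : α ≤ β) :
    letI := Zlo F hFm α
    letI := Zlo F hFm β
    Monotone (qb F α β h) := by
  letI := Zlo F hFm α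
  letI := Zlo F hFm β
  intro z w hzw
  have h1 : qv F β (surjInv (qm_surj F β) z) ≤ qv F β (surjInv (qm_surj F β) w) := by
    rw [qv_surjInv, qv_surjInv]
    exact hzw
  have h2 := (qv_le_iff F).mp h1
  exact Subtype.coe_le_coe.mp ((qv_le_iff F).mpr fun γ hγ => h2 γ (lt_of_lt_of_le hγ h))

lemma qb_cont [CompactSpace X] (hFc : ∀ γ, Continuous (F γ)) {α β : OmegaOneSeg} (h : α ≤ β) :
    Continuous (qb F α β h) := by
  have hq : Topology.IsQuotientMap (qm F β) :=
    ((qm_cont F hFc β).isClosedMap).isQuotientMap (qm_cont F hFc β) (qm_surj F β)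
  rw [hq.continuous_iff]
  have heq : qb F α β h ∘ qm F β = qm F α := funext fun x => qb_qm F h x
  rw [heq]
  exact qm_cont F hFc α

lemma Zt_ordertop [CompactSpace X] (hFc : ∀ γ, Continuous (F γ))
    (hFm : ∀ γ, Monotone (F γ)) (α : OmegaOneSeg) :
    letI := Zlo F hFm α
    OrderTopology (Zt F α) := by
  letI lo := Zlo F hFm α
  haveI : CompactSpace (Zt F α) := Zt_compact F hFc α
  have hlt : ∀ w a : Zt F α, w < a ↔ ∃ n, (w.1 n).down < (a.1 n).down := by
    intro w a
    refine Iff.trans (@not_le _ lo a w).symm ?_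
    constructor
    · intro h
      by_contra hc
      push_neg at hc
      have hle : (a : ℕ → ULift.{u} ℝ) ≤ (w : ℕ → ULift.{u} ℝ) := by
        intro n
        exact hc n
      exact h hle
    · rintro ⟨n, hn⟩ h
      have hle : (a : ℕ → ULift.{u} ℝ) ≤ (w : ℕ → ULift.{u} ℝ) := h
      exact absurd (hle n) (not_le.mpr hn)
  have hray : ∀ s ∈ {s : Set (Zt F α) | ∃ a, s = Ioi a ∨ s = Iio a}, IsOpen s := by
    rintro s ⟨a, rfl | rfl⟩
    · have : Ioi a = ⋃ n, (fun w : Zt F α => (w.1 n).down) ⁻¹' (Ioi ((a.1 n).down)) := by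
        ext w
        simp only [mem_Ioi, mem_iUnion, mem_preimage]
        exact hlt a w
      rw [this]
      refine isOpen_iUnion fun n => ?_
      have hcn : Continuous (fun w : Zt F α => ((w : ℕ → ULift.{u} ℝ) n).down) :=
        continuous_uliftDown.comp ((continuous_apply n).comp continuous_subtype_val)
      exact isOpen_Ioi.preimage hcn
    · have : Iio a = ⋃ n, (fun w : Zt F α => (w.1 n).down) ⁻¹' (Iio ((a.1 n).down)) := by
        ext w
        simp only [mem_Iio, mem_iUnion, mem_preimage]
        exact hlt w a
      rw [this]
      refine isOpen_iUnion fun n => ?_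
      have hcn : Continuous (fun w : Zt F α => ((w : ℕ → ULift.{u} ℝ) n).down) :=
        continuous_uliftDown.comp ((continuous_apply n).comp continuous_subtype_val)
      exact isOpen_Iio.preimage hcn
  constructor
  set t1 : TopologicalSpace (Zt F α) := inferInstance with ht1
  set t2 : TopologicalSpace (Zt F α) :=
    TopologicalSpace.generateFrom {s : Set (Zt F α) | ∃ a, s = Ioi a ∨ s = Iio a} with ht2
  have h12 : t1 ≤ t2 := le_generateFrom hray
  haveI hOT2 : @OrderTopology (Zt F α) t2 _ := @OrderTopology.mk _ t2 _ ht2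
  haveI hT5 := @OrderTopology.t5Space (Zt F α) _ t2 hOT2
  haveI hT4 := @T5Space.toT4Space (Zt F α) t2 hT5
  haveI hT3 := @T4Space.t3Space (Zt F α) t2 hT4
  haveI hT25 := @T3Space.t25Space (Zt F α) t2 hT3
  haveI hT2 : @T2Space (Zt F α) t2 := @T25Space.t2Space (Zt F α) t2 hT25
  have hcid : @Continuous _ _ t1 t2 id := continuous_id_iff_le.mpr h12
  have h21 : t2 ≤ t1 := by
    rw [TopologicalSpace.le_def]
    intro s hs
    have hs1 : @IsOpen _ t1 s := hs
    have hclosed : @IsClosed _ t1 sᶜ := (@isClosed_compl_iff _ t1 s).mpr hs1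
    have hcpt : @IsCompact _ t1 sᶜ := @IsClosed.isCompact _ t1 _ _ hclosed
    have hcpt2 : @IsCompact _ t2 (id '' sᶜ) := @IsCompact.image _ _ t1 t2 _ _ hcpt hcid
    rw [Set.image_id] at hcpt2
    have hcl2 : @IsClosed _ t2 sᶜ := @IsCompact.isClosed _ t2 hT2 _ hcpt2
    exact (@isClosed_compl_iff _ t2 s).mp hcl2
  exact le_antisymm h12 h21

end Construct

end InvLimAux

/-- every compact linearly ordered topological space of weight `ℵ₁` is
the limit of a continuous inverse sequence, indexed by `ω₁`, of compact metrizable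
linearly ordered spaces with continuous order-preserving surjective bonding maps and
projections. -/
theorem compact_lots_weight_aleph_one_inverse_limit
    {X : Type u} [LinearOrder X] [TopologicalSpace X] [OrderTopology X] [CompactSpace X]
    (hw : tweight X = Cardinal.aleph 1) :
    ∃ (Z : OmegaOneSeg → Type u) (lo : ∀ α, LinearOrder (Z α))
      (ts : ∀ α, TopologicalSpace (Z α))
      (q2 : ∀ α β : OmegaOneSeg, α ≤ β → Z β → Z α)
      (q : ∀ α : OmegaOneSeg, X → Z α),
      @IsApproximatingSystem X _ _ Z lo ts q2 q := by
  classical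
  haveI hXne : Nonempty X := by
    by_contra hX
    rw [not_nonempty_iff] at hX
    have h1 : tweight X ≤ Cardinal.mk ↥{U : Set X | IsOpen U} :=
      ciInf_le' _ (⟨{U : Set X | IsOpen U}, isTopologicalBasis_opens⟩ :
        {B : Set (Set X) // IsTopologicalBasis B})
    have h2 : Cardinal.mk ↥{U : Set X | IsOpen U} ≤ Cardinal.mk (Set X) :=
      Cardinal.mk_subtype_le _
    have h3 : Cardinal.mk (Set X) = 1 := by
      rw [Cardinal.mk_set, Cardinal.mk_eq_zero X, Cardinal.power_zero]
    rw [hw] at h1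
    have h4 := h1.trans (h2.trans_eq h3)
    exact absurd h4 (not_le.mpr (lt_of_lt_of_le Cardinal.one_lt_aleph0
      (Cardinal.aleph0_le_aleph 1)))
  obtain ⟨F, hFc, hFm, hFsep⟩ := InvLimAux.exists_sep_family hw
  open InvLimAux in
  refine ⟨Zt F, fun α => Zlo F hFm α, fun α => inferInstance, qb F, qm F, ?_⟩
  haveI hcpt : ∀ α, CompactSpace (Zt F α) := fun α => Zt_compact F hFc α
  have hwone_lim : Order.IsSuccLimit ((Cardinal.aleph 1).ord) :=
    Cardinal.isSuccLimit_ord (Cardinal.aleph0_le_aleph 1)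
  unfold IsApproximatingSystem
  refine ⟨fun α => Zt_ordertop F hFc hFm α, hcpt, fun α => inferInstance,
    fun α β h => qb_cont F hFc h, fun α β h => qb_mono F hFm h, ?_, ?_, ?_,
    fun α => qm_cont F hFc α, fun α => qm_mono F hFm α, fun α => qm_surj F α,
    fun α β h => funext fun x => qb_qm F h x, ?_, ?_⟩
  · -- surjectivity of bonding maps
    intro α β h z
    obtain ⟨x, rfl⟩ := qm_surj F α z
    exact ⟨qm F β x, qb_qm F h x⟩
  · -- identity
    intro α
    funext z
    exact Subtype.ext (qv_surjInv F α z)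
  · -- composition
    intro α β γ hab hbc
    funext z
    exact qb_comp F hab hbc z
  · -- limit stage homeomorphism
    intro δ hδ
    set φ : Zt F δ → {g : ∀ ξ : {ξ : OmegaOneSeg // ξ < δ}, Zt F ξ.1 //
        ∀ (ξ η : {ξ : OmegaOneSeg // ξ < δ}) (hle : ξ.1 ≤ η.1),
          qb F ξ.1 η.1 hle (g η) = g ξ} :=
      fun z => ⟨fun ξ => qb F ξ.1 δ ξ.2.le z,
        fun ξ η hle => qb_comp F hle η.2.le z⟩ with hφ
    have hinj : Function.Injective φ := by
      intro z w h
      obtain ⟨x, rfl⟩ := qm_surj F δ z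
      obtain ⟨y, rfl⟩ := qm_surj F δ w
      apply Subtype.ext
      refine (qv_eq_iff F).mpr fun γ hγ => ?_
      have hγδ : (γ : Ordinal) < (δ : Ordinal) := hγ
      have hsucc : (γ : Ordinal) + 1 < (δ : Ordinal) := by
        rw [Ordinal.add_one_eq_succ]
        exact hδ.succ_lt hγδ
      set ξ : OmegaOneSeg := ⟨(γ : Ordinal) + 1, lt_trans hsucc δ.2⟩ with hξ
      have hγξ : γ < ξ := by
        show (γ : Ordinal) < (γ : Ordinal) + 1
        exact lt_add_one _
      have hξδ : ξ < δ := hsucc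
      have h1 : qb F ξ δ hξδ.le (qm F δ x) = qb F ξ δ hξδ.le (qm F δ y) :=
        congrArg (fun g => g.1 ⟨ξ, hξδ⟩) h
      rw [qb_qm, qb_qm] at h1
      have h2 : qv F ξ x = qv F ξ y := congrArg Subtype.val h1
      exact (qv_eq_iff F).mp h2 γ hγξ
    have hsur : Function.Surjective φ := by
      intro g
      haveI hneI : Nonempty {ξ : OmegaOneSeg // ξ < δ} :=
        ⟨⟨⟨0, lt_trans hδ.pos δ.2⟩, hδ.pos⟩⟩
      have hKmono : ∀ ξ η : {ξ : OmegaOneSeg // ξ < δ}, ξ.1 ≤ η.1 →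
          (qm F η.1 ⁻¹' {g.1 η}) ⊆ (qm F ξ.1 ⁻¹' {g.1 ξ}) := by
        intro ξ η h t ht
        simp only [mem_preimage, mem_singleton_iff] at ht ⊢
        rw [← g.2 ξ η h, ← ht, qb_qm]
      obtain ⟨x, hx⟩ := IsCompact.nonempty_iInter_of_directed_nonempty_isCompact_isClosed
        (fun ξ : {ξ : OmegaOneSeg // ξ < δ} => qm F ξ.1 ⁻¹' {g.1 ξ})
        (fun ξ η => by
          rcases le_total ξ.1 η.1 with h | h
          · exact ⟨η, hKmono ξ η h, subset_rfl⟩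
          · exact ⟨ξ, subset_rfl, hKmono η ξ h⟩)
        (fun ξ => by
          obtain ⟨t, ht⟩ := qm_surj F ξ.1 (g.1 ξ)
          exact ⟨t, by simp [ht]⟩)
        (fun ξ => (IsClosed.preimage (qm_cont F hFc ξ.1) isClosed_singleton).isCompact)
        (fun ξ => IsClosed.preimage (qm_cont F hFc ξ.1) isClosed_singleton)
      refine ⟨qm F δ x, Subtype.ext (funext fun ξ => ?_)⟩
      have hxξ : qm F ξ.1 x = g.1 ξ := by
        have := Set.mem_iInter.mp hx ξ
        simpa using this
      show qb F ξ.1 δ ξ.2.le (qm F δ x) = g.1 ξ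
      rw [qb_qm]
      exact hxξ
    have hcont : Continuous φ := by
      apply Continuous.subtype_mk
      apply continuous_pi
      intro ξ
      exact qb_cont F hFc ξ.2.le
    exact ⟨(Continuous.homeoOfEquivCompactToT2
      (f := Equiv.ofBijective φ ⟨hinj, hsur⟩) hcont), fun x ξ => rfl⟩
  · -- whole space homeomorphism
    set φ : X → {g : ∀ α : OmegaOneSeg, Zt F α //
        ∀ (α β : OmegaOneSeg) (h : α ≤ β), qb F α β h (g β) = g α} :=
      fun x => ⟨fun α => qm F α x, fun α β h => qb_qm F h x⟩ with hφ
    have hinj : Function.Injective φ := by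
      intro x y h
      by_contra hne
      have hkey : ∀ x' y' : X, x' < y' → (∀ α, qm F α x' = qm F α y') → False := by
        intro x' y' hlt hall
        obtain ⟨γ, h0, h1⟩ := hFsep x' y' hlt
        have hsucc : (γ : Ordinal) + 1 < (Cardinal.aleph 1).ord := by
          rw [Ordinal.add_one_eq_succ]
          exact hwone_lim.succ_lt γ.2
        set α : OmegaOneSeg := ⟨(γ : Ordinal) + 1, hsucc⟩ with hα
        have hγα : γ < α := by
          show (γ : Ordinal) < (γ : Ordinal) + 1
          exact lt_add_one _
        have h2 : qv F α x' = qv F α y' := congrArg Subtype.val (hall α)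
        have h3 : F γ x' = F γ y' := (qv_eq_iff F).mp h2 γ hγα
        rw [h0, h1] at h3
        exact zero_ne_one h3
      have hall : ∀ α, qm F α x = qm F α y := fun α => congrArg (fun g => g.1 α) h
      rcases lt_or_gt_of_ne hne with hlt | hlt
      · exact hkey x y hlt hall
      · exact hkey y x hlt (fun α => (hall α).symm)
    have hsur : Function.Surjective φ := by
      intro g
      haveI hneI : Nonempty OmegaOneSeg := ⟨⟨0, hwone_lim.pos⟩⟩
      have hKmono : ∀ α β : OmegaOneSeg, α ≤ β →
          (qm F β ⁻¹' {g.1 β}) ⊆ (qm F α ⁻¹' {g.1 α}) := by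
        intro α β h t ht
        simp only [mem_preimage, mem_singleton_iff] at ht ⊢
        rw [← g.2 α β h, ← ht, qb_qm]
      obtain ⟨x, hx⟩ := IsCompact.nonempty_iInter_of_directed_nonempty_isCompact_isClosed
        (fun α : OmegaOneSeg => qm F α ⁻¹' {g.1 α})
        (fun α β => by
          rcases le_total α β with h | h
          · exact ⟨β, hKmono α β h, subset_rfl⟩
          · exact ⟨α, subset_rfl, hKmono β α h⟩)
        (fun α => by
          obtain ⟨t, ht⟩ := qm_surj F α (g.1 α)
          exact ⟨t, by simp [ht]⟩)
        (fun α => (IsClosed.preimage (qm_cont F hFc α) isClosed_singleton).isCompact)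
        (fun α => IsClosed.preimage (qm_cont F hFc α) isClosed_singleton)
      refine ⟨x, Subtype.ext (funext fun α => ?_)⟩
      have := Set.mem_iInter.mp hx α
      simpa using this
    have hcont : Continuous φ := by
      apply Continuous.subtype_mk
      apply continuous_pi
      intro α
      exact qm_cont F hFc α
    exact ⟨(Continuous.homeoOfEquivCompactToT2
      (f := Equiv.ofBijective φ ⟨hinj, hsur⟩) hcont), fun x α => rfl⟩
end
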